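/- arXiv:2001.11289 — 9 statements merged into one kernel-verified Lean document; each statement's English description precedes it below -/
import Mathlib

section
/- Let K = [−1, 1] ⊆ ℝ and f(x) = x^(2k) for an integer k ≥ 1 (so f_min = 0). Then there exist a constant c > 0 and r₀ ∈ ℕ such that f_pfm^(r) ≥ c/r² for all r ≥ r₀. -/
open MeasureTheory Polynomial Set

noncomputable section

/-- `Σ[t]_r`: univariate polynomials that are finite sums of squares of
polynomials of degree at most `r`. -/
def IsSOSUpTo (s : Polynomial ℝ) (r : ℕ) : Prop :=
  ∃ (m : ℕ) (p : Fin m → Polynomial ℝ), (∀ i, (p i).natDegree ≤ r) ∧ s = ∑ i, (p i) ^ 2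

/-- The push-forward bound `f_pfm^(r)` for a univariate polynomial `f` on
`K = [-1,1]`, with respect to the Lebesgue measure restricted to `[-1,1]`. -/
def pfmBound1 (f : Polynomial ℝ) (r : ℕ) : ℝ :=
  sInf { v : ℝ | ∃ s : Polynomial ℝ, IsSOSUpTo s r ∧
    (∫ x in Icc (-1 : ℝ) 1, s.eval (f.eval x)) = 1 ∧
    v = ∫ x in Icc (-1 : ℝ) 1, f.eval x * s.eval (f.eval x) }

namespace PFM

def al (k : ℕ) : ℝ := (2 * (k:ℝ))⁻¹

lemma al_pos {k : ℕ} (hk : 1 ≤ k) : 0 < al k := by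
  have : (1:ℝ) ≤ (k:ℝ) := by exact_mod_cast hk
  have h2 : (0:ℝ) < 2 * k := by linarith
  exact inv_pos.mpr h2

lemma al_le_half {k : ℕ} (hk : 1 ≤ k) : al k ≤ 1/2 := by
  have : (1:ℝ) ≤ (k:ℝ) := by exact_mod_cast hk
  rw [al]
  rw [inv_le_comm₀ (by linarith) (by norm_num)]
  linarith

lemma two_k_al {k : ℕ} (hk : 1 ≤ k) : 2 * (k:ℝ) * al k = 1 := by
  have : (1:ℝ) ≤ (k:ℝ) := by exact_mod_cast hk
  rw [al, mul_inv_cancel₀]; linarith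

lemma al_inv {k : ℕ} : (al k)⁻¹ = 2 * (k:ℝ) := by rw [al, inv_inv]

def poch (x : ℝ) (n : ℕ) : ℝ := ∏ l ∈ Finset.range n, (x + l)

@[simp] lemma poch_zero (x : ℝ) : poch x 0 = 1 := by simp [poch]

lemma poch_succ (x : ℝ) (n : ℕ) : poch x (n+1) = poch x n * (x + n) := by
  rw [poch, Finset.prod_range_succ]; rfl

lemma poch_pos {x : ℝ} (hx : 0 < x) (n : ℕ) : 0 < poch x n := by
  induction n with
  | zero => simp
  | succ n ih => rw [poch_succ]; have : (0:ℝ) ≤ n := Nat.cast_nonneg n; nlinarith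

lemma poch_add (x : ℝ) (m n : ℕ) : poch x (m+n) = poch x m * poch (x+m) n := by
  rw [poch, poch, poch, Finset.prod_range_add]
  congr 1
  refine Finset.prod_congr rfl fun i _ => ?_
  push_cast; ring

def cf (k j i : ℕ) : ℝ :=
  (-1:ℝ)^i * (j.choose i : ℕ) * ∏ l ∈ Finset.range i, (((j:ℝ) + al k + l)/(al k + l))

@[simp] lemma cf_zero (k j : ℕ) : cf k j 0 = 1 := by simp [cf]

def Rp (k j : ℕ) : Polynomial ℝ := ∑ i ∈ Finset.range (j+1), C (cf k j i) * X^i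

def L (k : ℕ) (w : Polynomial ℝ) : ℝ := ∫ x in Icc (-1:ℝ) 1, w.eval (x^(2*k))

lemma contEval (k : ℕ) (w : Polynomial ℝ) : Continuous fun x : ℝ => w.eval (x^(2*k)) :=
  w.continuous.comp (continuous_pow _)

lemma integrableEval (k : ℕ) (w : Polynomial ℝ) :
    IntegrableOn (fun x : ℝ => w.eval (x^(2*k))) (Icc (-1:ℝ) 1) :=
  (contEval k w).integrableOn_Icc

lemma L_add (k : ℕ) (u v : Polynomial ℝ) : L k (u + v) = L k u + L k v := by
  simp only [L, eval_add]
  exact integral_add (integrableEval k u) (integrableEval k v)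

lemma L_Cmul (k : ℕ) (a : ℝ) (w : Polynomial ℝ) : L k (C a * w) = a * L k w := by
  simp only [L, eval_mul, eval_C]
  exact MeasureTheory.integral_const_mul a _

lemma L_sum {ι : Type*} (k : ℕ) (s : Finset ι) (f : ι → Polynomial ℝ) :
    L k (∑ i ∈ s, f i) = ∑ i ∈ s, L k (f i) := by
  simp only [L, eval_finset_sum]
  exact integral_finset_sum s (fun i _ => integrableEval k (f i))

lemma L_Xpow (k : ℕ) (hk : 1 ≤ k) (n : ℕ) : L k (X ^ n) = (k:ℝ)⁻¹ * ((n:ℝ) + al k)⁻¹ := by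
  have hne : (2*(k:ℝ)*n + 1) ≠ 0 := by positivity
  have h1 : L k (X ^ n) = 2 / (2*(k:ℝ)*(n:ℝ) + 1) := by
    simp only [L, eval_pow, eval_X, ← pow_mul]
    rw [MeasureTheory.integral_Icc_eq_integral_Ioc,
        ← intervalIntegral.integral_of_le (by norm_num : (-1:ℝ) ≤ 1)]
    rw [integral_pow]
    have hev : Even (2*k*n) := ⟨k*n, by ring⟩
    have : ((-1:ℝ)) ^ (2*k*n + 1) = -1 := by
      rw [pow_succ, hev.neg_one_pow, one_mul]
    rw [this, one_pow]
    push_cast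
    ring
  rw [h1]
  have halk : 2*(k:ℝ) * al k = 1 := two_k_al hk
  have hk0 : (k:ℝ) ≠ 0 := by
    have : (1:ℝ) ≤ (k:ℝ) := by exact_mod_cast hk
    linarith
  have hna : ((n:ℝ) + al k) ≠ 0 := by
    have := al_pos hk
    have : (0:ℝ) ≤ (n:ℝ) := Nat.cast_nonneg n
    positivity
  field_simp
  nlinarith [two_k_al hk]






lemma prod_add_one (n : ℕ) : ∏ i ∈ Finset.range n, ((i:ℝ) + 1) = n.factorial := by
  induction n with
  | zero => simp
  | succ n ih => rw [Finset.prod_range_succ, ih]; push_cast [Nat.factorial_succ]; ring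

lemma prod_descend (n : ℕ) : ∏ i ∈ Finset.range n, ((n:ℝ) - i) = n.factorial := by
  rw [← Finset.prod_range_reflect (fun i => (n:ℝ) - i) n, ← prod_add_one n]
  refine Finset.prod_congr rfl fun j hj => ?_
  have hj' : j < n := Finset.mem_range.mp hj
  have h1 : (n - 1 - j : ℕ) = n - (j+1) := by omega
  rw [h1, Nat.cast_sub (by omega : j + 1 ≤ n)]
  push_cast; ring

lemma erase_decomp (j l : ℕ) (hl : l ≤ j) :
    (Finset.range (j+1)).erase l = Finset.range l ∪ Finset.Ico (l+1) (j+1) := by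
  ext i
  simp only [Finset.mem_erase, Finset.mem_range, Finset.mem_union, Finset.mem_Ico]
  omega

lemma El (j l : ℕ) (hl : l ≤ j) :
    ∏ i ∈ (Finset.range (j+1)).erase l, ((i:ℝ) - l) =
      (-1:ℝ)^l * l.factorial * (j-l).factorial := by
  rw [erase_decomp j l hl, Finset.prod_union (by
    rw [Finset.disjoint_left]; intro i h1 h2
    simp only [Finset.mem_range] at h1
    simp only [Finset.mem_Ico] at h2
    omega)]
  have h1 : ∏ i ∈ Finset.range l, ((i:ℝ) - l) = (-1:ℝ)^l * l.factorial := by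
    have he : ∀ i ∈ Finset.range l, ((i:ℝ) - l) = (-1) * ((l:ℝ) - i) := by intros; ring
    rw [Finset.prod_congr rfl he, Finset.prod_mul_distrib, Finset.prod_const,
      Finset.card_range, prod_descend]
  have h2 : ∏ i ∈ Finset.Ico (l+1) (j+1), ((i:ℝ) - l) = (j-l).factorial := by
    rw [Finset.prod_Ico_eq_prod_range]
    have he : ∀ i ∈ Finset.range (j+1-(l+1)), ((l+1+i : ℕ):ℝ) - l = (i:ℝ) + 1 := by
      intro i _; push_cast; ring
    rw [Finset.prod_congr rfl he, show j+1-(l+1) = j - l from by omega]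
    exact prod_add_one _
  rw [h1, h2]

-- interpolation polynomials
def nodeProd (k j i : ℕ) : Polynomial ℝ :=
  ∏ l ∈ (Finset.range (j+1)).erase i, (X + C (al k + l))

def Pp (k j : ℕ) : Polynomial ℝ :=
  ∑ i ∈ Finset.range (j+1), C (cf k j i) * nodeProd k j i

def Qq (k j : ℕ) : Polynomial ℝ :=
  C ((-1:ℝ)^j * (j.factorial : ℝ) / poch (al k) j) * ∏ l ∈ Finset.range j, (X - C (l:ℝ))

lemma degree_nodeProd (k j i : ℕ) (hi : i ∈ Finset.range (j+1)) :
    (nodeProd k j i).degree = j := by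
  rw [nodeProd, Polynomial.degree_prod]
  have : ∀ l ∈ (Finset.range (j+1)).erase i, (X + C (al k + (l:ℝ))).degree = 1 := by
    intro l _; exact Polynomial.degree_X_add_C _
  rw [Finset.sum_congr rfl this, Finset.sum_const, Finset.card_erase_of_mem hi,
    Finset.card_range]
  simp

lemma degree_Pp (k j : ℕ) : (Pp k j).degree < (j+1 : ℕ) := by
  apply lt_of_le_of_lt (Polynomial.degree_sum_le _ _)
  rw [Finset.sup_lt_iff (by exact_mod_cast WithBot.bot_lt_coe (j+1))]
  intro i hi
  apply lt_of_le_of_lt (Polynomial.degree_mul_le _ _)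
  have h2 := degree_nodeProd k j i hi
  calc (C (cf k j i)).degree + (nodeProd k j i).degree
      ≤ 0 + (j : WithBot ℕ) := by
        apply add_le_add (Polynomial.degree_C_le) (le_of_eq h2)
    _ < (j+1 : ℕ) := by
        rw [zero_add]
        exact_mod_cast WithBot.coe_lt_coe.mpr (Nat.lt_succ_self j)

lemma degree_Qq (k j : ℕ) : (Qq k j).degree < (j+1 : ℕ) := by
  apply lt_of_le_of_lt (Polynomial.degree_mul_le _ _)
  have h2 : (∏ l ∈ Finset.range j, (X - C (l:ℝ))).degree = (j : WithBot ℕ) := by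
    rw [Polynomial.degree_prod]
    have : ∀ l ∈ Finset.range j, (X - C ((l:ℕ):ℝ)).degree = 1 := by
      intro l _; exact Polynomial.degree_X_sub_C _
    rw [Finset.sum_congr rfl this, Finset.sum_const, Finset.card_range]
    simp
  calc (C ((-1:ℝ)^j * (j.factorial : ℝ) / poch (al k) j)).degree
        + (∏ l ∈ Finset.range j, (X - C (l:ℝ))).degree
      ≤ 0 + (j : WithBot ℕ) := add_le_add (Polynomial.degree_C_le) (le_of_eq h2)
    _ < (j+1 : ℕ) := by
        rw [zero_add]
        exact_mod_cast WithBot.coe_lt_coe.mpr (Nat.lt_succ_self j)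

lemma eval_Pp_node {k : ℕ} (j l : ℕ) (hl : l ∈ Finset.range (j+1)) :
    (Pp k j).eval (-(al k + l)) =
      (j.choose l : ℕ) * (∏ i ∈ Finset.range l, ((al k + (j:ℝ) + i)/(al k + i)))
        * l.factorial * (j-l).factorial := by
  have hsgn : ((-1:ℝ)^l) * ((-1:ℝ)^l) = 1 := by
    rw [← pow_add]; exact Even.neg_one_pow ⟨l, rfl⟩
  rw [Pp, Polynomial.eval_finset_sum]
  rw [Finset.sum_eq_single l]
  · have hnp : (nodeProd k j l).eval (-(al k + l)) =
        (-1:ℝ)^l * l.factorial * (j-l).factorial := by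
      rw [nodeProd, Polynomial.eval_prod, ← El j l (by simpa [Nat.lt_succ_iff] using hl)]
      refine Finset.prod_congr rfl fun i _ => ?_
      simp only [Polynomial.eval_add, Polynomial.eval_X, Polynomial.eval_C]
      ring
    rw [Polynomial.eval_mul, Polynomial.eval_C, hnp, cf]
    have hpr : ∏ i ∈ Finset.range l, (((j:ℝ) + al k + i)/(al k + i)) =
        ∏ i ∈ Finset.range l, ((al k + (j:ℝ) + i)/(al k + i)) := by
      refine Finset.prod_congr rfl fun i _ => by ring_nf
    rw [hpr]
    calc (-1:ℝ)^l * (j.choose l : ℕ) * (∏ i ∈ Finset.range l, ((al k + (j:ℝ) + i)/(al k + i)))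
          * ((-1:ℝ)^l * l.factorial * (j-l).factorial)
        = ((-1:ℝ)^l * (-1:ℝ)^l) * ((j.choose l : ℕ) *
            (∏ i ∈ Finset.range l, ((al k + (j:ℝ) + i)/(al k + i)))
            * l.factorial * (j-l).factorial) := by ring
      _ = _ := by rw [hsgn]; ring
  · intro i hi hne
    rw [Polynomial.eval_mul, nodeProd, Polynomial.eval_prod]
    have : ∃ b ∈ (Finset.range (j+1)).erase i,
        Polynomial.eval (-(al k + l)) (X + C (al k + (b:ℝ))) = 0 := by
      refine ⟨l, Finset.mem_erase.mpr ⟨fun h => hne h.symm, hl⟩, ?_⟩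
      simp only [Polynomial.eval_add, Polynomial.eval_X, Polynomial.eval_C]; ring
    obtain ⟨b, hb, hb0⟩ := this
    rw [Finset.prod_eq_zero hb hb0, mul_zero]
  · intro h; exact absurd hl h

lemma eval_Qq_node {k : ℕ} (hk : 1 ≤ k) (j l : ℕ) (hl : l ∈ Finset.range (j+1)) :
    (Qq k j).eval (-(al k + l)) =
      (j.factorial : ℝ) * poch (al k + l) j / poch (al k) j := by
  have hsgn : ((-1:ℝ)^j) * ((-1:ℝ)^j) = 1 := by
    rw [← pow_add]; exact Even.neg_one_pow ⟨j, rfl⟩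
  rw [Qq, Polynomial.eval_mul, Polynomial.eval_C, Polynomial.eval_prod]
  have he : ∀ i ∈ Finset.range j, Polynomial.eval (-(al k + l)) (X - C ((i:ℕ):ℝ))
      = (-1) * (al k + (l:ℝ) + i) := by
    intro i _
    simp only [Polynomial.eval_sub, Polynomial.eval_X, Polynomial.eval_C]; ring
  rw [Finset.prod_congr rfl he, Finset.prod_mul_distrib, Finset.prod_const,
    Finset.card_range]
  have hp : ∏ i ∈ Finset.range j, (al k + (l:ℝ) + i) = poch (al k + l) j := by
    rw [poch]
  rw [hp]
  calc (-1:ℝ)^j * (j.factorial:ℝ) / poch (al k) j * ((-1:ℝ)^j * poch (al k + (l:ℝ)) j)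
      = ((-1:ℝ)^j * (-1:ℝ)^j) * ((j.factorial:ℝ) * poch (al k + (l:ℝ)) j / poch (al k) j) := by
        ring
    _ = _ := by rw [hsgn]; ring

lemma node_eq {k : ℕ} (hk : 1 ≤ k) (j l : ℕ) (hl : l ∈ Finset.range (j+1)) :
    (Pp k j).eval (-(al k + l)) = (Qq k j).eval (-(al k + l)) := by
  rw [eval_Pp_node j l hl, eval_Qq_node hk j l hl]
  have hlj : l ≤ j := by simpa [Nat.lt_succ_iff] using hl
  have hα := al_pos hk
  have hpl : (0:ℝ) < poch (al k) l := poch_pos hα l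
  have hpj : (0:ℝ) < poch (al k) j := poch_pos hα j
  have hprod : ∏ i ∈ Finset.range l, ((al k + (j:ℝ) + i)/(al k + i)) =
      poch (al k + j) l / poch (al k) l := by
    rw [Finset.prod_div_distrib, poch, poch]
  have hfact : (j.choose l : ℝ) * l.factorial * (j-l).factorial = j.factorial := by
    exact_mod_cast congrArg (Nat.cast : ℕ → ℝ)
      (Nat.choose_mul_factorial_mul_factorial hlj)
  have hsym : poch (al k) l * poch (al k + l) j = poch (al k) j * poch (al k + j) l := by
    rw [← poch_add (al k) l j, ← poch_add (al k) j l, add_comm l j]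
  rw [hprod]
  field_simp
  linear_combination (poch (al k + (j:ℝ)) l * poch (al k) j) * hfact
    - (j.factorial : ℝ) * hsym


def hh (k j : ℕ) : ℝ :=
  (j.factorial:ℝ)^2 / ((k:ℝ) * (poch (al k) j)^2 * (2*(j:ℝ) + al k))


lemma Pp_eq_Qq {k : ℕ} (hk : 1 ≤ k) (j : ℕ) : Pp k j = Qq k j := by
  refine Polynomial.eq_of_degrees_lt_of_eval_index_eq (v := fun l : ℕ => -(al k + l))
    (Finset.range (j+1)) ?_ ?_ ?_ ?_
  · intro a ha b hb hab
    simp only at hab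
    have : (a:ℝ) = b := by linarith
    exact_mod_cast this
  · rw [Finset.card_range]; exact degree_Pp k j
  · rw [Finset.card_range]; exact degree_Qq k j
  · intro l hl; exact node_eq hk j l hl

lemma nodeProdTot_pos {k : ℕ} (hk : 1 ≤ k) (j m : ℕ) :
    (0:ℝ) < ∏ l ∈ Finset.range (j+1), ((m:ℝ) + al k + l) := by
  refine Finset.prod_pos fun l _ => ?_
  have := al_pos hk
  positivity

lemma L_Rp_Xpow {k : ℕ} (hk : 1 ≤ k) (j m : ℕ) :
    L k (Rp k j * X^m) =
      (k:ℝ)⁻¹ * ((Qq k j).eval (m:ℝ)) / ∏ l ∈ Finset.range (j+1), ((m:ℝ) + al k + l) := by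
  have hmul : Rp k j * X^m = ∑ i ∈ Finset.range (j+1), C (cf k j i) * X^(i+m) := by
    rw [Rp, Finset.sum_mul]
    refine Finset.sum_congr rfl fun i _ => by rw [pow_add, mul_assoc]
  rw [hmul, L_sum]
  have hterm : ∀ i ∈ Finset.range (j+1), L k (C (cf k j i) * X^(i+m)) =
      cf k j i * ((k:ℝ)⁻¹ * ((m:ℝ) + al k + i)⁻¹) := by
    intro i _
    rw [L_Cmul, L_Xpow k hk]
    congr 2
    push_cast; ring
  rw [Finset.sum_congr rfl hterm]
  have htot := nodeProdTot_pos hk j m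
  have hPp : (Pp k j).eval (m:ℝ) =
      ∑ i ∈ Finset.range (j+1), cf k j i *
        ∏ l ∈ (Finset.range (j+1)).erase i, ((m:ℝ) + al k + l) := by
    rw [Pp, Polynomial.eval_finset_sum]
    refine Finset.sum_congr rfl fun i _ => ?_
    rw [Polynomial.eval_mul, Polynomial.eval_C, nodeProd, Polynomial.eval_prod]
    congr 1
    refine Finset.prod_congr rfl fun l _ => ?_
    simp only [Polynomial.eval_add, Polynomial.eval_X, Polynomial.eval_C]
    ring
  rw [← Pp_eq_Qq hk, hPp, Finset.mul_sum, Finset.sum_div]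
  refine Finset.sum_congr rfl fun i hi => ?_
  have hfac : ((m:ℝ) + al k + i) * ∏ l ∈ (Finset.range (j+1)).erase i, ((m:ℝ) + al k + l)
      = ∏ l ∈ Finset.range (j+1), ((m:ℝ) + al k + l) :=
    Finset.mul_prod_erase _ (fun l : ℕ => (m:ℝ) + al k + (l:ℝ)) hi
  have hi0 : ((m:ℝ) + al k + i) ≠ 0 := by
    have := al_pos hk; positivity
  field_simp
  linear_combination (-(cf k j i)) * hfac

lemma L_Rp_Xpow_zero {k : ℕ} (hk : 1 ≤ k) {j m : ℕ} (hmj : m < j) :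
    L k (Rp k j * X^m) = 0 := by
  rw [L_Rp_Xpow hk]
  have : (Qq k j).eval (m:ℝ) = 0 := by
    rw [Qq, Polynomial.eval_mul, Polynomial.eval_prod]
    have : ∃ b ∈ Finset.range j, Polynomial.eval (m:ℝ) (X - C ((b:ℕ):ℝ)) = 0 := by
      refine ⟨m, Finset.mem_range.mpr hmj, by simp⟩
    obtain ⟨b, hb, hb0⟩ := this
    rw [Finset.prod_eq_zero hb hb0, mul_zero]
  rw [this, mul_zero, zero_div]

lemma L_Rp_Xpow_diag {k : ℕ} (hk : 1 ≤ k) (j : ℕ) :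
    L k (Rp k j * X^j) =
      (-1:ℝ)^j * (j.factorial:ℝ)^2 / ((k:ℝ) * poch (al k) j * poch (al k + j) (j+1)) := by
  rw [L_Rp_Xpow hk]
  have hQ : (Qq k j).eval (j:ℝ) = (-1:ℝ)^j * (j.factorial : ℝ) / poch (al k) j
      * (j.factorial : ℝ) := by
    rw [Qq, Polynomial.eval_mul, Polynomial.eval_C, Polynomial.eval_prod]
    congr 1
    rw [← prod_descend j]
    refine Finset.prod_congr rfl fun l _ => by simp
  have hprod : ∏ l ∈ Finset.range (j+1), ((j:ℝ) + al k + l) = poch (al k + j) (j+1) := by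
    rw [poch]
    refine Finset.prod_congr rfl fun l _ => by ring
  rw [hQ, hprod]
  have h1 : (0:ℝ) < poch (al k) j := poch_pos (al_pos hk) j
  have h2 : (0:ℝ) < poch (al k + j) (j+1) := by
    refine poch_pos ?_ _
    have := al_pos hk
    have : (0:ℝ) ≤ (j:ℝ) := Nat.cast_nonneg j
    positivity
  have hk0 : (0:ℝ) < (k:ℝ) := by exact_mod_cast Nat.lt_of_lt_of_le Nat.zero_lt_one hk
  field_simp

lemma cf_diag (k j : ℕ) : cf k j j = (-1:ℝ)^j * poch (al k + j) j / poch (al k) j := by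
  have hpr : ∏ l ∈ Finset.range j, (((j:ℝ) + al k + l)/(al k + l)) =
      poch (al k + j) j / poch (al k) j := by
    rw [Finset.prod_div_distrib, poch, poch]
    congr 1
    refine Finset.prod_congr rfl fun l _ => by ring
  rw [cf, Nat.choose_self, hpr]
  push_cast
  ring

lemma L_comm (k : ℕ) (u v : Polynomial ℝ) : L k (u * v) = L k (v * u) := by rw [mul_comm]

lemma Rp_mul_expand (k j : ℕ) (B : Polynomial ℝ) :
    Rp k j * B = ∑ m ∈ Finset.range (j+1), C (cf k j m) * (B * X^m) := by
  rw [Rp, Finset.sum_mul]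
  refine Finset.sum_congr rfl fun m _ => by ring

lemma L_Rp_lt {k : ℕ} (hk : 1 ≤ k) {i j : ℕ} (hij : i < j) :
    L k (Rp k i * Rp k j) = 0 := by
  rw [Rp_mul_expand k i (Rp k j), L_sum]
  refine Finset.sum_eq_zero fun m hm => ?_
  rw [L_Cmul, L_Rp_Xpow_zero hk (lt_of_le_of_lt (Nat.lt_succ_iff.mp (Finset.mem_range.mp hm)) hij), mul_zero]

lemma L_Rp_diag {k : ℕ} (hk : 1 ≤ k) (j : ℕ) : L k (Rp k j * Rp k j) = hh k j := by
  rw [Rp_mul_expand k j (Rp k j), L_sum]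
  rw [Finset.sum_eq_single j]
  · rw [L_Cmul, L_Rp_Xpow_diag hk, cf_diag]
    have h1 : (0:ℝ) < poch (al k) j := poch_pos (al_pos hk) j
    have hαj : (0:ℝ) < al k + j := by
      have := al_pos hk; have : (0:ℝ) ≤ (j:ℝ) := Nat.cast_nonneg j
      positivity
    have h2 : (0:ℝ) < poch (al k + j) (j+1) := poch_pos hαj _
    have h3 : (0:ℝ) < poch (al k + j) j := poch_pos hαj _
    have hk0 : (0:ℝ) < (k:ℝ) := by exact_mod_cast Nat.lt_of_lt_of_le Nat.zero_lt_one hk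
    have hsucc : poch (al k + j) (j+1) = poch (al k + j) j * (al k + j + j) :=
      poch_succ _ _
    have hsgn : ((-1:ℝ)^j) * ((-1:ℝ)^j) = 1 := by
      rw [← pow_add]; exact Even.neg_one_pow ⟨j, rfl⟩
    have h2a : (0:ℝ) < 2*(j:ℝ) + al k := by
      have := al_pos hk
      have h9 : (0:ℝ) ≤ (j:ℝ) := Nat.cast_nonneg j
      positivity
    rw [hh, hsucc, div_mul_div_comm]
    have hnum : (-1:ℝ)^j * poch (al k + (j:ℝ)) j * ((-1:ℝ)^j * (j.factorial:ℝ)^2) =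
        poch (al k + (j:ℝ)) j * (j.factorial:ℝ)^2 := by
      linear_combination (poch (al k + (j:ℝ)) j * (j.factorial:ℝ)^2) * hsgn
    rw [hnum]
    have hα := al_pos hk
    have h9 : (0:ℝ) ≤ (j:ℝ) := Nat.cast_nonneg j
    rw [div_eq_div_iff (by positivity) (by positivity)]
    ring
  · intro m hm hne
    rw [L_Cmul, L_Rp_Xpow_zero hk
      (lt_of_le_of_ne (Nat.lt_succ_iff.mp (Finset.mem_range.mp hm)) hne), mul_zero]
  · intro h; exact absurd (Finset.self_mem_range_succ j) h

lemma hh_pos {k : ℕ} (hk : 1 ≤ k) (j : ℕ) : 0 < hh k j := by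
  have h1 : (0:ℝ) < poch (al k) j := poch_pos (al_pos hk) j
  have hk0 : (0:ℝ) < (k:ℝ) := by exact_mod_cast Nat.lt_of_lt_of_le Nat.zero_lt_one hk
  have hf : (0:ℝ) < (j.factorial:ℝ) := by exact_mod_cast j.factorial_pos
  have := al_pos hk
  have hj : (0:ℝ) ≤ (j:ℝ) := Nat.cast_nonneg j
  rw [hh]
  positivity




lemma cf_diag_ne {k : ℕ} (hk : 1 ≤ k) (j : ℕ) : cf k j j ≠ 0 := by
  rw [cf_diag]
  have h1 : (0:ℝ) < poch (al k) j := poch_pos (al_pos hk) j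
  have h2 : (0:ℝ) < poch (al k + j) j := by
    refine poch_pos ?_ _
    have := al_pos hk
    have : (0:ℝ) ≤ (j:ℝ) := Nat.cast_nonneg j
    positivity
  intro h
  rcases mul_eq_zero.mp (div_eq_zero_iff.mp h |>.resolve_right h1.ne') with h' | h'
  · exact pow_ne_zero j (by norm_num : (-1:ℝ) ≠ 0) h'
  · exact h2.ne' h'

lemma Rp_coeff (k j i : ℕ) : (Rp k j).coeff i = if i ≤ j then cf k j i else 0 := by
  rw [Rp, Polynomial.finset_sum_coeff]
  simp only [Polynomial.coeff_C_mul, Polynomial.coeff_X_pow]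
  rw [Finset.sum_congr rfl (fun i' _ => by rw [mul_ite, mul_one, mul_zero])]
  rw [Finset.sum_ite_eq (Finset.range (j+1)) i (cf k j)]
  simp [Nat.lt_succ_iff]

lemma Rp_natDegree_le (k j : ℕ) : (Rp k j).natDegree ≤ j := by
  rw [Polynomial.natDegree_le_iff_coeff_eq_zero]
  intro N hN
  rw [Rp_coeff, if_neg (by omega)]

lemma Rp_eval (k j : ℕ) (τ : ℝ) :
    (Rp k j).eval τ = ∑ i ∈ Finset.range (j+1), cf k j i * τ^i := by
  rw [Rp, Polynomial.eval_finset_sum]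
  refine Finset.sum_congr rfl fun i _ => by
    simp [Polynomial.eval_mul, Polynomial.eval_pow]

lemma exists_expansion {k : ℕ} (hk : 1 ≤ k) :
    ∀ (n : ℕ) (σ : Polynomial ℝ), σ.natDegree ≤ n →
      ∃ a : ℕ → ℝ, σ = ∑ j ∈ Finset.range (n+1), C (a j) * Rp k j := by
  intro n
  induction n with
  | zero =>
    intro σ hσ
    refine ⟨fun _ => σ.coeff 0, ?_⟩
    have hR0 : Rp k 0 = 1 := by
      simp [Rp, cf]
    rw [Finset.sum_range_one, hR0, mul_one]
    exact Polynomial.eq_C_of_natDegree_le_zero hσ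
  | succ n ih =>
    intro σ hσ
    set b := σ.coeff (n+1) / cf k (n+1) (n+1) with hb
    set σ' := σ - C b * Rp k (n+1) with hσ'
    have hcoeff : σ'.coeff (n+1) = 0 := by
      rw [hσ', Polynomial.coeff_sub, Polynomial.coeff_C_mul, Rp_coeff,
        if_pos (le_refl (n+1)), hb,
        div_mul_cancel₀ _ (cf_diag_ne hk (n+1))]
      ring
    have hdeg : σ'.natDegree ≤ n := by
      rw [Polynomial.natDegree_le_iff_coeff_eq_zero]
      intro N hN
      rcases Nat.lt_or_ge (n+1) N with h | h
      · rw [hσ', Polynomial.coeff_sub, Polynomial.coeff_C_mul]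
        have h1 : σ.coeff N = 0 := by
          exact Polynomial.coeff_eq_zero_of_natDegree_lt (lt_of_le_of_lt hσ h)
        have h2 : (Rp k (n+1)).coeff N = 0 := by
          rw [Rp_coeff, if_neg (by omega)]
        rw [h1, h2]; ring
      · have : N = n+1 := by omega
        rw [this]; exact hcoeff
    obtain ⟨a', ha'⟩ := ih σ' hdeg
    refine ⟨Function.update a' (n+1) b, ?_⟩
    rw [Finset.sum_range_succ, Function.update_self]
    have : ∑ j ∈ Finset.range (n+1), C (Function.update a' (n+1) b j) * Rp k j
        = ∑ j ∈ Finset.range (n+1), C (a' j) * Rp k j := by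
      refine Finset.sum_congr rfl fun j hj => ?_
      rw [Function.update_of_ne (Nat.ne_of_lt (Finset.mem_range.mp hj))]
    rw [this, ← ha', hσ']
    ring

lemma L_sq_decomp {k : ℕ} (hk : 1 ≤ k) (r : ℕ) (a : ℕ → ℝ) :
    L k ((∑ j ∈ Finset.range (r+1), C (a j) * Rp k j) *
         (∑ j ∈ Finset.range (r+1), C (a j) * Rp k j))
      = ∑ j ∈ Finset.range (r+1), (a j)^2 * hh k j := by
  rw [Finset.sum_mul_sum]
  rw [L_sum]
  have hterm : ∀ i ∈ Finset.range (r+1),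
      L k (∑ j ∈ Finset.range (r+1), (C (a i) * Rp k i) * (C (a j) * Rp k j))
        = (a i)^2 * hh k i := by
    intro i hi
    rw [L_sum]
    rw [Finset.sum_eq_single i]
    · have : (C (a i) * Rp k i) * (C (a i) * Rp k i)
          = C (a i) * (C (a i) * (Rp k i * Rp k i)) := by ring
      rw [this, L_Cmul, L_Cmul, L_Rp_diag hk]
      ring
    · intro j hj hne
      have : (C (a i) * Rp k i) * (C (a j) * Rp k j)
          = C (a i) * (C (a j) * (Rp k i * Rp k j)) := by ring
      rw [this, L_Cmul, L_Cmul]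
      rcases Nat.lt_or_ge i j with h | h
      · rw [L_Rp_lt hk h]; ring
      · have hji : j < i := lt_of_le_of_ne h (by omega)
        have : Rp k i * Rp k j = Rp k j * Rp k i := by ring
        rw [this, L_Rp_lt hk hji]; ring
    · intro h; exact absurd hi h
  exact Finset.sum_congr rfl hterm

lemma cs_bound {k : ℕ} (hk : 1 ≤ k) (r : ℕ) (a : ℕ → ℝ) (τ : ℝ)
    (hRb : ∀ j ∈ Finset.range (r+1), ((Rp k j).eval τ)^2 ≤ 2) :
    ((∑ j ∈ Finset.range (r+1), C (a j) * Rp k j).eval τ)^2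
      ≤ 2 * (∑ j ∈ Finset.range (r+1), (hh k j)⁻¹) *
        (∑ j ∈ Finset.range (r+1), (a j)^2 * hh k j) := by
  have heval : (∑ j ∈ Finset.range (r+1), C (a j) * Rp k j).eval τ
      = ∑ j ∈ Finset.range (r+1),
          (a j * Real.sqrt (hh k j)) * ((Rp k j).eval τ / Real.sqrt (hh k j)) := by
    rw [Polynomial.eval_finset_sum]
    refine Finset.sum_congr rfl fun j _ => ?_
    have hpos : (0:ℝ) < Real.sqrt (hh k j) := Real.sqrt_pos.mpr (hh_pos hk j)
    rw [Polynomial.eval_mul, Polynomial.eval_C]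
    field_simp
  rw [heval]
  calc (∑ j ∈ Finset.range (r+1),
          (a j * Real.sqrt (hh k j)) * ((Rp k j).eval τ / Real.sqrt (hh k j)))^2
      ≤ (∑ j ∈ Finset.range (r+1), (a j * Real.sqrt (hh k j))^2) *
        (∑ j ∈ Finset.range (r+1), ((Rp k j).eval τ / Real.sqrt (hh k j))^2) :=
        Finset.sum_mul_sq_le_sq_mul_sq _ _ _
    _ ≤ (∑ j ∈ Finset.range (r+1), (a j)^2 * hh k j) *
        (∑ j ∈ Finset.range (r+1), 2 * (hh k j)⁻¹) := by
        apply mul_le_mul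
        · apply le_of_eq
          refine Finset.sum_congr rfl fun j _ => ?_
          rw [mul_pow, Real.sq_sqrt (hh_pos hk j).le]
        · apply Finset.sum_le_sum
          intro j hj
          rw [div_pow, Real.sq_sqrt (hh_pos hk j).le]
          rw [div_eq_mul_inv]
          exact mul_le_mul_of_nonneg_right (hRb j hj) (inv_nonneg.mpr (hh_pos hk j).le)
        · apply Finset.sum_nonneg; intro j hj; positivity
        · apply Finset.sum_nonneg; intro j hj
          have := hh_pos hk j; positivity
    _ = 2 * (∑ j ∈ Finset.range (r+1), (hh k j)⁻¹) *
        (∑ j ∈ Finset.range (r+1), (a j)^2 * hh k j) := by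
        rw [← Finset.mul_sum]; ring

-- bound |Rp eval| near 0
lemma sixtyfour (k : ℕ) (hk : 1 ≤ k) : (64:ℝ) * k ≤ 64^k := by
  induction k with
  | zero => omega
  | succ n ih =>
    rcases Nat.eq_or_lt_of_le hk with h | h
    · rw [← h]; norm_num
    · have hn : 1 ≤ n := by omega
      have := ih hn
      have h64 : (1:ℝ) ≤ 64^n := one_le_pow₀ (by norm_num)
      have h641 : (64:ℝ) ≤ 64^n := by
        simpa using pow_le_pow_right₀ (by norm_num : (1:ℝ) ≤ 64) hn
      push_cast
      calc (64:ℝ)*(n+1) = 64*n + 64 := by ring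
        _ ≤ 64^n + 64^n := by linarith
        _ ≤ 64^(n+1) := by rw [pow_succ]; nlinarith

lemma geom_le {q : ℝ} (h0 : 0 ≤ q) (h1 : q ≤ 1/2) (n : ℕ) :
    ∑ i ∈ Finset.range n, q^i ≤ 2 := by
  calc ∑ i ∈ Finset.range n, q^i ≤ ∑ i ∈ Finset.range n, (1/2:ℝ)^i := by
        refine Finset.sum_le_sum fun i _ => ?_
        exact pow_le_pow_left₀ h0 h1 i
    _ = (1 - (1/2:ℝ)^n) / (1 - 1/2) := by
        rw [geom_sum_eq (by norm_num : (1/2:ℝ) ≠ 1)]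
        rw [div_eq_div_iff (by norm_num) (by norm_num)]
        ring
    _ ≤ 2 := by
        have : (0:ℝ) ≤ (1/2:ℝ)^n := by positivity
        rw [div_le_iff₀ (by norm_num)]
        linarith

lemma Rp_eval_sq_le_two {k r j : ℕ} (hk : 1 ≤ k) (hr : 1 ≤ r) (hj : j ≤ r)
    {τ : ℝ} (hτ0 : 0 ≤ τ) (hq : 2*(r:ℝ)^2*τ ≤ 2*((64:ℝ)^k)⁻¹) :
    ((Rp k j).eval τ)^2 ≤ 2 := by
  have hα := al_pos hk
  have hq0 : 0 ≤ 2*(r:ℝ)^2*τ := by positivity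
  have h64 : (0:ℝ) < 64^k := by positivity
  have hk1 : (1:ℝ) ≤ (k:ℝ) := by exact_mod_cast hk
  have h64k : (64:ℝ)*k ≤ 64^k := sixtyfour k hk
  have h641 : (64:ℝ) ≤ 64^k := by
    simpa using pow_le_pow_right₀ (by norm_num : (1:ℝ) ≤ 64) hk
  have hinv64 : ((64:ℝ)^k)⁻¹ ≤ 64⁻¹ :=
    inv_anti₀ (by norm_num) h641
  have hqhalf : 2*(r:ℝ)^2*τ ≤ 1/2 := by
    calc 2*(r:ℝ)^2*τ ≤ 2*((64:ℝ)^k)⁻¹ := hq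
      _ ≤ 2*(64:ℝ)⁻¹ := by linarith
      _ ≤ 1/2 := by norm_num
  -- per-term coefficient bound
  have hterm : ∀ i ∈ Finset.Ico 1 (j+1),
      |cf k j i * τ^i| ≤ 2*(k:ℝ) * (2*(r:ℝ)^2*τ)^i := by
    intro i hi
    obtain ⟨hi1, hi2⟩ := Finset.mem_Ico.mp hi
    have hij : i ≤ j := by omega
    have hj1 : 1 ≤ j := le_trans hi1 hij
    have hjR : (1:ℝ) ≤ (j:ℝ) := by exact_mod_cast hj1
    have hiR : (i:ℝ) ≤ (j:ℝ) := by exact_mod_cast hij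
    have hjrR : (j:ℝ) ≤ (r:ℝ) := by exact_mod_cast hj
    have hla := al_le_half hk
    have hprod_pos : ∀ l ∈ Finset.range i, (0:ℝ) < ((j:ℝ) + al k + l)/(al k + l) := by
      intro l _
      have h9 : (0:ℝ) ≤ (l:ℝ) := Nat.cast_nonneg l
      positivity
    have habs : |cf k j i| = (j.choose i : ℝ) *
        ∏ l ∈ Finset.range i, (((j:ℝ) + al k + l)/(al k + l)) := by
      rw [cf, abs_mul, abs_mul, abs_pow, abs_neg, abs_one, one_pow, one_mul,
        Nat.abs_cast, abs_of_pos (Finset.prod_pos hprod_pos)]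
    have hnum : ∏ l ∈ Finset.range i, ((j:ℝ) + al k + l) ≤ (2*(j:ℝ))^i := by
      calc ∏ l ∈ Finset.range i, ((j:ℝ) + al k + l)
          ≤ ∏ l ∈ Finset.range i, (2*(j:ℝ)) := by
            refine Finset.prod_le_prod (fun l _ => ?_) (fun l hl => ?_)
            · have h9 : (0:ℝ) ≤ (l:ℝ) := Nat.cast_nonneg l
              positivity
            · have hl' : (l:ℝ) + 1 ≤ (i:ℝ) := by
                exact_mod_cast Finset.mem_range.mp hl
              linarith
        _ = (2*(j:ℝ))^i := by rw [Finset.prod_const, Finset.card_range]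
    have hden : al k ≤ ∏ l ∈ Finset.range i, (al k + l) := by
      have hstep : ∏ l ∈ Finset.range i, (fun l : ℕ => if l = 0 then al k else 1) l
          ≤ ∏ l ∈ Finset.range i, (al k + l) := by
        refine Finset.prod_le_prod (fun l _ => ?_) (fun l _ => ?_)
        · by_cases h : l = 0 <;> simp [h] <;> positivity
        · by_cases h : l = 0
          · simp [h]
          · have h9 : (1:ℝ) ≤ (l:ℝ) := by
              have : 1 ≤ l := Nat.one_le_iff_ne_zero.mpr h
              exact_mod_cast this
            simp [h]
            linarith
      have hval : ∏ l ∈ Finset.range i, (fun l : ℕ => if l = 0 then al k else 1) l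
          = al k := by
        rw [Finset.prod_eq_single_of_mem 0 (Finset.mem_range.mpr (by omega))]
        · simp
        · intro l _ hl0; simp [hl0]
      have := hstep
      rw [hval] at this
      exact this
    have hden_pos : (0:ℝ) < ∏ l ∈ Finset.range i, (al k + l) := by
      refine Finset.prod_pos fun l _ => ?_
      have h9 : (0:ℝ) ≤ (l:ℝ) := Nat.cast_nonneg l
      positivity
    have hchoose : (j.choose i : ℝ) ≤ (j:ℝ)^i := by
      have := (Nat.choose_le_descFactorial j i).trans (Nat.descFactorial_le_pow j i)
      exact_mod_cast this
    have hratio : ∏ l ∈ Finset.range i, (((j:ℝ) + al k + l)/(al k + l))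
        ≤ (2*(j:ℝ))^i / al k := by
      rw [Finset.prod_div_distrib]
      apply div_le_div₀ (by positivity) hnum hα hden |>.trans
      exact le_of_eq rfl
    rw [abs_mul, habs, abs_pow, abs_of_nonneg hτ0]
    calc (j.choose i : ℝ) * (∏ l ∈ Finset.range i, (((j:ℝ) + al k + l)/(al k + l))) * τ^i
        ≤ (j:ℝ)^i * ((2*(j:ℝ))^i / al k) * τ^i := by
          apply mul_le_mul_of_nonneg_right ?_ (by positivity)
          apply mul_le_mul hchoose hratio (Finset.prod_pos hprod_pos).le (by positivity)
      _ = (al k)⁻¹ * (2*(j:ℝ)^2*τ)^i := by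
          have hpow : (j:ℝ)^i * (2*(j:ℝ))^i * τ^i = (2*(j:ℝ)^2*τ)^i := by
            rw [← mul_pow, ← mul_pow]
            congr 1
            ring
          rw [show (j:ℝ)^i * ((2*(j:ℝ))^i / al k) * τ^i
              = (al k)⁻¹ * ((j:ℝ)^i * (2*(j:ℝ))^i * τ^i) from by ring, hpow]
      _ = 2*(k:ℝ) * (2*(j:ℝ)^2*τ)^i := by rw [al_inv]
      _ ≤ 2*(k:ℝ) * (2*(r:ℝ)^2*τ)^i := by
          apply mul_le_mul_of_nonneg_left ?_ (by positivity)
          apply pow_le_pow_left₀ (by positivity) ?_ i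
          have hj2 : (j:ℝ)^2 ≤ (r:ℝ)^2 := by nlinarith
          have := mul_le_mul_of_nonneg_right hj2 hτ0
          linarith
  have hsum_geom : ∑ i ∈ Finset.Ico 1 (j+1), (2*(r:ℝ)^2*τ)^i ≤ 2*(2*(r:ℝ)^2*τ) := by
    rw [Finset.sum_Ico_eq_sum_range]
    have : ∀ i ∈ Finset.range (j+1-1), (2*(r:ℝ)^2*τ)^(1+i)
        = (2*(r:ℝ)^2*τ) * (2*(r:ℝ)^2*τ)^i := by
      intro i _; rw [pow_add, pow_one]
    rw [Finset.sum_congr rfl this, ← Finset.mul_sum]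
    have hg := geom_le hq0 hqhalf (j+1-1)
    calc (2*(r:ℝ)^2*τ) * ∑ i ∈ Finset.range (j+1-1), (2*(r:ℝ)^2*τ)^i
        ≤ (2*(r:ℝ)^2*τ) * 2 := by
          exact mul_le_mul_of_nonneg_left hg hq0
      _ = 2*(2*(r:ℝ)^2*τ) := by ring
  have htail : |∑ i ∈ Finset.Ico 1 (j+1), cf k j i * τ^i| ≤ 1/8 := by
    calc |∑ i ∈ Finset.Ico 1 (j+1), cf k j i * τ^i|
        ≤ ∑ i ∈ Finset.Ico 1 (j+1), |cf k j i * τ^i| :=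
          Finset.abs_sum_le_sum_abs _ _
      _ ≤ ∑ i ∈ Finset.Ico 1 (j+1), 2*(k:ℝ) * (2*(r:ℝ)^2*τ)^i :=
          Finset.sum_le_sum hterm
      _ = 2*(k:ℝ) * ∑ i ∈ Finset.Ico 1 (j+1), (2*(r:ℝ)^2*τ)^i := by
          rw [Finset.mul_sum]
      _ ≤ 2*(k:ℝ) * (2*(2*(r:ℝ)^2*τ)) := by
          apply mul_le_mul_of_nonneg_left hsum_geom (by positivity)
      _ ≤ 2*(k:ℝ) * (2*(2*((64:ℝ)^k)⁻¹)) := by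
          apply mul_le_mul_of_nonneg_left ?_ (by positivity)
          linarith
      _ = 8*(k:ℝ)/(64:ℝ)^k := by field_simp; ring
      _ ≤ 1/8 := by
          rw [div_le_div_iff₀ h64 (by norm_num)]
          linarith
  have heval : (Rp k j).eval τ = 1 + ∑ i ∈ Finset.Ico 1 (j+1), cf k j i * τ^i := by
    rw [Rp_eval]
    rw [Finset.range_eq_Ico,
      Finset.sum_eq_sum_Ico_succ_bot (by omega : 0 < j+1) (fun i => cf k j i * τ^i)]
    simp [cf]
  rw [heval]
  have h1 : |1 + ∑ i ∈ Finset.Ico 1 (j+1), cf k j i * τ^i| ≤ 9/8 := by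
    calc |1 + ∑ i ∈ Finset.Ico 1 (j+1), cf k j i * τ^i|
        ≤ |(1:ℝ)| + |∑ i ∈ Finset.Ico 1 (j+1), cf k j i * τ^i| := abs_add_le _ _
      _ ≤ 1 + 1/8 := by rw [abs_one]; linarith
      _ = 9/8 := by norm_num
  obtain ⟨hl, hu⟩ := abs_le.mp h1
  calc (1 + ∑ i ∈ Finset.Ico 1 (j+1), cf k j i * τ^i)^2
      ≤ (9/8:ℝ)^2 := sq_le_sq' hl hu
    _ ≤ 2 := by norm_num




def Bq (k j : ℕ) : ℝ := poch (al k) j / (j.factorial : ℝ)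

lemma Bq_pos {k : ℕ} (hk : 1 ≤ k) (j : ℕ) : 0 < Bq k j := by
  have h1 := poch_pos (al_pos hk) j
  have h2 : (0:ℝ) < (j.factorial:ℝ) := by exact_mod_cast j.factorial_pos
  exact div_pos h1 h2

@[simp] lemma Bq_zero (k : ℕ) : Bq k 0 = 1 := by simp [Bq, poch]

lemma Bq_succ_mul (k j : ℕ) : Bq k (j+1) * ((j:ℝ)+1) = Bq k j * (al k + j) := by
  have h2 : (j.factorial:ℝ) ≠ 0 := by
    exact_mod_cast j.factorial_pos.ne'
  have h3 : ((j:ℝ)+1) ≠ 0 := by positivity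
  rw [Bq, Bq, poch_succ, Nat.factorial_succ]
  push_cast
  field_simp

lemma Bq_succ (k j : ℕ) : Bq k (j+1) = Bq k j * (al k + j) / ((j:ℝ)+1) := by
  have h3 : ((j:ℝ)+1) ≠ 0 := by positivity
  rw [eq_div_iff h3]
  exact Bq_succ_mul k j

lemma Bq_one {k : ℕ} : Bq k 1 = al k := by
  rw [show (1:ℕ) = 0 + 1 from rfl, Bq_succ]
  simp

lemma hh_inv {k : ℕ} (hk : 1 ≤ k) (j : ℕ) :
    (hh k j)⁻¹ = (k:ℝ) * (Bq k j)^2 * (2*(j:ℝ) + al k) := by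
  have h1 := poch_pos (al_pos hk) j
  have h2 : (0:ℝ) < (j.factorial:ℝ) := by exact_mod_cast j.factorial_pos
  have hk0 : (0:ℝ) < (k:ℝ) := by exact_mod_cast Nat.lt_of_lt_of_le Nat.zero_lt_one hk
  have hα := al_pos hk
  have hj : (0:ℝ) ≤ (j:ℝ) := Nat.cast_nonneg j
  rw [hh, Bq]
  field_simp

lemma Wsum_closed {k : ℕ} (hk : 1 ≤ k) (r : ℕ) :
    ∑ j ∈ Finset.range (r+1), (hh k j)⁻¹
      = 2*(k:ℝ)^2*((r:ℝ)+1)^2*(Bq k (r+1))^2 := by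
  have htk := two_k_al hk
  induction r with
  | zero =>
    rw [Finset.sum_range_one, hh_inv hk 0, Bq_one]
    simp only [Bq_zero, Nat.cast_zero]
    nlinarith [htk]
  | succ n ih =>
    rw [Finset.sum_range_succ, ih, hh_inv hk (n+1)]
    have hmul : Bq k (n+1+1) * ((n:ℝ)+1+1) = Bq k (n+1) * (al k + ((n:ℝ)+1)) := by
      have := Bq_succ_mul k (n+1)
      push_cast at this ⊢
      linarith
    have hsq : ((n:ℝ)+1+1)^2 * (Bq k (n+1+1))^2
        = (Bq k (n+1) * (al k + ((n:ℝ)+1)))^2 := by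
      rw [← hmul]; ring
    push_cast
    calc 2*(k:ℝ)^2*((n:ℝ)+1)^2*(Bq k (n+1))^2
          + (k:ℝ)*(Bq k (n+1))^2*(2*((n:ℝ)+1) + al k)
        = 2*(k:ℝ)^2*((Bq k (n+1) * (al k + ((n:ℝ)+1)))^2)
          - (Bq k (n+1))^2 * ((k:ℝ)*al k + 2*(k:ℝ)*((n:ℝ)+1)) * (2*(k:ℝ)*al k - 1) := by
          ring
      _ = 2*(k:ℝ)^2*(((n:ℝ)+1+1)^2 * (Bq k (n+1+1))^2) := by
          rw [hsq, htk]; ring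
      _ = 2*(k:ℝ)^2*((n:ℝ)+1+1)^2*(Bq k (n+1+1))^2 := by ring

-- elementary inequality: (1+a)^n ≤ 1 + na + (na)^2 when 0 ≤ a, na ≤ 1
lemma pow_one_add_le {a : ℝ} (ha : 0 ≤ a) :
    ∀ n : ℕ, (n:ℝ)*a ≤ 1 → (1+a)^n ≤ 1 + n*a + ((n:ℝ)*a)^2 := by
  intro n
  induction n with
  | zero => intro _; norm_num
  | succ n ih =>
    intro hna
    push_cast at hna ⊢
    have hn1 : (n:ℝ)*a ≤ 1 := by nlinarith
    have h1 := ih hn1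
    have hpos : (0:ℝ) ≤ 1 + n*a + ((n:ℝ)*a)^2 := by positivity
    have h3 : (n:ℝ)*a*((n:ℝ)*a*a) ≤ 1*((n:ℝ)*a*a) :=
      mul_le_mul_of_nonneg_right hn1 (by positivity)
    have hone : (0:ℝ) ≤ 1 + a := by linarith
    calc (1+a)^(n+1) = (1+a)^n * (1+a) := by rw [pow_succ]
      _ ≤ (1 + n*a + ((n:ℝ)*a)^2) * (1+a) := mul_le_mul_of_nonneg_right h1 hone
      _ ≤ 1 + ((n:ℝ)+1)*a + (((n:ℝ)+1)*a)^2 := by nlinarith [sq_nonneg a, ha]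

lemma pow_lb {k : ℕ} (hk : 1 ≤ k) {x : ℝ} (hx : 1 ≤ x) :
    x^(2*k) + x^(2*k-1) ≤ (x + al k)^(2*k) := by
  have hα := al_pos hk
  have hx0 : (0:ℝ) < x := by linarith
  have h1 : 1 + (2*k:ℝ)*(al k/x) ≤ (1 + al k/x)^(2*k) := by
    have hge : (-2:ℝ) ≤ al k/x := by
      have : (0:ℝ) ≤ al k/x := by positivity
      linarith
    have := one_add_mul_le_pow hge (2*k)
    exact_mod_cast this
  have hsplit : x^(2*k) = x^(2*k-1) * x := by
    rw [← pow_succ, Nat.sub_add_cancel (by omega : 1 ≤ 2*k)]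
  have hxx : (x + al k)^(2*k) = x^(2*k) * (1 + al k/x)^(2*k) := by
    rw [← mul_pow]
    congr 1
    field_simp
  rw [hxx]
  have htk := two_k_al hk
  calc x^(2*k) + x^(2*k-1)
      = x^(2*k) * (1 + (2*(k:ℝ))*(al k)/x) := by
        rw [hsplit]
        field_simp
        linear_combination (-1:ℝ) * htk
    _ ≤ x^(2*k) * (1 + al k/x)^(2*k) := by
        apply mul_le_mul_of_nonneg_left ?_ (by positivity)
        have : (2*(k:ℝ))*(al k)/x = (2*k:ℝ)*(al k/x) := by push_cast; ring
        rw [this]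
        exact_mod_cast h1

lemma pow_ub {k : ℕ} (hk : 1 ≤ k) {x : ℝ} (hx : 1 ≤ x) :
    (x + al k)^(2*k) ≤ x^(2*k) + x^(2*k-1) + x^(2*k) * (x⁻¹)^2 := by
  have hα := al_pos hk
  have hx0 : (0:ℝ) < x := by linarith
  have htk := two_k_al hk
  have hna : (2*k:ℝ)*(al k/x) ≤ 1 := by
    have h1 : (2*k:ℝ)*(al k/x) = 1/x := by
      push_cast
      field_simp
      nlinarith [htk]
    rw [h1]
    rw [div_le_one hx0]; exact hx
  have h2 := pow_one_add_le (by positivity : (0:ℝ) ≤ al k/x) (2*k) (by exact_mod_cast hna)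
  have h1 : (2*k:ℝ)*(al k/x) = 1/x := by
    push_cast; field_simp; nlinarith [htk]
  have hxx : (x + al k)^(2*k) = x^(2*k) * (1 + al k/x)^(2*k) := by
    rw [← mul_pow]; congr 1; field_simp
  have hsplit : x^(2*k) = x^(2*k-1) * x := by
    rw [← pow_succ, Nat.sub_add_cancel (by omega : 1 ≤ 2*k)]
  rw [hxx]
  calc x^(2*k) * (1 + al k/x)^(2*k)
      ≤ x^(2*k) * (1 + (2*k:ℝ)*(al k/x) + ((2*k:ℝ)*(al k/x))^2) := by
        apply mul_le_mul_of_nonneg_left ?_ (by positivity)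
        exact_mod_cast h2
    _ = x^(2*k) + x^(2*k-1) + x^(2*k) * (x⁻¹)^2 := by
        rw [h1, hsplit]
        field_simp

def msq (k j : ℕ) : ℝ := (Bq k j)^(2*k) * (j:ℝ)^(2*k-1)

lemma msq_one (k : ℕ) : msq k 1 = (al k)^(2*k) := by
  rw [msq, Bq_one]
  simp

lemma msq_succ {k : ℕ} (hk : 1 ≤ k) (j : ℕ) (hj : 1 ≤ j) :
    msq k (j+1) = (Bq k j)^(2*k) * ((al k) + j)^(2*k) / ((j:ℝ)+1) := by
  have hj1 : (1:ℝ) ≤ (j:ℝ) := by exact_mod_cast hj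
  rw [msq, Bq_succ, div_pow, mul_pow]
  have hsplit : ((j:ℝ)+1)^(2*k) = ((j:ℝ)+1)^(2*k-1) * ((j:ℝ)+1) := by
    rw [← pow_succ, Nat.sub_add_cancel (by omega : 1 ≤ 2*k)]
  push_cast
  rw [hsplit]
  have h1 : ((j:ℝ)+1) > 0 := by linarith
  have h2 : ((j:ℝ)+1)^(2*k-1) > 0 := by positivity
  field_simp

lemma msq_mono {k : ℕ} (hk : 1 ≤ k) (j : ℕ) (hj : 1 ≤ j) :
    msq k j ≤ msq k (j+1) := by
  have hj1 : (1:ℝ) ≤ (j:ℝ) := by exact_mod_cast hj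
  have hBq := Bq_pos hk j
  rw [msq_succ hk j hj, msq]
  rw [le_div_iff₀ (by linarith : (0:ℝ) < (j:ℝ)+1)]
  have hlb := pow_lb hk hj1
  have hsplit : (j:ℝ)^(2*k) = (j:ℝ)^(2*k-1) * j := by
    rw [← pow_succ, Nat.sub_add_cancel (by omega : 1 ≤ 2*k)]
  have key : (j:ℝ)^(2*k-1) * ((j:ℝ)+1) ≤ ((j:ℝ) + al k)^(2*k) := by
    calc (j:ℝ)^(2*k-1) * ((j:ℝ)+1) = (j:ℝ)^(2*k) + (j:ℝ)^(2*k-1) := by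
          rw [hsplit]; ring
      _ ≤ ((j:ℝ) + al k)^(2*k) := hlb
  calc (Bq k j)^(2*k) * (j:ℝ)^(2*k-1) * ((j:ℝ)+1)
      = (Bq k j)^(2*k) * ((j:ℝ)^(2*k-1) * ((j:ℝ)+1)) := by ring
    _ ≤ (Bq k j)^(2*k) * ((j:ℝ) + al k)^(2*k) := by
        apply mul_le_mul_of_nonneg_left key (by positivity)
    _ = (Bq k j)^(2*k) * (al k + (j:ℝ))^(2*k) := by rw [add_comm (j:ℝ) (al k)]

lemma msq_step_ub {k : ℕ} (hk : 1 ≤ k) (j : ℕ) (hj : 1 ≤ j) :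
    msq k (j+1) ≤ msq k j * (1 + ((j:ℝ)⁻¹)^2) := by
  have hj1 : (1:ℝ) ≤ (j:ℝ) := by exact_mod_cast hj
  have hj0 : (0:ℝ) < (j:ℝ) := by linarith
  have hBq := Bq_pos hk j
  rw [msq_succ hk j hj, msq]
  rw [div_le_iff₀ (by linarith : (0:ℝ) < (j:ℝ)+1)]
  have hub := pow_ub hk hj1
  have hsplit : (j:ℝ)^(2*k) = (j:ℝ)^(2*k-1) * j := by
    rw [← pow_succ, Nat.sub_add_cancel (by omega : 1 ≤ 2*k)]
  have key : ((j:ℝ) + al k)^(2*k) ≤ (j:ℝ)^(2*k-1) * (1 + ((j:ℝ)⁻¹)^2) * ((j:ℝ)+1) := by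
    calc ((j:ℝ) + al k)^(2*k)
        ≤ (j:ℝ)^(2*k) + (j:ℝ)^(2*k-1) + (j:ℝ)^(2*k) * ((j:ℝ)⁻¹)^2 := hub
      _ ≤ ((j:ℝ)^(2*k) + (j:ℝ)^(2*k-1)) * (1 + ((j:ℝ)⁻¹)^2) := by
          have hp1 : (0:ℝ) ≤ (j:ℝ)^(2*k-1) * ((j:ℝ)⁻¹)^2 := by positivity
          nlinarith
      _ = (j:ℝ)^(2*k-1) * (1 + ((j:ℝ)⁻¹)^2) * ((j:ℝ)+1) := by
          rw [hsplit]; ring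
  calc (Bq k j)^(2*k) * ((al k) + j)^(2*k)
      = (Bq k j)^(2*k) * ((j:ℝ) + al k)^(2*k) := by rw [add_comm (al k) (j:ℝ)]
    _ ≤ (Bq k j)^(2*k) * ((j:ℝ)^(2*k-1) * (1 + ((j:ℝ)⁻¹)^2) * ((j:ℝ)+1)) := by
        apply mul_le_mul_of_nonneg_left key (by positivity)
    _ = (Bq k j)^(2*k) * (j:ℝ)^(2*k-1) * (1 + ((j:ℝ)⁻¹)^2) * ((j:ℝ)+1) := by ring

lemma msq_ge {k : ℕ} (hk : 1 ≤ k) : ∀ j : ℕ, 1 ≤ j → (al k)^(2*k) ≤ msq k j := by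
  intro j
  induction j with
  | zero => omega
  | succ n ih =>
    intro _
    rcases Nat.eq_or_lt_of_le (by omega : 1 ≤ n+1) with h | h
    · rw [← h, msq_one]
    · have hn : 1 ≤ n := by omega
      exact (ih hn).trans (msq_mono hk n hn)

lemma msq_le {k : ℕ} (hk : 1 ≤ k) : ∀ j : ℕ, 2 ≤ j → msq k j ≤ (4 - 4/(j:ℝ)) * (al k)^(2*k) := by
  intro j hj
  induction j, hj using Nat.le_induction with
  | base =>
    have h1 := msq_step_ub hk 1 (le_refl 1)
    rw [msq_one] at h1
    norm_num at h1 ⊢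
    linarith
  | succ n hn ih =>
    have hn2 : (2:ℝ) ≤ (n:ℝ) := by exact_mod_cast hn
    have hn0 : (0:ℝ) < (n:ℝ) := by linarith
    have hs := msq_step_ub hk n (by omega)
    have hα := al_pos hk
    have hα2k : (0:ℝ) ≤ (al k)^(2*k) := by positivity
    have hfac : (0:ℝ) ≤ 1 + ((n:ℝ)⁻¹)^2 := by positivity
    have hD : (4 - 4/((n:ℝ)+1)) - (4 - 4/(n:ℝ))*(1 + ((n:ℝ)⁻¹)^2)
        = 4/((n:ℝ)^3*((n:ℝ)+1)) := by
      field_simp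
      ring
    have hDpos : (0:ℝ) ≤ 4/((n:ℝ)^3*((n:ℝ)+1)) := by positivity
    have hkey : (4 - 4/(n:ℝ))*(1 + ((n:ℝ)⁻¹)^2) ≤ 4 - 4/((n:ℝ)+1) := by linarith
    calc msq k (n+1) ≤ msq k n * (1 + ((n:ℝ)⁻¹)^2) := hs
      _ ≤ ((4 - 4/(n:ℝ)) * (al k)^(2*k)) * (1 + ((n:ℝ)⁻¹)^2) :=
          mul_le_mul_of_nonneg_right ih hfac
      _ = ((4 - 4/(n:ℝ)) * (1 + ((n:ℝ)⁻¹)^2)) * (al k)^(2*k) := by ring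
      _ ≤ (4 - 4/((n:ℝ)+1)) * (al k)^(2*k) :=
          mul_le_mul_of_nonneg_right hkey hα2k
      _ = (4 - 4/((n+1:ℕ):ℝ)) * (al k)^(2*k) := by push_cast; ring


def Wq (k r : ℕ) : ℝ := ∑ j ∈ Finset.range (r+1), (hh k j)⁻¹
def del (k r : ℕ) : ℝ := (16 * Wq k r)⁻¹


lemma kR_pos {k : ℕ} (hk : 1 ≤ k) : (0:ℝ) < (k:ℝ) := by
  exact_mod_cast Nat.lt_of_lt_of_le Nat.zero_lt_one hk

lemma hh_zero {k : ℕ} (hk : 1 ≤ k) : hh k 0 = 2 := by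
  have htk := two_k_al hk
  have hk0 := (kR_pos hk).ne'
  have hα := al_pos hk
  rw [hh]
  simp [poch]
  field_simp
  linear_combination -htk

lemma Wq_ge_half {k : ℕ} (hk : 1 ≤ k) (r : ℕ) : 1/2 ≤ Wq k r := by
  rw [Wq]
  have h0 : (hh k 0)⁻¹ = 1/2 := by rw [hh_zero hk]; norm_num
  calc (1/2:ℝ) = (hh k 0)⁻¹ := h0.symm
    _ ≤ ∑ j ∈ Finset.range (r+1), (hh k j)⁻¹ := by
        apply Finset.single_le_sum (f := fun j => (hh k j)⁻¹)
        · intro j _; exact (inv_pos.mpr (hh_pos hk j)).le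
        · exact Finset.mem_range.mpr (by omega)

lemma Wq_pos {k : ℕ} (hk : 1 ≤ k) (r : ℕ) : 0 < Wq k r := by
  linarith [Wq_ge_half hk r]

lemma del_pos {k : ℕ} (hk : 1 ≤ k) (r : ℕ) : 0 < del k r := by
  rw [del]
  have := Wq_pos hk r
  positivity

lemma del_le_eighth {k : ℕ} (hk : 1 ≤ k) (r : ℕ) : del k r ≤ 1/8 := by
  rw [del]
  have h := Wq_ge_half hk r
  have h2 : (8:ℝ) ≤ 16 * Wq k r := by linarith
  calc (16 * Wq k r)⁻¹ ≤ (8:ℝ)⁻¹ := by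
        apply inv_anti₀ (by norm_num) h2
    _ = 1/8 := by norm_num

lemma const_id {k : ℕ} (hk : 1 ≤ k) :
    (16:ℝ)^(2*k) * (2*(k:ℝ)^2)^(2*k) * (al k)^(4*k) = (64:ℝ)^k := by
  have hk0 := (kR_pos hk).ne'
  have e16 : (16:ℝ)^(2*k) = ((16:ℝ)^2)^k := pow_mul 16 2 k
  have e2 : (2*(k:ℝ)^2)^(2*k) = ((2*(k:ℝ)^2)^2)^k := pow_mul _ 2 k
  have e3 : (al k)^(4*k) = ((al k)^4)^k := pow_mul _ 4 k
  have e4 : (al k)^4 = (16*(k:ℝ)^4)⁻¹ := by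
    rw [al, inv_pow]
    congr 1
    ring
  rw [e16, e2, e3, e4, ← mul_pow, ← mul_pow]
  congr 1
  field_simp
  ring

lemma X_form {k r : ℕ} (hk : 1 ≤ k) :
    (16 * Wq k r)^(2*k)
      = ((16:ℝ)^(2*k) * (2*(k:ℝ)^2)^(2*k)) * ((msq k (r+1))^2 * ((r:ℝ)+1)^2) := by
  have hW : Wq k r = 2*(k:ℝ)^2*((r:ℝ)+1)^2*(Bq k (r+1))^2 := by
    rw [Wq]; exact Wsum_closed hk r
  have hcast : (((r+1:ℕ)):ℝ) = ((r:ℝ)+1) := by push_cast; ring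
  rw [hW, msq, hcast]
  generalize ((r:ℝ)+1) = x
  generalize Bq k (r+1) = B
  have hk1 : 1 ≤ k := hk
  have e1 : (B^(2*k) * x^(2*k-1))^2 * x^2 = B^(4*k) * x^(4*k) := by
    rw [mul_pow, ← pow_mul, ← pow_mul, mul_assoc, ← pow_add]
    have he1 : 2*k*2 = 4*k := by ring
    have he2 : (2*k-1)*2 + 2 = 4*k := by omega
    rw [he1, he2]
  have f1 : (x^2*B^2)^(2*k) = B^(4*k) * x^(4*k) := by
    rw [mul_pow, ← pow_mul, ← pow_mul, show 2*(2*k) = 4*k from by ring]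
    ring
  have e2 : (16 * (2*(k:ℝ)^2*x^2*B^2))^(2*k)
      = 16^(2*k) * (2*(k:ℝ)^2)^(2*k) * (B^(4*k) * x^(4*k)) := by
    calc (16 * (2*(k:ℝ)^2*x^2*B^2))^(2*k)
        = ((16*(2*(k:ℝ)^2))*(x^2*B^2))^(2*k) := by
          congr 1
          ring
      _ = (16*(2*(k:ℝ)^2))^(2*k) * (x^2*B^2)^(2*k) := mul_pow _ _ _
      _ = 16^(2*k) * (2*(k:ℝ)^2)^(2*k) * (B^(4*k)*x^(4*k)) := by rw [mul_pow, f1]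
  rw [e2, e1]

lemma X_lb {k r : ℕ} (hk : 1 ≤ k) (hr : 1 ≤ r) :
    (64:ℝ)^k * ((r:ℝ)+1)^2 ≤ (16 * Wq k r)^(2*k) := by
  rw [X_form hk]
  have hα := al_pos hk
  have hb := msq_ge hk (r+1) (by omega)
  have hb2 : ((al k)^(2*k))^2 ≤ (msq k (r+1))^2 := by
    apply pow_le_pow_left₀ (by positivity) hb
  have hc : ((16:ℝ)^(2*k) * (2*(k:ℝ)^2)^(2*k)) * ((al k)^(2*k))^2 = (64:ℝ)^k := by
    have : ((al k)^(2*k))^2 = (al k)^(4*k) := by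
      rw [← pow_mul]; congr 1; omega
    rw [this, ← const_id hk]
  calc (64:ℝ)^k * ((r:ℝ)+1)^2
      = ((16:ℝ)^(2*k) * (2*(k:ℝ)^2)^(2*k)) * (((al k)^(2*k))^2 * ((r:ℝ)+1)^2) := by
        rw [← hc]; ring
    _ ≤ ((16:ℝ)^(2*k) * (2*(k:ℝ)^2)^(2*k)) * ((msq k (r+1))^2 * ((r:ℝ)+1)^2) := by
        have hk0 := kR_pos hk
        exact mul_le_mul_of_nonneg_left
          (mul_le_mul_of_nonneg_right hb2 (by positivity)) (by positivity)

lemma X_ub {k r : ℕ} (hk : 1 ≤ k) (hr : 1 ≤ r) :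
    (16 * Wq k r)^(2*k) ≤ 16 * ((64:ℝ)^k * ((r:ℝ)+1)^2) := by
  rw [X_form hk]
  have hα := al_pos hk
  have hmlb := msq_ge hk (r+1) (by omega)
  have hmub : msq k (r+1) ≤ 4 * (al k)^(2*k) := by
    have h4 := msq_le hk (r+1) (by omega)
    have hle : (4 - 4/((r+1:ℕ):ℝ)) ≤ 4 := by
      have : (0:ℝ) < ((r+1:ℕ):ℝ) := by positivity
      have : (0:ℝ) ≤ 4/((r+1:ℕ):ℝ) := by positivity
      linarith
    calc msq k (r+1) ≤ (4 - 4/((r+1:ℕ):ℝ)) * (al k)^(2*k) := h4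
      _ ≤ 4 * (al k)^(2*k) := by
          apply mul_le_mul_of_nonneg_right hle (by positivity)
  have hb2 : (msq k (r+1))^2 ≤ 16 * ((al k)^(2*k))^2 := by
    have h0 : (0:ℝ) ≤ msq k (r+1) := le_trans (by positivity) hmlb
    nlinarith
  have hc : ((16:ℝ)^(2*k) * (2*(k:ℝ)^2)^(2*k)) * ((al k)^(2*k))^2 = (64:ℝ)^k := by
    have : ((al k)^(2*k))^2 = (al k)^(4*k) := by
      rw [← pow_mul]; congr 1; omega
    rw [this, ← const_id hk]
  calc ((16:ℝ)^(2*k) * (2*(k:ℝ)^2)^(2*k)) * ((msq k (r+1))^2 * ((r:ℝ)+1)^2)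
      ≤ ((16:ℝ)^(2*k) * (2*(k:ℝ)^2)^(2*k)) * ((16 * ((al k)^(2*k))^2) * ((r:ℝ)+1)^2) := by
        have hk0 := kR_pos hk
        exact mul_le_mul_of_nonneg_left
          (mul_le_mul_of_nonneg_right hb2 (by positivity)) (by positivity)
    _ = 16 * ((64:ℝ)^k * ((r:ℝ)+1)^2) := by rw [← hc]; ring

lemma del_pow_ub {k r : ℕ} (hk : 1 ≤ k) (hr : 1 ≤ r) :
    (del k r)^(2*k) ≤ ((64:ℝ)^k * ((r:ℝ)+1)^2)⁻¹ := by
  rw [del, inv_pow]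
  exact inv_anti₀ (by positivity) (X_lb hk hr)

lemma del_pow_lb {k r : ℕ} (hk : 1 ≤ k) (hr : 1 ≤ r) :
    (16 * ((64:ℝ)^k * ((r:ℝ)+1)^2))⁻¹ ≤ (del k r)^(2*k) := by
  rw [del, inv_pow]
  apply inv_anti₀ ?_ (X_ub hk hr)
  have := Wq_pos hk r
  positivity




lemma xpow_nonneg (k : ℕ) (x : ℝ) : 0 ≤ x^(2*k) := by
  rw [pow_mul]
  exact pow_nonneg (sq_nonneg x) k

lemma cont1 (k : ℕ) (q : Polynomial ℝ) :
    Continuous fun x : ℝ => (q.eval (x^(2*k)))^2 :=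
  ((q.continuous).comp (continuous_pow _)).pow 2

lemma cont2 (k : ℕ) (q : Polynomial ℝ) :
    Continuous fun x : ℝ => x^(2*k) * (q.eval (x^(2*k)))^2 :=
  (continuous_pow _).mul (cont1 k q)

lemma L_mul_self (k : ℕ) (q : Polynomial ℝ) :
    L k (q * q) = ∫ x in Icc (-1:ℝ) 1, (q.eval (x^(2*k)))^2 := by
  rw [L]
  congr 1
  funext x
  rw [eval_mul]
  ring

lemma L_mul_self_nonneg (k : ℕ) (q : Polynomial ℝ) : 0 ≤ L k (q * q) := by
  rw [L_mul_self]
  apply setIntegral_nonneg measurableSet_Icc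
  intro x _
  positivity

/-- Main per-polynomial inequality. -/
lemma piece {k r : ℕ} (hk : 1 ≤ k) (hr : 1 ≤ r) (σ : Polynomial ℝ) (hσ : σ.natDegree ≤ r) :
    (del k r)^(2*k) / 2 * L k (σ * σ)
      ≤ ∫ x in Icc (-1:ℝ) 1, x^(2*k) * (σ.eval (x^(2*k)))^2 := by
  have hδp := del_pos hk r
  have hδ8 := del_le_eighth hk r
  have hW := Wq_pos hk r
  obtain ⟨a, ha⟩ := exists_expansion hk r σ hσ
  set I := L k (σ * σ) with hIdef
  have hInn : 0 ≤ I := L_mul_self_nonneg k σ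
  have hI : I = ∑ j ∈ Finset.range (r+1), (a j)^2 * hh k j := by
    rw [hIdef, ha]; exact L_sq_decomp hk r a
  set S : ℝ := 2 * Wq k r * I with hSdef
  have hSnn : 0 ≤ S := by
    rw [hSdef]; positivity
  -- sup bound on the small interval
  have hsup : ∀ x ∈ Icc (-(del k r)) (del k r), (σ.eval (x^(2*k)))^2 ≤ S := by
    intro x hx
    obtain ⟨hx1, hx2⟩ := mem_Icc.mp hx
    have hτ0 : 0 ≤ x^(2*k) := xpow_nonneg k x
    have hτub : x^(2*k) ≤ (del k r)^(2*k) := by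
      rw [pow_mul, pow_mul]
      apply pow_le_pow_left₀ (sq_nonneg x) ?_ k
      nlinarith
    have hq : 2*(r:ℝ)^2*(x^(2*k)) ≤ 2*((64:ℝ)^k)⁻¹ := by
      have h1 : (del k r)^(2*k) ≤ ((64:ℝ)^k * ((r:ℝ)+1)^2)⁻¹ := del_pow_ub hk hr
      have hr1 : (1:ℝ) ≤ (r:ℝ) := by exact_mod_cast hr
      have h64 : (0:ℝ) < (64:ℝ)^k := by positivity
      have h2 : ((64:ℝ)^k * ((r:ℝ)+1)^2)⁻¹ = ((64:ℝ)^k)⁻¹ * (((r:ℝ)+1)^2)⁻¹ := by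
        rw [mul_inv]
      have h3 : 2*(r:ℝ)^2*(x^(2*k)) ≤ 2*(r:ℝ)^2 * (((64:ℝ)^k)⁻¹ * (((r:ℝ)+1)^2)⁻¹) := by
        apply mul_le_mul_of_nonneg_left ?_ (by positivity)
        rw [← h2]
        exact hτub.trans h1
      have h4 : 2*(r:ℝ)^2 * (((64:ℝ)^k)⁻¹ * (((r:ℝ)+1)^2)⁻¹) ≤ 2*((64:ℝ)^k)⁻¹ := by
        rw [show 2*(r:ℝ)^2 * (((64:ℝ)^k)⁻¹ * (((r:ℝ)+1)^2)⁻¹)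
            = 2*((64:ℝ)^k)⁻¹ * ((r:ℝ)^2 * (((r:ℝ)+1)^2)⁻¹) from by ring]
        have h5 : (r:ℝ)^2 * (((r:ℝ)+1)^2)⁻¹ ≤ 1 := by
          rw [← div_eq_mul_inv, div_le_one (by positivity)]
          nlinarith
        nlinarith [h5, inv_pos.mpr h64]
      linarith
    have hRb : ∀ j ∈ Finset.range (r+1), ((Rp k j).eval (x^(2*k)))^2 ≤ 2 := by
      intro j hj
      exact Rp_eval_sq_le_two hk hr (Nat.lt_succ_iff.mp (Finset.mem_range.mp hj)) hτ0 hq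
    have := cs_bound hk r a (x^(2*k)) hRb
    rw [← ha, ← hI] at this
    rw [hSdef, Wq]
    exact this
  -- pointwise inequality on [-1,1]
  have hpt : ∀ x ∈ Icc (-1:ℝ) 1,
      (del k r)^(2*k) * (σ.eval (x^(2*k)))^2
        ≤ x^(2*k) * (σ.eval (x^(2*k)))^2
          + Set.indicator (Icc (-(del k r)) (del k r)) (fun _ => (del k r)^(2*k) * S) x := by
    intro x _
    by_cases hmem : x ∈ Icc (-(del k r)) (del k r)
    · rw [Set.indicator_of_mem hmem]
      have h1 : 0 ≤ x^(2*k) * (σ.eval (x^(2*k)))^2 :=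
        mul_nonneg (xpow_nonneg k x) (sq_nonneg _)
      have h2 := hsup x hmem
      have h3 : (0:ℝ) ≤ (del k r)^(2*k) := by positivity
      nlinarith [mul_le_mul_of_nonneg_left h2 h3]
    · rw [Set.indicator_of_notMem hmem]
      have hxd : (del k r)^(2*k) ≤ x^(2*k) := by
        rw [pow_mul, pow_mul]
        apply pow_le_pow_left₀ (by positivity) ?_ k
        rw [mem_Icc, not_and_or] at hmem
        rcases hmem with h | h
        · push_neg at h; nlinarith
        · push_neg at h; nlinarith
      have := mul_le_mul_of_nonneg_right hxd (sq_nonneg (σ.eval (x^(2*k))))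
      linarith
  -- integrate
  have hind_meas : MeasurableSet (Icc (-(del k r)) (del k r)) := measurableSet_Icc
  have hInt1 : IntegrableOn (fun x : ℝ => (del k r)^(2*k) * (σ.eval (x^(2*k)))^2)
      (Icc (-1:ℝ) 1) := (continuous_const.mul (cont1 k σ)).integrableOn_Icc
  have hInt2 : IntegrableOn (fun x : ℝ => x^(2*k) * (σ.eval (x^(2*k)))^2)
      (Icc (-1:ℝ) 1) := (cont2 k σ).integrableOn_Icc
  have hIndInt : IntegrableOn
      (Set.indicator (Icc (-(del k r)) (del k r)) (fun _ => (del k r)^(2*k) * S))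
      (Icc (-1:ℝ) 1) := by
    rw [IntegrableOn, integrable_indicator_iff hind_meas]
    apply (integrableOn_const_iff (C := (del k r)^(2*k) * S)).mpr
    right
    calc (volume.restrict (Icc (-1:ℝ) 1)) (Icc (-(del k r)) (del k r))
        ≤ volume (Icc (-(del k r)) (del k r)) := Measure.restrict_le_self _
      _ < ⊤ := measure_Icc_lt_top
  have hmono := setIntegral_mono_on hInt1 (hInt2.add hIndInt) measurableSet_Icc hpt
  have hlhs : ∫ x in Icc (-1:ℝ) 1, (del k r)^(2*k) * (σ.eval (x^(2*k)))^2
      = (del k r)^(2*k) * I := by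
    rw [MeasureTheory.integral_const_mul, hIdef, L_mul_self]
  have hrhs : ∫ x in Icc (-1:ℝ) 1,
      (x^(2*k) * (σ.eval (x^(2*k)))^2
        + Set.indicator (Icc (-(del k r)) (del k r)) (fun _ => (del k r)^(2*k) * S) x)
      = (∫ x in Icc (-1:ℝ) 1, x^(2*k) * (σ.eval (x^(2*k)))^2)
        + (del k r)^(2*k) * S * (2 * del k r) := by
    rw [integral_add hInt2 hIndInt]
    congr 1
    rw [integral_indicator hind_meas]
    rw [setIntegral_const]
    rw [measureReal_def, Measure.restrict_apply hind_meas]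
    have hsub : Icc (-(del k r)) (del k r) ∩ Icc (-1:ℝ) 1
        = Icc (-(del k r)) (del k r) := by
      apply inter_eq_self_of_subset_left
      apply Icc_subset_Icc <;> linarith
    rw [hsub, Real.volume_Icc]
    rw [ENNReal.toReal_ofReal (by linarith)]
    rw [smul_eq_mul]
    ring
  simp only [Pi.add_apply] at hmono
  rw [hlhs, hrhs] at hmono
  -- arithmetic: δ^{2k} I ≤ J + δ^{2k}·S·2δ, and S·2δ = 4δW·I = I/4
  have hkey : (del k r)^(2*k) * S * (2 * del k r) ≤ (del k r)^(2*k) * I / 2 := by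
    have h1 : S * (2 * del k r) = 4 * del k r * Wq k r * I := by
      rw [hSdef]; ring
    have h2 : 4 * del k r * Wq k r = 1/4 := by
      rw [del]
      field_simp
      ring
    have h3 : (0:ℝ) ≤ (del k r)^(2*k) := by positivity
    calc (del k r)^(2*k) * S * (2 * del k r)
        = (del k r)^(2*k) * (4 * del k r * Wq k r * I) := by rw [← h1]; ring
      _ = (del k r)^(2*k) * (I/4) := by rw [h2]; ring
      _ ≤ (del k r)^(2*k) * I / 2 := by nlinarith
  calc (del k r)^(2*k) / 2 * I ≤ (del k r)^(2*k) * I - (del k r)^(2*k) * I / 2 := by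
        ring_nf
        nlinarith [mul_nonneg (pow_nonneg hδp.le (2*k)) hInn]
    _ ≤ ∫ x in Icc (-1:ℝ) 1, x^(2*k) * (σ.eval (x^(2*k)))^2 := by linarith

end PFM

open PFM in
/-- Theorem 3: for `f(x) = x^(2k)` on `K = [-1,1]` (with `f_min = 0`),
the push-forward bound satisfies `f_pfm^(r) = Ω(1/r²)`. -/
theorem pfm_bound_lower_x_pow (k : ℕ) (hk : 1 ≤ k) :
    ∃ c > (0 : ℝ), ∃ r₀ : ℕ, ∀ r : ℕ, r₀ ≤ r →
      c / (r : ℝ) ^ 2 ≤ pfmBound1 (X ^ (2 * k)) r := by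
  have h64 : (0:ℝ) < (64:ℝ)^k := by positivity
  refine ⟨(128*(64:ℝ)^k)⁻¹, by positivity, 1, fun r hr => ?_⟩
  have hr1 : (1:ℝ) ≤ (r:ℝ) := by exact_mod_cast hr
  have hfeval : ∀ x : ℝ, (X^(2*k) : Polynomial ℝ).eval x = x^(2*k) := fun x => by simp
  rw [pfmBound1]
  apply le_csInf
  · -- nonempty
    have hs2 : ((Real.sqrt 2)⁻¹)^2 = 1/2 := by
      rw [inv_pow, Real.sq_sqrt (by norm_num : (2:ℝ) ≥ 0)]
      norm_num
    refine ⟨_, (C ((Real.sqrt 2)⁻¹))^2, ⟨1, fun _ => C ((Real.sqrt 2)⁻¹),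
      fun i => by simp, by rw [Fin.sum_univ_one]⟩, ?_, rfl⟩
    have : ∀ x : ℝ, ((C ((Real.sqrt 2)⁻¹))^2 : Polynomial ℝ).eval
        ((X^(2*k) : Polynomial ℝ).eval x) = 1/2 := by
      intro x
      rw [eval_pow, eval_C, hs2]
    rw [show (fun x : ℝ => ((C ((Real.sqrt 2)⁻¹))^2 : Polynomial ℝ).eval
        ((X^(2*k) : Polynomial ℝ).eval x)) = fun _ : ℝ => (1/2:ℝ) from funext this]
    rw [setIntegral_const, measureReal_def, Real.volume_Icc]
    rw [ENNReal.toReal_ofReal (by norm_num : (1:ℝ) - (-1) ≥ 0)]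
    norm_num
  · intro b hb
    obtain ⟨s, hsos, hint, hval⟩ := hb
    obtain ⟨m, p, hdeg, hs⟩ := hsos
    have hseval : ∀ t : ℝ, s.eval t = ∑ i : Fin m, ((p i).eval t)^2 := by
      intro t
      rw [hs, eval_finset_sum]
      exact Finset.sum_congr rfl fun i _ => by rw [eval_pow]
    -- constraint sum
    have hIsum : ∑ i : Fin m, L k ((p i) * (p i)) = 1 := by
      calc ∑ i : Fin m, L k ((p i) * (p i))
          = ∑ i : Fin m, ∫ x in Icc (-1:ℝ) 1, ((p i).eval (x^(2*k)))^2 :=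
            Finset.sum_congr rfl fun i _ => L_mul_self k (p i)
        _ = ∫ x in Icc (-1:ℝ) 1, ∑ i : Fin m, ((p i).eval (x^(2*k)))^2 :=
            (integral_finset_sum _ (fun i _ => (cont1 k (p i)).integrableOn_Icc)).symm
        _ = ∫ x in Icc (-1:ℝ) 1, s.eval ((X^(2*k) : Polynomial ℝ).eval x) := by
            congr 1
            funext x
            rw [hfeval, hseval]
        _ = 1 := hint
    have hvsum : b = ∑ i : Fin m,
        ∫ x in Icc (-1:ℝ) 1, x^(2*k) * ((p i).eval (x^(2*k)))^2 := by
      rw [hval]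
      calc ∫ x in Icc (-1:ℝ) 1,
              (X^(2*k):Polynomial ℝ).eval x * s.eval ((X^(2*k):Polynomial ℝ).eval x)
          = ∫ x in Icc (-1:ℝ) 1, ∑ i : Fin m, x^(2*k) * ((p i).eval (x^(2*k)))^2 := by
            congr 1
            funext x
            rw [hfeval, hseval, Finset.mul_sum]
        _ = ∑ i : Fin m, ∫ x in Icc (-1:ℝ) 1, x^(2*k) * ((p i).eval (x^(2*k)))^2 :=
            integral_finset_sum _ (fun i _ => (cont2 k (p i)).integrableOn_Icc)
    have hfirst : (128*(64:ℝ)^k)⁻¹ / (r:ℝ)^2 ≤ (del k r)^(2*k)/2 := by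
      have hδlb := del_pow_lb hk hr
      have e1 : (128*(64:ℝ)^k)⁻¹ / (r:ℝ)^2 = (128*(64:ℝ)^k*(r:ℝ)^2)⁻¹ := by
        rw [div_eq_mul_inv, ← mul_inv]
      have e2 : (32*((64:ℝ)^k*((r:ℝ)+1)^2))⁻¹ ≤ (del k r)^(2*k)/2 := by
        rw [show (32*((64:ℝ)^k*((r:ℝ)+1)^2)) = (16*((64:ℝ)^k*((r:ℝ)+1)^2))*2 from by ring,
          mul_inv]
        rw [div_eq_mul_inv]
        apply mul_le_mul_of_nonneg_right hδlb (by norm_num)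
      have e3 : (128*(64:ℝ)^k*(r:ℝ)^2)⁻¹ ≤ (32*((64:ℝ)^k*((r:ℝ)+1)^2))⁻¹ := by
        apply inv_anti₀ (by positivity)
        have h4 : ((r:ℝ)+1)^2 ≤ 4*(r:ℝ)^2 := by nlinarith
        nlinarith [mul_le_mul_of_nonneg_left h4 h64.le]
      rw [e1]
      exact e3.trans e2
    calc (128*(64:ℝ)^k)⁻¹ / (r:ℝ)^2 ≤ (del k r)^(2*k)/2 := hfirst
      _ = (del k r)^(2*k)/2 * (∑ i : Fin m, L k ((p i) * (p i))) := by
          rw [hIsum, mul_one]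
      _ = ∑ i : Fin m, (del k r)^(2*k)/2 * L k ((p i) * (p i)) := by
          rw [Finset.mul_sum]
      _ ≤ ∑ i : Fin m, ∫ x in Icc (-1:ℝ) 1, x^(2*k) * ((p i).eval (x^(2*k)))^2 :=
          Finset.sum_le_sum fun i _ => piece hk hr (p i) (hdeg i)
      _ = b := hvsum.symm
end
end

section
/- For every scalar h ∈ (0, 1) and every integer r ≥ 1 there exists a univariate real polynomial v that is a finite sum of squares of polynomials of degree at most 2r (so deg v ≤ 4r) satisfying: v(0) = 1; 0 ≤ v(t) ≤ 1 for all t ∈ [0, 1]; v(t) ≤ 4·exp(−(1/2)·r·√h) for all t ∈ [h, 1]; and moreover v(t) ≥ 1 − 32·r²·t (in particular v(t) ≥ 1/2) for all t ∈ [0, 1/(64r²)]. -/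
set_option maxHeartbeats 4000000

open MeasureTheory Polynomial Set

noncomputable section

namespace NeedleAux

open Polynomial.Chebyshev Real

lemma T_real_cosh (n : ℤ) (u : ℝ) :
    (T ℝ n).eval (Real.cosh u) = Real.cosh (n * u) := by
  induction n using Polynomial.Chebyshev.induct with
  | zero => simp
  | one => simp
  | add_two n ih1 ih2 =>
    simp only [T_add_two, eval_sub, eval_mul, eval_X, eval_ofNat, ih1, ih2]
    push_cast
    have e1 : ((n : ℝ) + 2) * u = ((n : ℝ) + 1) * u + u := by ring
    have e2 : (n : ℝ) * u = ((n : ℝ) + 1) * u - u := by ring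
    rw [e1, e2, Real.cosh_add, Real.cosh_sub]
    ring
  | neg_add_one n ih1 ih2 =>
    have key := T_sub_one ℝ (-n)
    rw [key]
    simp only [eval_sub, eval_mul, eval_X, eval_ofNat, ih1, ih2]
    push_cast
    have e1 : (-(n : ℝ) - 1) * u = -(n : ℝ) * u - u := by ring
    have e2 : (-(n : ℝ) + 1) * u = -(n : ℝ) * u + u := by ring
    rw [e1, e2, Real.cosh_add, Real.cosh_sub]
    ring

lemma U_real_cosh (n : ℤ) (u : ℝ) :
    (U ℝ n).eval (Real.cosh u) * Real.sinh u = Real.sinh ((n + 1) * u) := by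
  induction n using Polynomial.Chebyshev.induct with
  | zero => simp
  | one =>
    simp only [U_one, eval_mul, eval_ofNat, eval_X]
    push_cast
    rw [show ((1 : ℝ) + 1) * u = 2 * u by ring, Real.sinh_two_mul]
    ring
  | add_two n ih1 ih2 =>
    simp only [U_add_two, eval_sub, eval_mul, eval_X, eval_ofNat, sub_mul, mul_assoc, ih1, ih2]
    push_cast
    have e1 : ((n : ℝ) + 2 + 1) * u = ((n : ℝ) + 1 + 1) * u + u := by ring
    have e2 : ((n : ℝ) + 1) * u = ((n : ℝ) + 1 + 1) * u - u := by ring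
    rw [e1, e2, Real.sinh_add, Real.sinh_sub]
    ring
  | neg_add_one n ih1 ih2 =>
    have key := U_sub_one ℝ (-n)
    rw [key]
    simp only [eval_sub, eval_mul, eval_X, eval_ofNat, sub_mul, mul_assoc, ih1, ih2]
    push_cast
    have e1 : (-(n : ℝ) - 1 + 1) * u = (-(n : ℝ) + 1) * u - u := by ring
    have e2 : (-(n : ℝ) + 1 + 1) * u = (-(n : ℝ) + 1) * u + u := by ring
    rw [e1, e2, Real.sinh_add, Real.sinh_sub]
    ring

lemma natDegree_T_le (n : ℕ) : (T ℝ (n : ℤ)).natDegree ≤ n := by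
  induction n using Nat.twoStepInduction with
  | zero => simp [T_zero]
  | one => simp [T_one]
  | more n ih1 ih2 =>
    have e : ((n + 2 : ℕ) : ℤ) = (n : ℤ) + 2 := by push_cast; ring
    rw [e, T_add_two]
    refine le_trans (natDegree_sub_le _ _) (max_le ?_ ?_)
    · refine le_trans (natDegree_mul_le) ?_
      have h2 : (2 * X : ℝ[X]).natDegree ≤ 1 := by
        refine le_trans natDegree_mul_le ?_
        simp
      have h3 : (T ℝ ((n : ℤ) + 1)).natDegree ≤ n + 1 := by
        have := ih2
        rwa [show ((n + 1 : ℕ) : ℤ) = (n : ℤ) + 1 by push_cast; ring] at this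
      omega
    · omega

lemma exists_cosh_eq {y : ℝ} (hy : 1 ≤ y) : ∃ u : ℝ, 0 ≤ u ∧ Real.cosh u = y := by
  have hy2 : 0 ≤ y ^ 2 - 1 := by nlinarith
  set s := Real.sqrt (y ^ 2 - 1) with hs
  have hs0 : 0 ≤ s := Real.sqrt_nonneg _
  have hssq : s ^ 2 = y ^ 2 - 1 := Real.sq_sqrt hy2
  have hz1 : 1 ≤ y + s := by linarith
  have hz0 : 0 < y + s := by linarith
  refine ⟨Real.log (y + s), Real.log_nonneg hz1, ?_⟩
  rw [Real.cosh_eq, Real.exp_log hz0, ← Real.log_inv, Real.exp_log (by positivity)]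
  have hmul : (y + s) * (y - s) = 1 := by nlinarith [hssq]
  have hinv : (y + s)⁻¹ = y - s := inv_eq_of_mul_eq_one_right hmul
  rw [hinv]
  ring

lemma sinh_nat_mul_le (k : ℕ) {u : ℝ} (hu : 0 ≤ u) :
    Real.sinh (k * u) ≤ k * Real.sinh u * Real.cosh (k * u) := by
  induction k with
  | zero => simp
  | succ k ih =>
    have hku : ((k + 1 : ℕ) : ℝ) * u = (k : ℝ) * u + u := by push_cast; ring
    rw [hku, Real.sinh_add]
    have hc : Real.cosh ((k : ℝ) * u + u) = Real.cosh ((k : ℝ) * u) * Real.cosh u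
        + Real.sinh ((k : ℝ) * u) * Real.sinh u := Real.cosh_add _ _
    have h1 : Real.sinh ((k : ℝ) * u) * Real.sinh u ≥ 0 :=
      mul_nonneg (Real.sinh_nonneg_iff.2 (by positivity)) (Real.sinh_nonneg_iff.2 hu)
    have h2 : Real.cosh ((k : ℝ) * u) ≤ Real.cosh ((k : ℝ) * u + u) := by
      rw [Real.cosh_le_cosh]
      rw [abs_of_nonneg (by positivity), abs_of_nonneg (by positivity)]
      linarith
    have h3 : Real.cosh ((k : ℝ) * u) * Real.cosh u ≤ Real.cosh ((k : ℝ) * u + u) := by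
      rw [hc]; linarith
    have h4 : 0 ≤ Real.sinh u := Real.sinh_nonneg_iff.2 hu
    have h5 : 0 < Real.cosh u := Real.cosh_pos u
    have h6 : 0 < Real.cosh ((k : ℝ) * u) := Real.cosh_pos _
    have h7 : 0 ≤ Real.sinh ((k : ℝ) * u) := Real.sinh_nonneg_iff.2 (by positivity)
    push_cast
    calc Real.sinh ((k:ℝ)*u) * Real.cosh u + Real.cosh ((k:ℝ)*u) * Real.sinh u
        ≤ ((k:ℝ) * Real.sinh u * Real.cosh ((k:ℝ)*u)) * Real.cosh u
          + Real.cosh ((k:ℝ)*u + u) * Real.sinh u := by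
          gcongr
      _ = (k:ℝ) * Real.sinh u * (Real.cosh ((k:ℝ)*u) * Real.cosh u)
          + Real.cosh ((k:ℝ)*u + u) * Real.sinh u := by ring
      _ ≤ (k:ℝ) * Real.sinh u * Real.cosh ((k:ℝ)*u + u)
          + Real.cosh ((k:ℝ)*u + u) * Real.sinh u := by
          gcongr
      _ = ((k:ℝ) + 1) * Real.sinh u * Real.cosh ((k:ℝ)*u + u) := by ring

lemma abs_sin_nat_mul_le (k : ℕ) (θ : ℝ) : |Real.sin (k * θ)| ≤ k * |Real.sin θ| := by
  induction k with
  | zero => simp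
  | succ k ih =>
    have hku : ((k + 1 : ℕ) : ℝ) * θ = (k : ℝ) * θ + θ := by push_cast; ring
    rw [hku, Real.sin_add]
    calc |Real.sin ((k:ℝ)*θ) * Real.cos θ + Real.cos ((k:ℝ)*θ) * Real.sin θ|
        ≤ |Real.sin ((k:ℝ)*θ) * Real.cos θ| + |Real.cos ((k:ℝ)*θ) * Real.sin θ| := abs_add_le _ _
      _ ≤ |Real.sin ((k:ℝ)*θ)| * 1 + 1 * |Real.sin θ| := by
          rw [abs_mul, abs_mul]
          have a1 := Real.abs_cos_le_one θ
          have a2 := Real.abs_cos_le_one ((k:ℝ)*θ)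
          have b1 := abs_nonneg (Real.sin ((k:ℝ)*θ))
          have b2 := abs_nonneg (Real.sin θ)
          nlinarith
      _ ≤ (k : ℝ) * |Real.sin θ| + 1 * |Real.sin θ| := by
          rw [mul_one]; gcongr
      _ = ((k + 1 : ℕ) : ℝ) * |Real.sin θ| := by push_cast; ring

lemma sinh_le_two_mul {z : ℝ} (h0 : 0 ≤ z) (h1 : z ≤ 1 / 2) : Real.sinh z ≤ 2 * z := by
  have he1 : 1 - z ≤ Real.exp (-z) := by
    have := Real.add_one_le_exp (-z); linarith
  have he2 : Real.exp z ≤ 1 + 2 * z := by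
    have h3 : Real.exp z * (1 - z) ≤ 1 := by
      have := Real.add_one_le_exp (-z)
      calc Real.exp z * (1 - z) ≤ Real.exp z * Real.exp (-z) := by
            have := Real.exp_pos z
            nlinarith
        _ = 1 := by rw [← Real.exp_add]; simp
    nlinarith [Real.exp_pos z]
  rw [Real.sinh_eq]
  linarith

end NeedleAux

/-- The `½`-needle polynomial `v_r^h ∈ Σ[t]_{2r}` (Lemma 1, after Kroó),
together with the lower estimate of [23, Corollary 4]. -/
theorem needle_polynomial_exists (h : ℝ) (hh0 : 0 < h) (hh1 : h < 1)
    (r : ℕ) (hr : 1 ≤ r) :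
    ∃ v : Polynomial ℝ, IsSOSUpTo v (2 * r) ∧
      v.eval 0 = 1 ∧
      (∀ t ∈ Icc (0 : ℝ) 1, 0 ≤ v.eval t ∧ v.eval t ≤ 1) ∧
      (∀ t ∈ Icc h 1, v.eval t ≤ 4 * Real.exp (-(1 / 2) * r * Real.sqrt h)) ∧
      (∀ t ∈ Icc (0 : ℝ) (1 / (64 * (r : ℝ) ^ 2)),
        1 - 32 * (r : ℝ) ^ 2 * t ≤ v.eval t ∧ 1 / 2 ≤ v.eval t) := by
  classical
  have hr1 : (1 : ℝ) ≤ (r : ℝ) := by exact_mod_cast hr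
  have hrpos : (0 : ℝ) < (r : ℝ) := by linarith
  set h' : ℝ := min h (7/8) with hh'def
  have hh'0 : 0 < h' := lt_min hh0 (by norm_num)
  have hh'78 : h' ≤ 7/8 := min_le_right _ _
  have hh'h : h' ≤ h := min_le_left _ _
  set d : ℝ := 1 - h' with hddef
  have hd8 : 1/8 ≤ d := by rw [hddef]; linarith
  have hd0 : 0 < d := by linarith
  set y0 : ℝ := (1 + h') / d with hy0def
  have hy0_ge : 1 + 2 * h' ≤ y0 := by
    rw [hy0def, le_div_iff₀ hd0, hddef]; nlinarith
  have hy0_gt1 : 1 < y0 := by linarith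
  obtain ⟨x, hx0, hxcosh⟩ := NeedleAux.exists_cosh_eq hy0_gt1.le
  have hxpos : 0 < x := by
    rcases hx0.lt_or_eq with hx | hx
    · exact hx
    · exfalso; rw [← hx] at hxcosh; rw [Real.cosh_zero] at hxcosh; linarith
  set Cb : ℝ := Real.cosh ((r : ℝ) * x) with hCbdef
  have hCb1 : 1 ≤ Cb := Real.one_le_cosh _
  have hCb0 : 0 < Cb := by linarith
  have hCbne : Cb ≠ 0 := ne_of_gt hCb0
  set q : ℝ[X] := Polynomial.C (-2/d) * Polynomial.X + Polynomial.C y0 with hqdef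
  set p : ℝ[X] := Polynomial.C Cb⁻¹ * ((Polynomial.Chebyshev.T ℝ (r : ℤ)).comp q) with hpdef
  set g : ℝ → ℝ := fun t => (Polynomial.Chebyshev.T ℝ (r : ℤ)).eval (-2/d * t + y0) with hgdef
  have heval : ∀ t : ℝ, (p ^ 2).eval t = (Cb⁻¹ * g t) ^ 2 := by
    intro t
    simp [hpdef, hqdef, hgdef, Polynomial.eval_comp]
  -- value of T at rescaled cosh points
  have hTcosh : ∀ u : ℝ, (Polynomial.Chebyshev.T ℝ (r : ℤ)).eval (Real.cosh u)
      = Real.cosh ((r : ℝ) * u) := by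
    intro u
    rw [NeedleAux.T_real_cosh]
    norm_num
  have hg0 : g 0 = Cb := by
    rw [hgdef]
    simp only []
    rw [show -2/d * 0 + y0 = Real.cosh x by rw [hxcosh]; ring, hTcosh]
  -- T on [1, y0]
  have hg_hi : ∀ t : ℝ, 0 ≤ t → t ≤ h' → 1 ≤ g t ∧ g t ≤ Cb := by
    intro t ht0 hth
    have hy1 : (1 : ℝ) ≤ -2/d * t + y0 := by
      rw [hy0def, show -2/d * t + (1 + h')/d = (1 + h' - 2*t)/d by field_simp; ring,
        le_div_iff₀ hd0, hddef]
      nlinarith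
    have hyY0 : -2/d * t + y0 ≤ y0 := by
      have h1 : 0 ≤ 2/d * t := by positivity
      have h2 : -2/d * t = -(2/d * t) := by ring
      linarith
    obtain ⟨u, hu0, hucosh⟩ := NeedleAux.exists_cosh_eq hy1
    have hux : u ≤ x := by
      have hcc : Real.cosh u ≤ Real.cosh x := by rw [hucosh, hxcosh]; exact hyY0
      rwa [Real.cosh_le_cosh, abs_of_nonneg hu0, abs_of_nonneg hx0] at hcc
    have hgt : g t = Real.cosh ((r : ℝ) * u) := by
      rw [hgdef]; simp only []; rw [← hucosh, hTcosh]
    constructor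
    · rw [hgt]; exact Real.one_le_cosh _
    · rw [hgt, hCbdef, Real.cosh_le_cosh]
      rw [abs_of_nonneg (by positivity), abs_of_nonneg (by positivity)]
      have := hrpos
      nlinarith
  -- T on [-1, 1]
  have hT_mid : ∀ y : ℝ, -1 ≤ y → y ≤ 1 → |(Polynomial.Chebyshev.T ℝ (r : ℤ)).eval y| ≤ 1 := by
    intro y h1 h2
    rw [← Real.cos_arccos h1 h2, Polynomial.Chebyshev.T_real_cos]
    exact Real.abs_cos_le_one _
  -- global bound |g t| ≤ Cb on [0,1]
  have hg_abs : ∀ t : ℝ, 0 ≤ t → t ≤ 1 → |g t| ≤ Cb := by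
    intro t ht0 ht1
    rcases le_total t h' with hth | hth
    · obtain ⟨ha, hb⟩ := hg_hi t ht0 hth
      rw [abs_of_nonneg (by linarith)]; exact hb
    · have hya : (-1 : ℝ) ≤ -2/d * t + y0 := by
        rw [hy0def, show -2/d * t + (1 + h')/d = (1 + h' - 2*t)/d by field_simp; ring,
          le_div_iff₀ hd0, hddef]
        nlinarith
      have hyb : -2/d * t + y0 ≤ 1 := by
        rw [hy0def, show -2/d * t + (1 + h')/d = (1 + h' - 2*t)/d by field_simp; ring,
          div_le_one hd0, hddef]
        nlinarith
      exact le_trans (hT_mid _ hya hyb) hCb1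
  -- mid-range bound |g t| ≤ 1 for t ∈ [h', 1]
  have hg_mid : ∀ t : ℝ, h' ≤ t → t ≤ 1 → |g t| ≤ 1 := by
    intro t hth ht1
    have hya : (-1 : ℝ) ≤ -2/d * t + y0 := by
      rw [hy0def, show -2/d * t + (1 + h')/d = (1 + h' - 2*t)/d by field_simp; ring,
        le_div_iff₀ hd0, hddef]
      nlinarith
    have hyb : -2/d * t + y0 ≤ 1 := by
      rw [hy0def, show -2/d * t + (1 + h')/d = (1 + h' - 2*t)/d by field_simp; ring,
        div_le_one hd0, hddef]
      nlinarith
    exact hT_mid _ hya hyb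
  refine ⟨p ^ 2, ?_, ?_, ?_, ?_, ?_⟩
  · -- SOS of degree ≤ 2r
    refine ⟨1, fun _ => p, ?_, by simp⟩
    intro i
    show p.natDegree ≤ 2 * r
    have h1 : p.natDegree ≤ 0 + ((Polynomial.Chebyshev.T ℝ (r : ℤ)).comp q).natDegree := by
      rw [hpdef]
      refine le_trans (Polynomial.natDegree_mul_le) ?_
      gcongr
      exact le_of_eq (Polynomial.natDegree_C _)
    have h2 : ((Polynomial.Chebyshev.T ℝ (r : ℤ)).comp q).natDegree ≤ r * 1 := by
      refine le_trans (Polynomial.natDegree_comp_le) ?_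
      gcongr
      · exact NeedleAux.natDegree_T_le r
      · rw [hqdef]
        refine le_trans (Polynomial.natDegree_add_le _ _) ?_
        simp only [Polynomial.natDegree_C]
        refine max_le (le_trans (Polynomial.natDegree_mul_le) ?_) (by norm_num)
        simp [Polynomial.natDegree_C, Polynomial.natDegree_X]
    omega
  · -- value 1 at 0
    rw [heval 0, hg0, inv_mul_cancel₀ hCbne, one_pow]
  · -- between 0 and 1 on [0,1]
    intro t ht
    obtain ⟨ht0, ht1⟩ := ht
    rw [heval t]
    constructor
    · positivity
    · have habs : |Cb⁻¹ * g t| ≤ 1 := by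
        rw [abs_mul, abs_of_nonneg (by positivity : (0:ℝ) ≤ Cb⁻¹)]
        have := hg_abs t ht0 ht1
        rw [inv_mul_le_iff₀ hCb0, mul_one]
        exact this
      have h1 := abs_le.mp habs
      nlinarith [h1.1, h1.2]
  · -- exponential decay on [h, 1]
    intro t ht
    obtain ⟨hth, ht1⟩ := ht
    rw [heval t]
    have hmid : |g t| ≤ 1 := hg_mid t (le_trans hh'h hth) ht1
    have hCbexp : Real.exp ((r : ℝ) * x) / 2 ≤ Cb := by
      rw [hCbdef, Real.cosh_eq]
      have := (Real.exp_pos (-((r : ℝ) * x))).le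
      linarith
    have hsq : (Cb⁻¹ * g t) ^ 2 ≤ (Cb⁻¹) ^ 2 := by
      have h1 := abs_le.mp hmid
      have hg2 : (g t) ^ 2 ≤ 1 := by nlinarith [h1.1, h1.2]
      calc (Cb⁻¹ * g t)^2 = (Cb⁻¹)^2 * (g t)^2 := by ring
        _ ≤ (Cb⁻¹)^2 * 1 := by
            have h2 : (0:ℝ) ≤ (Cb⁻¹)^2 := by positivity
            nlinarith
        _ = (Cb⁻¹)^2 := mul_one _
    have hinv : (Cb⁻¹) ^ 2 ≤ 4 * Real.exp (-(2 * (r : ℝ) * x)) := by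
      have h1 : Real.exp ((r : ℝ) * x) / 2 > 0 := by positivity
      have h2 : Cb⁻¹ ≤ (Real.exp ((r : ℝ) * x) / 2)⁻¹ := by
        exact inv_anti₀ h1 hCbexp
      have h3 : (Real.exp ((r : ℝ) * x) / 2)⁻¹ = 2 * Real.exp (-((r : ℝ) * x)) := by
        rw [Real.exp_neg]
        field_simp
      have h4 : (0:ℝ) < Cb⁻¹ := by positivity
      have h5 : Cb⁻¹ ≤ 2 * Real.exp (-((r : ℝ) * x)) := by rw [← h3]; exact h2
      have h6 : (Cb⁻¹)^2 ≤ (2 * Real.exp (-((r : ℝ) * x)))^2 := by nlinarith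
      have h7 : (2 * Real.exp (-((r : ℝ) * x)))^2 = 4 * Real.exp (-(2 * (r : ℝ) * x)) := by
        rw [show -(2 * (r:ℝ) * x) = -((r:ℝ)*x) + -((r:ℝ)*x) by ring, Real.exp_add]
        ring
      rw [← h7]; exact h6
    have hx4 : Real.sqrt h / 4 ≤ x := by
      have hsh1 : Real.sqrt h ≤ 1 := by
        rw [show (1:ℝ) = Real.sqrt 1 by simp]
        exact Real.sqrt_le_sqrt hh1.le
      have hsh0 : 0 ≤ Real.sqrt h := Real.sqrt_nonneg _
      have hz : Real.sinh (Real.sqrt h / 8) ≤ 2 * (Real.sqrt h / 8) :=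
        NeedleAux.sinh_le_two_mul (by positivity) (by linarith)
      have hzsq : (Real.sqrt h / 8) ^ 2 = h / 64 := by
        rw [div_pow, Real.sq_sqrt hh0.le]; norm_num
      have hcosh2 : Real.cosh (Real.sqrt h / 4) = 2 * Real.sinh (Real.sqrt h / 8) ^ 2 + 1 := by
        rw [show Real.sqrt h / 4 = 2 * (Real.sqrt h / 8) by ring, Real.cosh_two_mul,
          Real.cosh_sq]
        ring
      have hch : Real.cosh (Real.sqrt h / 4) ≤ 1 + h / 8 := by
        rw [hcosh2]
        have hs0 : 0 ≤ Real.sinh (Real.sqrt h / 8) := Real.sinh_nonneg_iff.2 (by positivity)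
        nlinarith [hzsq]
      have hh8 : h / 8 ≤ 2 * h' := by
        rcases le_total h (7/8) with hc | hc
        · rw [hh'def, min_eq_left hc]; linarith
        · rw [hh'def, min_eq_right hc]; linarith
      have hfin : Real.cosh (Real.sqrt h / 4) ≤ Real.cosh x := by
        rw [hxcosh]; linarith
      rwa [Real.cosh_le_cosh, abs_of_nonneg (by positivity), abs_of_nonneg hx0] at hfin
    have hexp : 4 * Real.exp (-(2 * (r : ℝ) * x)) ≤ 4 * Real.exp (-(1/2) * r * Real.sqrt h) := by
      have h9 : -(2 * (r:ℝ) * x) ≤ -(1/2) * r * Real.sqrt h := by nlinarith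
      have h10 := Real.exp_le_exp.2 h9
      linarith
    linarith
  · -- lower bound near 0
    intro t ht
    obtain ⟨ht0, htm⟩ := ht
    have hrr : (1:ℝ) ≤ (r:ℝ)^2 := by nlinarith
    have htsmall : t ≤ 1/64 := by
      have h64 : 1 / (64 * (r:ℝ)^2) ≤ 1/64 := by
        rw [div_le_div_iff₀ (by positivity) (by norm_num)]
        nlinarith
      linarith
    have ht16 : 16 * (r:ℝ)^2 * t ≤ 1/4 := by
      rw [le_div_iff₀ (by positivity : (0:ℝ) < 64 * (r:ℝ)^2)] at htm
      nlinarith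
    -- derivative bound for T on [-1, y0]
    obtain ⟨P, hP⟩ : ∃ P : ℝ[X], Polynomial.Chebyshev.U ℝ ((r : ℤ) - 1) = P := ⟨_, rfl⟩
    have hU : ∀ y ∈ Icc (-1 : ℝ) y0, |P.eval y|
        ≤ (r : ℝ) * Cb := by
      have hSclosed : IsClosed {y : ℝ |
          |P.eval y| ≤ (r : ℝ) * Cb} := by
        have : Continuous fun y : ℝ => |P.eval y| :=
          (Polynomial.continuous _).abs
        exact isClosed_le this continuous_const
      have hS1 : Ioo (-1 : ℝ) 1 ⊆ {y : ℝ |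
          |P.eval y| ≤ (r : ℝ) * Cb} := by
        intro y hy
        obtain ⟨hy1, hy2⟩ := hy
        set θ := Real.arccos y with hθdef
        have hθ0 : 0 < θ := Real.arccos_pos.2 hy2
        have hθπ : θ < Real.pi := by
          rcases lt_or_eq_of_le (Real.arccos_le_pi y) with hc | hc
          · exact hc
          · exfalso
            have := (Real.arccos_eq_pi).1 hc
            linarith
        have hsinθ : 0 < Real.sin θ := Real.sin_pos_of_pos_of_lt_pi hθ0 hθπ
        have hkey := Polynomial.Chebyshev.U_real_cos θ ((r : ℤ) - 1)
        rw [hP] at hkey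
        push_cast at hkey
        rw [show ((r:ℝ) - 1 + 1) = (r:ℝ) by ring] at hkey
        rw [Real.cos_arccos hy1.le hy2.le] at hkey
        have hsin : |Real.sin ((r : ℝ) * θ)| ≤ (r : ℝ) * |Real.sin θ| := by
          exact_mod_cast NeedleAux.abs_sin_nat_mul_le r θ
        have habs : |P.eval y| * Real.sin θ
            ≤ (r : ℝ) * Real.sin θ := by
          calc |P.eval y| * Real.sin θ
              = |P.eval y * Real.sin θ| := by
                rw [abs_mul, abs_of_nonneg hsinθ.le]
            _ = |Real.sin ((r : ℝ) * θ)| := by rw [hkey]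
            _ ≤ (r : ℝ) * |Real.sin θ| := hsin
            _ = (r : ℝ) * Real.sin θ := by rw [abs_of_nonneg hsinθ.le]
        have h1 : |P.eval y| ≤ (r : ℝ) := by
          exact le_of_mul_le_mul_right (by linarith [habs]) hsinθ
        have : (r : ℝ) ≤ (r : ℝ) * Cb := by nlinarith
        exact le_trans h1 this
      have hS2 : Ioo (1 : ℝ) y0 ⊆ {y : ℝ |
          |P.eval y| ≤ (r : ℝ) * Cb} := by
        intro y hy
        obtain ⟨hy1, hy2⟩ := hy
        obtain ⟨u, hu0, hucosh⟩ := NeedleAux.exists_cosh_eq hy1.le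
        have hupos : 0 < u := by
          rcases hu0.lt_or_eq with hc | hc
          · exact hc
          · exfalso; rw [← hc, Real.cosh_zero] at hucosh; linarith
        have hsinh : 0 < Real.sinh u := Real.sinh_pos_iff.2 hupos
        have hux : u ≤ x := by
          have hcc : Real.cosh u ≤ Real.cosh x := by rw [hucosh, hxcosh]; linarith
          rwa [Real.cosh_le_cosh, abs_of_nonneg hu0, abs_of_nonneg hx0] at hcc
        have hkey := NeedleAux.U_real_cosh ((r : ℤ) - 1) u
        rw [hP] at hkey
        push_cast at hkey
        rw [show ((r:ℝ) - 1 + 1) = (r:ℝ) by ring] at hkey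
        rw [hucosh] at hkey
        have hb : Real.sinh ((r : ℝ) * u) ≤ (r : ℝ) * Real.sinh u
            * Real.cosh ((r : ℝ) * u) := by
          exact_mod_cast NeedleAux.sinh_nat_mul_le r hu0
        have hcc : Real.cosh ((r : ℝ) * u) ≤ Cb := by
          rw [hCbdef, Real.cosh_le_cosh]
          rw [abs_of_nonneg (by positivity), abs_of_nonneg (by positivity)]
          push_cast
          nlinarith
        have hnneg : 0 ≤ P.eval y := by
          have hs : 0 ≤ Real.sinh ((r : ℝ) * u) := by
            apply Real.sinh_nonneg_iff.2; positivity
          nlinarith [hkey]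
        rw [Set.mem_setOf_eq, abs_of_nonneg hnneg]
        have : P.eval y * Real.sinh u
            ≤ ((r : ℝ) * Cb) * Real.sinh u := by
          rw [hkey]
          calc Real.sinh ((r : ℝ) * u)
              ≤ (r : ℝ) * Real.sinh u * Real.cosh ((r : ℝ) * u) := hb
            _ ≤ ((r : ℝ) * Cb) * Real.sinh u := by
                nlinarith [mul_le_mul_of_nonneg_left hcc (mul_nonneg hrpos.le hsinh.le)]
        exact le_of_mul_le_mul_right this hsinh
      intro y hy
      have hIcc1 : Icc (-1 : ℝ) 1 ⊆ {y : ℝ |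
          |P.eval y| ≤ (r : ℝ) * Cb} := by
        rw [← closure_Ioo (by norm_num : (-1 : ℝ) ≠ 1)]
        exact closure_minimal hS1 hSclosed
      have hIcc2 : Icc (1 : ℝ) y0 ⊆ {y : ℝ |
          |P.eval y| ≤ (r : ℝ) * Cb} := by
        rw [← closure_Ioo (ne_of_lt hy0_gt1)]
        exact closure_minimal hS2 hSclosed
      rcases le_total y 1 with hc | hc
      · exact hIcc1 ⟨hy.1, hc⟩
      · exact hIcc2 ⟨hc, hy.2⟩
    -- MVT
    have hderiv : ∀ y : ℝ, ((Polynomial.Chebyshev.T ℝ (r : ℤ)).derivative).eval y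
        = (r : ℝ) * P.eval y := by
      intro y
      rw [Polynomial.Chebyshev.T_derivative_eq_U, hP]
      push_cast
      simp
    have hbound : ∀ y ∈ Icc (-1 : ℝ) y0,
        ‖((Polynomial.Chebyshev.T ℝ (r : ℤ)).derivative).eval y‖ ≤ (r : ℝ)^2 * Cb := by
      intro y hy
      rw [hderiv, Real.norm_eq_abs, abs_mul, abs_of_nonneg hrpos.le]
      have := hU y hy
      nlinarith [abs_nonneg (P.eval y)]
    set a : ℝ := -2/d * t + y0 with hadef
    have ha_mem : a ∈ Icc (-1 : ℝ) y0 := by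
      constructor
      · rw [hadef, hy0def, show -2/d * t + (1 + h')/d = (1 + h' - 2*t)/d by field_simp; ring,
          le_div_iff₀ hd0, hddef]
        nlinarith
      · rw [hadef]
        have h1 : 0 ≤ 2/d * t := by positivity
        have h2 : -2/d * t = -(2/d * t) := by ring
        linarith
    have hy0_mem : y0 ∈ Icc (-1 : ℝ) y0 := ⟨by linarith, le_refl _⟩
    have hmvt := Convex.norm_image_sub_le_of_norm_hasDerivWithin_le
      (f := fun y : ℝ => (Polynomial.Chebyshev.T ℝ (r : ℤ)).eval y)
      (f' := fun y : ℝ => ((Polynomial.Chebyshev.T ℝ (r : ℤ)).derivative).eval y)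
      (s := Icc (-1 : ℝ) y0) (C := (r : ℝ)^2 * Cb)
      (fun y _ => (Polynomial.hasDerivAt _ y).hasDerivWithinAt)
      hbound (convex_Icc _ _) hy0_mem ha_mem
    have hTy0 : (Polynomial.Chebyshev.T ℝ (r : ℤ)).eval y0 = Cb := by
      rw [← hxcosh, hTcosh]
    have hay0 : ‖a - y0‖ = 2/d * t := by
      rw [Real.norm_eq_abs, hadef, show -2/d * t + y0 - y0 = -(2/d * t) by ring, abs_neg,
        abs_of_nonneg (by positivity)]
    beta_reduce at hmvt
    rw [hTy0, hay0] at hmvt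
    have hga : g t = (Polynomial.Chebyshev.T ℝ (r : ℤ)).eval a := by rw [hgdef, hadef]
    have hdist : |g t - Cb| ≤ (r : ℝ)^2 * Cb * (2/d * t) := by
      rw [hga]
      have := hmvt
      rw [Real.norm_eq_abs] at this
      exact this
    have h2d : 2/d * t ≤ 16 * t := by
      have : 2/d ≤ 16 := by
        rw [div_le_iff₀ hd0]; linarith
      nlinarith
    have hglow : Cb * (1 - 16 * (r : ℝ)^2 * t) ≤ g t := by
      have h1 : |g t - Cb| ≤ (r : ℝ)^2 * Cb * (16 * t) := by
        refine le_trans hdist ?_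
        have : (0:ℝ) ≤ (r:ℝ)^2 * Cb := by positivity
        nlinarith
      have h2 := (abs_le.mp h1).1
      nlinarith
    rw [heval t]
    have hfrac : 1 - 16 * (r : ℝ)^2 * t ≤ Cb⁻¹ * g t := by
      have h1 : Cb * (1 - 16 * (r : ℝ)^2 * t) ≤ g t := hglow
      have h2 : Cb⁻¹ * (Cb * (1 - 16 * (r : ℝ)^2 * t)) ≤ Cb⁻¹ * g t :=
        mul_le_mul_of_nonneg_left hglow (by positivity)
      rwa [← mul_assoc, inv_mul_cancel₀ hCbne, one_mul] at h2
    have hpos16 : 0 ≤ 1 - 16 * (r : ℝ)^2 * t := by linarith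
    have hsq : (1 - 16 * (r : ℝ)^2 * t)^2 ≤ (Cb⁻¹ * g t)^2 := by
      have h0 : 0 ≤ Cb⁻¹ * g t := le_trans hpos16 hfrac
      nlinarith
    constructor
    · nlinarith [sq_nonneg ((r:ℝ)^2 * t)]
    · nlinarith [sq_nonneg ((r:ℝ)^2 * t)]
end
end

section
/- Let K ⊆ ℝⁿ be compact with positive Lebesgue measure λ, containing the origin, and satisfying Assumption 1 with constants ε_K, η_K > 0 and N ≥ n. Let F be a real polynomial with F(0) = 0, 0 ≤ F(x) ≤ 1 for all x ∈ K, and F(x) ≤ C_F·‖x‖ for all x ∈ K, where C_F > 0. Let r ≥ 1 be an integer, set ρ = 1/(64r²), let h satisfy ρ ≤ h < 1, and assume ρ/C_F ≤ ε_K. Let v be a univariate polynomial with 0 ≤ v(t) ≤ 1 for t ∈ [0,1], v(t) ≥ 1/2 for t ∈ [0, ρ], and v(t) ≤ 4·exp(−(1/2)·r·√h) for t ∈ [h, 1]. Then ∫_K F(x)·v(F(x)) dλ(x) ≤ ( h + 8·exp(−(1/2)·r·√h)·λ(K)·C_F^N / (η_K·ρ^N·vol(Bⁿ)) ) · ∫_K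 v(F(x)) dλ(x). -/
open MeasureTheory Polynomial Set

set_option maxHeartbeats 1000000

noncomputable section

/-- The main estimate in the proof of Theorem 4: with the needle polynomial
`v`, the ratio `∫_K F·v(F) dλ / ∫_K v(F) dλ` is at most
`h + 8·e^{-r√h/2}·λ(K)·C_F^N / (η_K·ρ^N·vol(Bⁿ))`. -/
theorem ratio_estimate {n : ℕ} (K : Set (EuclideanSpace ℝ (Fin n)))
    (hKc : IsCompact K) (hKpos : 0 < volume K)
    (h0K : (0 : EuclideanSpace ℝ (Fin n)) ∈ K)
    (εK ηK N : ℝ) (hε : 0 < εK) (hη : 0 < ηK) (hN : (n : ℝ) ≤ N)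
    (hgeom : ∀ x ∈ K, ∀ δ : ℝ, 0 < δ → δ ≤ εK →
      ENNReal.ofReal (ηK * δ ^ N) * volume (Metric.ball (0 : EuclideanSpace ℝ (Fin n)) 1)
        ≤ volume (K ∩ Metric.closedBall x δ))
    (F : MvPolynomial (Fin n) ℝ)
    (hF0 : MvPolynomial.eval (fun _ => (0 : ℝ)) F = 0)
    (hF01 : ∀ x ∈ K, 0 ≤ MvPolynomial.eval (fun i => x i) F ∧
      MvPolynomial.eval (fun i => x i) F ≤ 1)
    (CF : ℝ) (hCF : 0 < CF)
    (hLip : ∀ x ∈ K, MvPolynomial.eval (fun i => x i) F ≤ CF * ‖x‖)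
    (r : ℕ) (hr : 1 ≤ r) (ρ : ℝ) (hρ : ρ = 1 / (64 * (r : ℝ) ^ 2))
    (h : ℝ) (hρh : ρ ≤ h) (hh1 : h < 1) (hρε : ρ / CF ≤ εK)
    (v : Polynomial ℝ)
    (hv01 : ∀ t ∈ Icc (0 : ℝ) 1, 0 ≤ v.eval t ∧ v.eval t ≤ 1)
    (hvlow : ∀ t ∈ Icc (0 : ℝ) ρ, 1 / 2 ≤ v.eval t)
    (hvhigh : ∀ t ∈ Icc h 1, v.eval t ≤ 4 * Real.exp (-(1 / 2) * r * Real.sqrt h)) :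
    (∫ x in K, MvPolynomial.eval (fun i => x i) F *
        v.eval (MvPolynomial.eval (fun i => x i) F)) ≤
      (h + 8 * Real.exp (-(1 / 2) * r * Real.sqrt h) * (volume K).toReal * CF ^ N /
          (ηK * ρ ^ N *
            (volume (Metric.ball (0 : EuclideanSpace ℝ (Fin n)) 1)).toReal)) *
        ∫ x in K, v.eval (MvPolynomial.eval (fun i => x i) F) := by

  set E := Real.exp (-(1 / 2) * r * Real.sqrt h) with hE
  have hEpos : 0 < E := Real.exp_pos _
  have hrpos : (0 : ℝ) < r := by exact_mod_cast hr
  have hρpos : 0 < ρ := by rw [hρ]; positivity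
  have hhpos : 0 < h := lt_of_lt_of_le hρpos hρh
  set f : EuclideanSpace ℝ (Fin n) → ℝ := fun x => MvPolynomial.eval (fun i => x i) F with hf
  have hfc : Continuous f :=
    (MvPolynomial.continuous_eval (p := F)).comp (continuous_pi fun i => (EuclideanSpace.proj i).continuous)
  have hvfc : Continuous fun x => v.eval (f x) := v.continuous.comp hfc
  have hKm := hKc.measurableSet
  have hKfin : volume K ≠ ⊤ := hKc.measure_lt_top.ne
  have hInt2 : IntegrableOn (fun x => v.eval (f x)) K volume :=
    hvfc.continuousOn.integrableOn_compact hKc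
  have hInt1 : IntegrableOn (fun x => f x * v.eval (f x)) K volume :=
    (hfc.mul hvfc).continuousOn.integrableOn_compact hKc
  set B := (volume (Metric.ball (0 : EuclideanSpace ℝ (Fin n)) 1)).toReal with hB
  have hBpos : 0 < B :=
    ENNReal.toReal_pos (Metric.measure_ball_pos _ _ one_pos).ne' measure_ball_lt_top.ne
  set δ := ρ / CF with hδ
  have hδpos : 0 < δ := div_pos hρpos hCF
  set S := K ∩ Metric.closedBall (0 : EuclideanSpace ℝ (Fin n)) δ with hS
  have hSm : MeasurableSet S := hKm.inter measurableSet_closedBall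
  have hSfin : volume S ≠ ⊤ :=
    (lt_of_le_of_lt (measure_mono inter_subset_left) hKc.measure_lt_top).ne
  have hSvol : ηK * δ ^ N * B ≤ (volume S).toReal := by
    have h1 := ENNReal.toReal_mono hSfin (hgeom 0 h0K δ hδpos hρε)
    rwa [ENNReal.toReal_mul, ENNReal.toReal_ofReal (by positivity)] at h1
  set I := ∫ x in K, v.eval (f x) with hI
  have hle1 : (1 / 2) * (volume S).toReal ≤ ∫ x in S, v.eval (f x) := by
    apply setIntegral_ge_of_const_le_real hSm hSfin
    · intro x hx
      apply hvlow
      refine ⟨(hF01 x hx.1).1, ?_⟩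
      calc f x ≤ CF * ‖x‖ := hLip x hx.1
        _ ≤ CF * δ := by
            have := mem_closedBall_zero_iff.mp hx.2
            exact mul_le_mul_of_nonneg_left this hCF.le
        _ = ρ := mul_div_cancel₀ ρ hCF.ne'
    · exact hInt2.mono_set inter_subset_left
  have hle2 : ∫ x in S, v.eval (f x) ≤ I := by
    apply setIntegral_mono_set hInt2 ?_ (HasSubset.Subset.eventuallyLE inter_subset_left)
    filter_upwards [ae_restrict_mem hKm] with x hx
    exact (hv01 (f x) ⟨(hF01 x hx).1, (hF01 x hx).2⟩).1
  have hIlow : (1 / 2) * (ηK * δ ^ N * B) ≤ I := by nlinarith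
  have hδρ : δ ^ N = ρ ^ N / CF ^ N := Real.div_rpow hρpos.le hCF.le N
  set C := 8 * E * (volume K).toReal * CF ^ N / (ηK * ρ ^ N * B) with hC
  have hρN : (0 : ℝ) < ρ ^ N := Real.rpow_pos_of_pos hρpos N
  have hCFN : (0 : ℝ) < CF ^ N := Real.rpow_pos_of_pos hCF N
  have hCnn : 0 ≤ C := by positivity
  have hkey : 4 * E * (volume K).toReal = C * ((1 / 2) * (ηK * δ ^ N * B)) := by
    rw [hδρ, hC]; field_simp; ring
  have hmain : 4 * E * (volume K).toReal ≤ C * I := by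
    rw [hkey]; exact mul_le_mul_of_nonneg_left hIlow hCnn
  have hpt : ∀ x ∈ K, f x * v.eval (f x) ≤ h * v.eval (f x) + 4 * E := by
    intro x hx
    obtain ⟨ht0, ht1⟩ := hF01 x hx
    obtain ⟨hv0, hv1⟩ := hv01 (f x) ⟨ht0, ht1⟩
    by_cases hcase : f x ≤ h
    · nlinarith [mul_le_mul_of_nonneg_right hcase hv0]
    · have hvh : v.eval (f x) ≤ 4 * E := hvhigh _ ⟨(not_le.mp hcase).le, ht1⟩
      nlinarith
  have hIntR : IntegrableOn (fun x => h * v.eval (f x) + 4 * E) K volume :=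
    (hInt2.const_mul h).add (integrableOn_const hKfin)
  have hstep : (∫ x in K, f x * v.eval (f x)) ≤ ∫ x in K, (h * v.eval (f x) + 4 * E) :=
    setIntegral_mono_on hInt1 hIntR hKm hpt
  have hcomp : (∫ x in K, (h * v.eval (f x) + 4 * E)) = h * I + 4 * E * (volume K).toReal := by
    rw [integral_add (hInt2.const_mul h) (integrableOn_const hKfin),
      integral_const_mul, setIntegral_const, smul_eq_mul, measureReal_def]
    ring
  calc (∫ x in K, f x * v.eval (f x)) ≤ h * I + 4 * E * (volume K).toReal := by
        rw [← hcomp]; exact hstep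
    _ ≤ h * I + C * I := by linarith
    _ = (h + C) * I := by ring
end
end

section
/- Let K ⊆ ℝⁿ be compact, containing the origin, and satisfying Assumption 1 with constants ε_K, η_K > 0 and N ≥ n. Let F be a real polynomial with F(0) = 0, 0 ≤ F(x) ≤ 1 for all x ∈ K, and F(x) ≤ C_F·‖x‖ for all x ∈ K, where C_F > 0. Let ρ > 0 satisfy ρ/C_F ≤ ε_K, and let v be a univariate polynomial with v(t) ≥ 0 for t ∈ [0,1] and v(t) ≥ 1/2 for t ∈ [0, ρ]. Then ∫_K v(F(x)) dλ(x) ≥ (1/2)·η_K·(ρ/C_F)^N·vol(Bⁿ), where λ is the Lebesgue measure restricted to K. -/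
open MeasureTheory Polynomial Set

noncomputable section

/-- Lower bound on the denominator in the proof of Theorem 4:
`∫_K v(F(x)) dλ(x) ≥ (1/2)·η_K·(ρ/C_F)^N·vol(Bⁿ)`. -/
theorem denominator_lower_bound {n : ℕ} (K : Set (EuclideanSpace ℝ (Fin n)))
    (hKc : IsCompact K) (h0K : (0 : EuclideanSpace ℝ (Fin n)) ∈ K)
    (εK ηK N : ℝ) (hε : 0 < εK) (hη : 0 < ηK) (hN : (n : ℝ) ≤ N)
    (hgeom : ∀ x ∈ K, ∀ δ : ℝ, 0 < δ → δ ≤ εK →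
      ENNReal.ofReal (ηK * δ ^ N) * volume (Metric.ball (0 : EuclideanSpace ℝ (Fin n)) 1)
        ≤ volume (K ∩ Metric.closedBall x δ))
    (F : MvPolynomial (Fin n) ℝ)
    (hF0 : MvPolynomial.eval (fun _ => (0 : ℝ)) F = 0)
    (hF01 : ∀ x ∈ K, 0 ≤ MvPolynomial.eval (fun i => x i) F ∧
      MvPolynomial.eval (fun i => x i) F ≤ 1)
    (CF : ℝ) (hCF : 0 < CF)
    (hLip : ∀ x ∈ K, MvPolynomial.eval (fun i => x i) F ≤ CF * ‖x‖)
    (ρ : ℝ) (hρ : 0 < ρ) (hρε : ρ / CF ≤ εK)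
    (v : Polynomial ℝ)
    (hvnonneg : ∀ t ∈ Icc (0 : ℝ) 1, 0 ≤ v.eval t)
    (hvlow : ∀ t ∈ Icc (0 : ℝ) ρ, 1 / 2 ≤ v.eval t) :
    (1 / 2) * ηK * (ρ / CF) ^ N *
        (volume (Metric.ball (0 : EuclideanSpace ℝ (Fin n)) 1)).toReal ≤
      ∫ x in K, v.eval (MvPolynomial.eval (fun i => x i) F) := by
  set δ : ℝ := ρ / CF with hδdef
  have hδpos : 0 < δ := div_pos hρ hCF
  set f : EuclideanSpace ℝ (Fin n) → ℝ :=
    fun x => v.eval (MvPolynomial.eval (fun i => x i) F) with hf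
  have hfcont : Continuous f := by
    apply v.continuous_aeval.comp
    exact (MvPolynomial.continuous_eval F).comp (continuous_pi fun i => (EuclideanSpace.proj i).continuous)
  set S : Set (EuclideanSpace ℝ (Fin n)) := K ∩ Metric.closedBall 0 δ with hS
  have hSK : S ⊆ K := inter_subset_left
  have hSm : MeasurableSet S :=
    hKc.measurableSet.inter Metric.isClosed_closedBall.measurableSet
  have hKfin : volume K ≠ ⊤ := hKc.measure_ne_top
  have hSfin : volume S ≠ ⊤ := ne_top_of_le_ne_top hKfin (measure_mono hSK)
  have hintK : IntegrableOn f K := hfcont.continuousOn.integrableOn_compact hKc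
  have hintS : IntegrableOn f S := hintK.mono_set hSK
  have hfS : ∀ x ∈ S, (1 / 2 : ℝ) ≤ f x := by
    intro x hx
    apply hvlow
    constructor
    · exact (hF01 x hx.1).1
    · calc MvPolynomial.eval (fun i => x i) F ≤ CF * ‖x‖ := hLip x hx.1
        _ ≤ CF * δ := by
            have : ‖x‖ ≤ δ := by
              have := hx.2
              simpa [dist_eq_norm] using this
            nlinarith
        _ = ρ := by rw [hδdef]; field_simp [hCF.ne']
  have step1 : (1 / 2 : ℝ) * (volume S).toReal ≤ ∫ x in S, f x :=
    by have := setIntegral_ge_of_const_le_real hSm hSfin hfS hintS; exact this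
  have step2 : (∫ x in S, f x) ≤ ∫ x in K, f x := by
    apply setIntegral_mono_set hintK
    · filter_upwards [ae_restrict_mem hKc.measurableSet] with x hx
      exact hvnonneg _ ⟨(hF01 x hx).1, (hF01 x hx).2⟩
    · exact Filter.Eventually.of_forall hSK
  have hvol : ηK * δ ^ N *
      (volume (Metric.ball (0 : EuclideanSpace ℝ (Fin n)) 1)).toReal
        ≤ (volume S).toReal := by
    have h := hgeom 0 h0K δ hδpos hρε
    have hBfin : volume (Metric.ball (0 : EuclideanSpace ℝ (Fin n)) 1) ≠ ⊤ :=
      (isCompact_closedBall (0 : EuclideanSpace ℝ (Fin n)) 1).measure_ne_top |> fun h' =>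
        ne_top_of_le_ne_top h' (measure_mono Metric.ball_subset_closedBall)
    have h2 := ENNReal.toReal_mono hSfin h
    rw [ENNReal.toReal_mul, ENNReal.toReal_ofReal] at h2
    · exact h2
    · positivity
  have hBtr : (0:ℝ) ≤ (volume (Metric.ball (0 : EuclideanSpace ℝ (Fin n)) 1)).toReal :=
    ENNReal.toReal_nonneg
  calc (1 / 2) * ηK * δ ^ N *
        (volume (Metric.ball (0 : EuclideanSpace ℝ (Fin n)) 1)).toReal
      = (1/2) * (ηK * δ ^ N *
        (volume (Metric.ball (0 : EuclideanSpace ℝ (Fin n)) 1)).toReal) := by ring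
    _ ≤ (1/2) * (volume S).toReal := by linarith
    _ ≤ ∫ x in S, f x := step1
    _ ≤ ∫ x in K, f x := step2
end
end

section
/- Let K ⊆ ℝⁿ be compact and suppose there exist constants η > 0 and N ≥ 1 such that for every x ∈ K there is a curve h_x : [0,1] → ℝⁿ with ‖x − h_x(t)‖ ≤ t and the Euclidean ball of radius η·t^N centered at h_x(t) contained in K, for all t ∈ [0,1]. Then for all x ∈ K and all 0 < δ ≤ 1 + η, vol(K ∩ B_δ(x)) ≥ (η/(1+η)^N)ⁿ · δ^(N·n) · vol(Bⁿ); in particular K satisfies Assumption 1 with ε_K = 1 + η, η_K = ηⁿ·(1+η)^(−N·n), and exponent N·n. -/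
open MeasureTheory Set

noncomputable section

/-- Assumption 1: there are `ε_K, η_K > 0` and `N' ≥ n` such that
`vol(K ∩ B_δ(x)) ≥ η_K δ^{N'} vol(Bⁿ)` for all `x ∈ K` and `0 < δ ≤ ε_K`. -/
def Assumption1 {n : ℕ} (K : Set (EuclideanSpace ℝ (Fin n))) : Prop :=
  ∃ εK ηK N' : ℝ, 0 < εK ∧ 0 < ηK ∧ (n : ℝ) ≤ N' ∧
    ∀ x ∈ K, ∀ δ : ℝ, 0 < δ → δ ≤ εK →
      ENNReal.ofReal (ηK * δ ^ N') * volume (Metric.ball (0 : EuclideanSpace ℝ (Fin n)) 1)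
        ≤ volume (K ∩ Metric.closedBall x δ)

/-- Corollary 2 (quantitative form): if every point of the compact set `K` admits
a polynomial-cusp curve in the sense of Pawłucki–Pleśniak, then
`vol(K ∩ B_δ(x)) ≥ (η/(1+η)^N)ⁿ · δ^{N·n} · vol(Bⁿ)` for `0 < δ ≤ 1 + η`;
in particular `K` satisfies Assumption 1 with `ε_K = 1 + η`,
`η_K = ηⁿ (1+η)^{-Nn}` and exponent `N·n`. -/
theorem curve_condition_implies_assumption1 {n : ℕ}
    (K : Set (EuclideanSpace ℝ (Fin n))) (hKc : IsCompact K)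
    (η N : ℝ) (hη : 0 < η) (hN : 1 ≤ N)
    (hcurve : ∀ x ∈ K, ∃ γ : ℝ → EuclideanSpace ℝ (Fin n),
      ∀ t ∈ Icc (0 : ℝ) 1, ‖x - γ t‖ ≤ t ∧
        Metric.closedBall (γ t) (η * t ^ N) ⊆ K) :
    (∀ x ∈ K, ∀ δ : ℝ, 0 < δ → δ ≤ 1 + η →
      ENNReal.ofReal ((η / (1 + η) ^ N) ^ n * δ ^ (N * (n : ℝ))) *
          volume (Metric.ball (0 : EuclideanSpace ℝ (Fin n)) 1)
        ≤ volume (K ∩ Metric.closedBall x δ)) ∧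
    Assumption1 K := by
  have h1η : (0:ℝ) < 1 + η := by linarith
  have key : ∀ x ∈ K, ∀ δ : ℝ, 0 < δ → δ ≤ 1 + η →
      ENNReal.ofReal ((η / (1 + η) ^ N) ^ n * δ ^ (N * (n : ℝ))) *
          volume (Metric.ball (0 : EuclideanSpace ℝ (Fin n)) 1)
        ≤ volume (K ∩ Metric.closedBall x δ) := by
    intro x hx δ hδ hδη
    set t : ℝ := δ / (1 + η) with ht_def
    have ht0 : 0 < t := div_pos hδ h1η
    have ht1 : t ≤ 1 := (div_le_one h1η).2 hδη
    obtain ⟨γ, hγ⟩ := hcurve x hx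
    obtain ⟨hdist, hball⟩ := hγ t ⟨ht0.le, ht1⟩
    have htN : t ^ N ≤ t := by
      nth_rewrite 2 [← Real.rpow_one t]
      exact Real.rpow_le_rpow_of_exponent_ge ht0 ht1 hN
    have htNpos : 0 < t ^ N := Real.rpow_pos_of_pos ht0 N
    set r : ℝ := η * t ^ N with hr_def
    have hr0 : 0 ≤ r := by positivity
    -- the small ball is inside K ∩ closedBall x δ
    have hsub : Metric.closedBall (γ t) r ⊆ K ∩ Metric.closedBall x δ := by
      intro y hy
      refine ⟨hball hy, ?_⟩
      have h1 : dist y (γ t) ≤ r := Metric.mem_closedBall.1 hy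
      have h2 : dist (γ t) x ≤ t := by
        rw [dist_comm, dist_eq_norm]; exact hdist
      have : dist y x ≤ r + t := le_trans (dist_triangle y (γ t) x) (by linarith)
      have hrt : r + t ≤ δ := by
        have : r ≤ η * t := by
          apply mul_le_mul_of_nonneg_left htN hη.le
        have hδt : δ = (1 + η) * t := by
          rw [ht_def, mul_div_assoc']; exact (mul_div_cancel_left₀ δ h1η.ne').symm
        nlinarith
      exact Metric.mem_closedBall.2 (le_trans this hrt)
    have hvol : volume (Metric.closedBall (γ t) r)
        = ENNReal.ofReal (r ^ n) * volume (Metric.ball (0 : EuclideanSpace ℝ (Fin n)) 1) := by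
      rw [MeasureTheory.Measure.addHaar_closedBall volume (γ t) hr0, finrank_euclideanSpace_fin]
    have hreq : (η / (1 + η) ^ N) ^ n * δ ^ (N * (n : ℝ)) = r ^ n := by
      have hδN : δ ^ (N * (n : ℝ)) = (δ ^ N) ^ n := by
        rw [Real.rpow_mul hδ.le, Real.rpow_natCast]
      have htδ : t ^ N = δ ^ N / (1 + η) ^ N := Real.div_rpow hδ.le h1η.le N
      rw [hδN, hr_def, htδ, ← mul_pow]
      ring
    calc ENNReal.ofReal ((η / (1 + η) ^ N) ^ n * δ ^ (N * (n : ℝ))) *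
          volume (Metric.ball (0 : EuclideanSpace ℝ (Fin n)) 1)
        = volume (Metric.closedBall (γ t) r) := by rw [hreq, hvol]
      _ ≤ volume (K ∩ Metric.closedBall x δ) := measure_mono hsub
  refine ⟨key, ⟨1 + η, (η / (1 + η) ^ N) ^ n, N * n, h1η, ?_, ?_, ?_⟩⟩
  · have : 0 < η / (1 + η) ^ N := div_pos hη (Real.rpow_pos_of_pos h1η N)
    positivity
  · have : (n : ℝ) * 1 ≤ (n : ℝ) * N := by
      apply mul_le_mul_of_nonneg_left hN (Nat.cast_nonneg n)
    linarith [this]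
  · exact key
end
end

section
/- The set K = {(x₁, x₂) ∈ ℝ² : 0 ≤ x₁ ≤ 1, 0 ≤ x₂ ≤ x₁²} satisfies Assumption 1 with exponent N = 3: there exist constants ε, η > 0 such that vol(K ∩ B_δ(x)) ≥ η·δ³·vol(B²) for all x ∈ K and all 0 < δ ≤ ε. -/
open MeasureTheory Set

noncomputable section

/-- The set `K = {x ∈ ℝ² : 0 ≤ x₁ ≤ 1, 0 ≤ x₂ ≤ x₁²}` of Example 1. -/
def cuspSet : Set (EuclideanSpace ℝ (Fin 2)) :=
  {x | 0 ≤ x 0 ∧ x 0 ≤ 1 ∧ 0 ≤ x 1 ∧ x 1 ≤ (x 0) ^ 2}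

lemma cusp_box_vol (a b c d : ℝ) :
    volume {y : EuclideanSpace ℝ (Fin 2) | y 0 ∈ Icc a b ∧ y 1 ∈ Icc c d}
      = ENNReal.ofReal (b - a) * ENNReal.ofReal (d - c) := by
  have mp := EuclideanSpace.volume_preserving_symm_measurableEquiv_toLp (Fin 2)
  have hset : {y : EuclideanSpace ℝ (Fin 2) | y 0 ∈ Icc a b ∧ y 1 ∈ Icc c d}
      = (MeasurableEquiv.toLp 2 (Fin 2 → ℝ)).symm ⁻¹'
        (Set.univ.pi fun i => Icc (![a, c] i) (![b, d] i)) := by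
    ext y
    simp [Pi.le_def, Fin.forall_fin_two]
    tauto
  rw [hset, mp.measure_preimage]
  · rw [volume_pi_pi]
    simp [Fin.prod_univ_two, Real.volume_Icc]
  · exact (MeasurableSet.univ_pi fun i => measurableSet_Icc).nullMeasurableSet

/-- Key real-variable facts about the chosen vertical interval. -/
lemma cusp_interval_facts (t a δ : ℝ) (hδ : 0 < δ) (hδ8 : δ ≤ 8) (ht : 0 ≤ t)
    (h3 : δ^2/16 ≤ a^2) (h6 : t - a^2 ≤ δ/2 - δ^2/16) :
    0 ≤ max (min t (a^2) - δ^2/16) 0 ∧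
    max (min t (a^2) - δ^2/16) 0 + δ^2/16 ≤ a^2 ∧
    t - δ/2 ≤ max (min t (a^2) - δ^2/16) 0 ∧
    max (min t (a^2) - δ^2/16) 0 + δ^2/16 ≤ t + δ/2 := by
  have hq : 0 < δ^2/16 := by positivity
  have hq2 : δ^2/16 ≤ δ/2 := by nlinarith
  refine ⟨le_max_right _ _, ?_, ?_, ?_⟩
  · rcases max_cases (min t (a^2) - δ^2/16) 0 with ⟨h, _⟩ | ⟨h, _⟩ <;> rw [h]
    · have := min_le_right t (a^2); linarith
    · linarith
  · rcases max_cases (min t (a^2) - δ^2/16) 0 with ⟨h, _⟩ | ⟨h, h'⟩ <;> rw [h]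
    · rcases min_cases t (a^2) with ⟨hm, _⟩ | ⟨hm, _⟩ <;> rw [hm] <;> linarith
    · rcases min_cases t (a^2) with ⟨hm, _⟩ | ⟨hm, _⟩ <;> rw [hm] at h' <;> linarith
  · rcases max_cases (min t (a^2) - δ^2/16) 0 with ⟨h, _⟩ | ⟨h, _⟩ <;> rw [h]
    · have := min_le_left t (a^2); linarith
    · linarith

lemma cusp_box_subset (x : EuclideanSpace ℝ (Fin 2)) (hx : x ∈ cuspSet)
    (δ a : ℝ) (hδ : 0 < δ) (hδ8 : δ ≤ 8)
    (h1 : 0 ≤ a) (h2 : a + δ/4 ≤ 1) (h3 : δ^2/16 ≤ a^2)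
    (h4 : x 0 - δ/2 ≤ a) (h5 : a + δ/4 ≤ x 0 + δ/2)
    (h6 : x 1 - a^2 ≤ δ/2 - δ^2/16) :
    {y : EuclideanSpace ℝ (Fin 2) | y 0 ∈ Icc a (a + δ/4) ∧
        y 1 ∈ Icc (max (min (x 1) (a^2) - δ^2/16) 0)
          (max (min (x 1) (a^2) - δ^2/16) 0 + δ^2/16)}
      ⊆ cuspSet ∩ Metric.closedBall x δ := by
  obtain ⟨hx0, hx1, hx2, hx3⟩ := hx
  obtain ⟨hc0, hcub, hcl, hcr⟩ := cusp_interval_facts (x 1) a δ hδ hδ8 hx2 h3 h6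
  rintro y ⟨⟨hy0l, hy0r⟩, hy1l, hy1r⟩
  constructor
  · refine ⟨by linarith, by linarith, by linarith, ?_⟩
    have ha2 : a^2 ≤ (y 0)^2 := by nlinarith
    linarith
  · rw [Metric.mem_closedBall, EuclideanSpace.dist_eq]
    have hsum : ∑ i : Fin 2, dist (y i) (x i) ^ 2 = (y 0 - x 0)^2 + (y 1 - x 1)^2 := by
      simp [Fin.sum_univ_two, Real.dist_eq, sq_abs]
    rw [hsum]
    have hd1 : (y 0 - x 0)^2 ≤ (δ/2)^2 := by
      apply sq_le_sq' <;> linarith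
    have hd2 : (y 1 - x 1)^2 ≤ (δ/2)^2 := by
      apply sq_le_sq' <;> linarith
    calc Real.sqrt ((y 0 - x 0)^2 + (y 1 - x 1)^2) ≤ Real.sqrt (δ^2) := by
          apply Real.sqrt_le_sqrt; nlinarith
      _ = δ := Real.sqrt_sq hδ.le

/-- Example 1: the set with a polynomial cusp satisfies Assumption 1 with
exponent `N = 3`. -/
theorem cuspSet_satisfies_assumption1 :
    ∃ ε > (0 : ℝ), ∃ η > (0 : ℝ), ∀ x ∈ cuspSet, ∀ δ : ℝ, 0 < δ → δ ≤ ε →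
      ENNReal.ofReal (η * δ ^ 3) * volume (Metric.ball (0 : EuclideanSpace ℝ (Fin 2)) 1)
        ≤ volume (cuspSet ∩ Metric.closedBall x δ) := by
  refine ⟨1/2, by norm_num, 1/256, by norm_num, fun x hx δ hδ hδε => ?_⟩
  have hδ8 : δ ≤ 8 := by linarith
  obtain ⟨a, h1, h2, h3, h4, h5, h6⟩ :
      ∃ a : ℝ, 0 ≤ a ∧ a + δ/4 ≤ 1 ∧ δ^2/16 ≤ a^2 ∧ x 0 - δ/2 ≤ a ∧
        a + δ/4 ≤ x 0 + δ/2 ∧ x 1 - a^2 ≤ δ/2 - δ^2/16 := by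
    obtain ⟨hx0, hx1, hx2, hx3⟩ := hx
    rcases le_or_gt (x 0) (1/2) with h | h
    · exact ⟨x 0 + δ/4, by linarith, by linarith, by nlinarith, by linarith, by linarith,
        by nlinarith⟩
    · exact ⟨x 0 - δ/4, by linarith, by linarith, by nlinarith, by linarith, by linarith,
        by nlinarith⟩
  have hsub := cusp_box_subset x hx δ a hδ hδ8 h1 h2 h3 h4 h5 h6
  have hmono := measure_mono (μ := volume) hsub
  rw [cusp_box_vol] at hmono
  have hball : volume (Metric.ball (0 : EuclideanSpace ℝ (Fin 2)) 1)
      = ENNReal.ofReal Real.pi := by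
    rw [EuclideanSpace.volume_ball]
    norm_num [Real.sq_sqrt Real.pi_nonneg, Real.Gamma_two]
  rw [hball, ← ENNReal.ofReal_mul (by positivity)]
  refine le_trans ?_ hmono
  rw [← ENNReal.ofReal_mul (by linarith)]
  apply ENNReal.ofReal_le_ofReal
  have hπ := Real.pi_le_four
  have hπ0 := Real.pi_pos
  have h3pos : 0 < δ^3 := by positivity
  nlinarith
end
end

section
/- Let K = {(x₁, x₂) ∈ ℝ² : 0 ≤ x₁ ≤ 1, 0 ≤ x₂ ≤ x₁²}. Then vol(K ∩ B_δ(0)) ≤ δ³/3 for all 0 < δ ≤ 1, where 0 is the origin. Consequently, there do not exist constants η, ε > 0 such that vol(K ∩ B_δ(x)) ≥ η·δ²·vol(B²) for all x ∈ K and all 0 < δ ≤ ε (i.e., K does not satisfy the geometric condition with the exponent N = 2 equal to the ambient dimension). -/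
open MeasureTheory Set

noncomputable section

lemma cusp_plane_vol (δ : ℝ) (hδ : 0 < δ) :
    volume {p : ℝ × ℝ | p.1 ∈ Icc 0 δ ∧ p.2 ∈ Icc 0 (p.1 ^ 2)}
      = ENNReal.ofReal (δ ^ 3 / 3) := by
  have hmeas : MeasurableSet {p : ℝ × ℝ | p.1 ∈ Icc 0 δ ∧ p.2 ∈ Icc 0 (p.1 ^ 2)} := by
    apply MeasurableSet.inter
    · exact (measurableSet_Icc.preimage measurable_fst)
    · apply measurableSet_le measurable_const measurable_snd |>.inter
      exact measurableSet_le measurable_snd ((measurable_fst.pow_const 2))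
  rw [Measure.volume_eq_prod ℝ ℝ, Measure.prod_apply hmeas]
  have hpre : ∀ a : ℝ, (Prod.mk a ⁻¹' {p : ℝ × ℝ | p.1 ∈ Icc 0 δ ∧ p.2 ∈ Icc 0 (p.1 ^ 2)})
      = if a ∈ Icc 0 δ then Icc 0 (a ^ 2) else ∅ := by
    intro a
    ext b
    by_cases ha : a ∈ Icc 0 δ <;> simp_all [Set.mem_Icc]
  have : ∀ a : ℝ, volume (Prod.mk a ⁻¹'
        {p : ℝ × ℝ | p.1 ∈ Icc 0 δ ∧ p.2 ∈ Icc 0 (p.1 ^ 2)})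
      = (Icc (0:ℝ) δ).indicator (fun a => ENNReal.ofReal (a ^ 2)) a := by
    intro a
    rw [hpre a]
    by_cases ha : a ∈ Icc 0 δ
    · simp [ha, Real.volume_Icc, indicator_of_mem]
    · simp [ha, indicator_of_notMem]
  simp_rw [this]
  rw [lintegral_indicator measurableSet_Icc]
  rw [← ofReal_integral_eq_lintegral_ofReal]
  · congr 1
    rw [integral_Icc_eq_integral_Ioc, ← intervalIntegral.integral_of_le hδ.le]
    simp [integral_pow]
    ring
  · exact (continuous_pow 2).continuousOn.integrableOn_compact isCompact_Icc
  · filter_upwards with a using sq_nonneg a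

lemma coord_le_norm (x : EuclideanSpace ℝ (Fin 2)) (i : Fin 2) : |x i| ≤ ‖x‖ := by
  rw [EuclideanSpace.norm_eq]
  rw [← Real.sqrt_sq_eq_abs]
  apply Real.sqrt_le_sqrt
  have : ‖x i‖ ^ 2 = (x i) ^ 2 := by simp [sq_abs]
  calc (x i) ^ 2 = ‖x i‖ ^ 2 := this.symm
    _ ≤ ∑ j, ‖x j‖ ^ 2 := Finset.single_le_sum (f := fun j => ‖x j‖ ^ 2) (fun j _ => sq_nonneg _) (Finset.mem_univ i)

lemma cusp_vol_le (δ : ℝ) (hδ : 0 < δ) :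
    volume (cuspSet ∩ Metric.closedBall (0 : EuclideanSpace ℝ (Fin 2)) δ)
      ≤ ENNReal.ofReal (δ ^ 3 / 3) := by
  set e : EuclideanSpace ℝ (Fin 2) ≃ᵐ ℝ × ℝ :=
    (MeasurableEquiv.toLp 2 (Fin 2 → ℝ)).symm.trans
      (MeasurableEquiv.piFinTwo fun _ => ℝ)
  have he : MeasurePreserving e volume volume :=
    (MeasureTheory.volume_preserving_piFinTwo fun _ => ℝ).comp
      (EuclideanSpace.volume_preserving_symm_measurableEquiv_toLp (Fin 2))
  set T : Set (ℝ × ℝ) := {p : ℝ × ℝ | p.1 ∈ Icc 0 δ ∧ p.2 ∈ Icc 0 (p.1 ^ 2)} with hT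
  have hsub : cuspSet ∩ Metric.closedBall (0 : EuclideanSpace ℝ (Fin 2)) δ ⊆ e ⁻¹' T := by
    rintro x ⟨⟨h0, h1, h2, h3⟩, hb⟩
    have hnorm : ‖x‖ ≤ δ := by simpa [Metric.mem_closedBall] using hb
    have hx0 : x 0 ≤ δ := le_trans (le_trans (le_abs_self _) (coord_le_norm x 0)) hnorm
    have hex : e x = (x 0, x 1) := rfl
    simp only [Set.mem_preimage, hex, hT, Set.mem_setOf_eq]
    exact ⟨⟨h0, hx0⟩, h2, h3⟩
  calc volume (cuspSet ∩ Metric.closedBall (0 : EuclideanSpace ℝ (Fin 2)) δ)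
      ≤ volume (e ⁻¹' T) := measure_mono hsub
    _ = volume T := he.measure_preimage_equiv T
    _ = ENNReal.ofReal (δ ^ 3 / 3) := cusp_plane_vol δ hδ

/-- Example 1: `vol(K ∩ B_δ(0)) ≤ δ³/3` for `0 < δ ≤ 1`, and consequently `K`
does not satisfy the geometric condition (16) with exponent `N = 2` equal to
the ambient dimension. -/
theorem cuspSet_fails_dimension_exponent :
    (∀ δ : ℝ, 0 < δ → δ ≤ 1 →
      volume (cuspSet ∩ Metric.closedBall (0 : EuclideanSpace ℝ (Fin 2)) δ)
        ≤ ENNReal.ofReal (δ ^ 3 / 3)) ∧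
    ¬ ∃ η > (0 : ℝ), ∃ ε > (0 : ℝ), ∀ x ∈ cuspSet, ∀ δ : ℝ, 0 < δ → δ ≤ ε →
      ENNReal.ofReal (η * δ ^ 2) * volume (Metric.ball (0 : EuclideanSpace ℝ (Fin 2)) 1)
        ≤ volume (cuspSet ∩ Metric.closedBall x δ) := by
  constructor
  · intro δ hδ _
    exact cusp_vol_le δ hδ
  · rintro ⟨η, hη, ε, hε, h⟩
    set B := volume (Metric.ball (0 : EuclideanSpace ℝ (Fin 2)) 1) with hB
    have hBpos : 0 < B := Metric.measure_ball_pos volume _ one_pos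
    have hBfin : B < ⊤ := measure_ball_lt_top
    set c : ℝ := B.toReal with hc
    have hcpos : 0 < c := ENNReal.toReal_pos hBpos.ne' hBfin.ne
    set δ : ℝ := min ε (3 * η * c / 2) with hδdef
    have hδpos : 0 < δ := lt_min hε (by positivity)
    have hδε : δ ≤ ε := min_le_left _ _
    have h0K : (0 : EuclideanSpace ℝ (Fin 2)) ∈ cuspSet := by
      simp [cuspSet]
    have hmain := h 0 h0K δ hδpos hδε
    have hub := cusp_vol_le δ hδpos
    have hlt : δ ^ 3 / 3 < η * δ ^ 2 * c := by
      have hδlt : δ < 3 * η * c := lt_of_le_of_lt (min_le_right _ _) (by nlinarith)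
      nlinarith [mul_lt_mul_of_pos_left hδlt (pow_pos hδpos 2)]
    have hBc : B = ENNReal.ofReal c := (ENNReal.ofReal_toReal hBfin.ne).symm
    have : ENNReal.ofReal (η * δ ^ 2) * B = ENNReal.ofReal (η * δ ^ 2 * c) := by
      rw [hBc, ← ENNReal.ofReal_mul (by positivity)]
    have hcontra : ENNReal.ofReal (η * δ ^ 2) * B ≤ ENNReal.ofReal (δ ^ 3 / 3) :=
      hmain.trans hub
    rw [this] at hcontra
    have := (ENNReal.ofReal_le_ofReal_iff (by positivity)).mp hcontra
    linarith
end
end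

section
/- Let K = [−1, 1] ⊆ ℝ and f(x) = x^(2k) for an integer k ≥ 1 (so f_min = 0 and the derivatives of f of all orders up to 2k − 1 vanish at the minimizer 0). Then there exist a constant C > 0 and r₀ ∈ ℕ such that f^(r) ≤ C·(log r)^(2k)/r^(2k) for all r ≥ r₀. -/
open MeasureTheory Polynomial Set

noncomputable section

lemma T_eval_cosh (n : ℤ) (t : ℝ) :
    (Polynomial.Chebyshev.T ℝ n).eval (Real.cosh t) = Real.cosh (n * t) := by
  have h := Polynomial.Chebyshev.T_complex_cos (t * Complex.I) n
  rw [Complex.cos_mul_I] at h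
  have h3 : ((n : ℂ) * (↑t * Complex.I)) = ((n * t : ℝ) : ℂ) * Complex.I := by push_cast; ring
  rw [h3, Complex.cos_mul_I] at h
  rw [← Complex.ofReal_cosh, ← Complex.ofReal_cosh] at h
  have h2 : (Polynomial.Chebyshev.T ℂ n).eval ((Real.cosh t : ℝ) : ℂ)
      = (((Polynomial.Chebyshev.T ℝ n).eval (Real.cosh t) : ℝ) : ℂ) := by
    rw [← Polynomial.Chebyshev.map_T (Complex.ofRealHom : ℝ →+* ℂ) n, Polynomial.eval_map]
    exact Polynomial.eval₂_at_apply (Complex.ofRealHom : ℝ →+* ℂ) (Real.cosh t)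
  rw [h2] at h
  exact_mod_cast h

lemma natDegree_T_le (n : ℕ) : (Polynomial.Chebyshev.T ℝ (n : ℤ)).natDegree ≤ n := by
  induction n using Nat.strong_induction_on with
  | _ n ih =>
    match n with
    | 0 => simp [Polynomial.Chebyshev.T_zero]
    | 1 => simp [Polynomial.Chebyshev.T_one]
    | (n + 2) =>
      have h1 := ih (n + 1) (by omega)
      have h0 := ih n (by omega)
      have : ((n + 2 : ℕ) : ℤ) = (n : ℤ) + 2 := by push_cast; ring
      rw [this, Polynomial.Chebyshev.T_add_two]
      refine (Polynomial.natDegree_sub_le _ _).trans ?_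
      have hm : (2 * Polynomial.X * Polynomial.Chebyshev.T ℝ ((n : ℤ) + 1)).natDegree ≤ n + 2 := by
        refine (Polynomial.natDegree_mul_le).trans ?_
        have : (2 * Polynomial.X : Polynomial ℝ).natDegree ≤ 1 := by
          refine (Polynomial.natDegree_mul_le).trans ?_
          simp
        have h1' := ih (n + 1) (by omega)
        rw [show ((n + 1 : ℕ) : ℤ) = (n : ℤ) + 1 by push_cast; ring] at h1'
        omega
      simp only [max_le_iff]
      constructor
      · exact hm
      · omega

lemma abs_T_le_one (n : ℤ) (y : ℝ) (h1 : -1 ≤ y) (h2 : y ≤ 1) :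
    |(Polynomial.Chebyshev.T ℝ n).eval y| ≤ 1 := by
  have : y = Real.cos (Real.arccos y) := (Real.cos_arccos h1 h2).symm
  rw [this, Polynomial.Chebyshev.T_real_cos]
  exact Real.abs_cos_le_one _

lemma sinh_le_two_mul (t : ℝ) (h0 : 0 ≤ t) (h1 : t ≤ 1/2) : Real.sinh t ≤ 2 * t := by
  have he : 1 - t ≤ Real.exp (-t) := by
    have := Real.add_one_le_exp (-t); linarith
  have hp : (0:ℝ) < Real.exp (-t) := Real.exp_pos _
  have hmul : Real.exp t * Real.exp (-t) = 1 := by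
    rw [← Real.exp_add]; simp
  rw [Real.sinh_eq]
  nlinarith [Real.exp_pos t]

lemma T_eval_ge (m : ℕ) (u s y : ℝ) (hu : 0 ≤ u) (hus : u ≤ s)
    (h1 : Real.cosh u ≤ y) (h2 : y ≤ Real.cosh s) :
    Real.cosh ((m : ℝ) * u) ≤ (Polynomial.Chebyshev.T ℝ (m : ℤ)).eval y := by
  obtain ⟨t, ht, hty⟩ := intermediate_value_Icc hus Real.continuous_cosh.continuousOn ⟨h1, h2⟩
  rw [← hty, T_eval_cosh]
  have hc : (((m : ℤ) : ℝ) * t) = (m : ℝ) * t := by push_cast; ring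
  rw [hc, Real.cosh_le_cosh]
  have h0t : 0 ≤ t := le_trans hu ht.1
  rw [abs_of_nonneg (by positivity), abs_of_nonneg (by positivity)]
  exact mul_le_mul_of_nonneg_left ht.1 (by positivity)

def lasserreBound1 (f : Polynomial ℝ) (r : ℕ) : ℝ :=
  sInf { v : ℝ | ∃ σ : Polynomial ℝ, IsSOSUpTo σ r ∧
    (∫ x in Icc (-1 : ℝ) 1, σ.eval x) = 1 ∧
    v = ∫ x in Icc (-1 : ℝ) 1, f.eval x * σ.eval x }

set_option maxHeartbeats 2000000 in
/-- For `f(x) = x^(2k)` on `K = [-1,1]` (where `f_min = 0` and all derivatives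
of order up to `2k-1` vanish at the minimizer `0`), one has
`f^(r) = O(log^{2k} r / r^{2k})`. -/
theorem lasserre_bound_upper_x_pow (k : ℕ) (hk : 1 ≤ k) :
    ∃ C > (0 : ℝ), ∃ r₀ : ℕ, ∀ r : ℕ, r₀ ≤ r →
      lasserreBound1 (X ^ (2 * k)) r ≤
        C * (Real.log r) ^ (2 * k) / (r : ℝ) ^ (2 * k) := by
  obtain ⟨Bn, hBn⟩ : ∃ x : ℕ, x = 6 * (k + 1) := ⟨_, rfl⟩
  obtain ⟨B, hB⟩ : ∃ x : ℝ, x = (Bn : ℝ) := ⟨_, rfl⟩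
  have hk1 : (1 : ℝ) ≤ (k : ℝ) := by exact_mod_cast hk
  have hB12 : (12 : ℝ) ≤ B := by
    rw [hB, hBn]; push_cast; linarith
  have hB0 : (0 : ℝ) < B := by linarith
  refine ⟨(Real.sqrt 2 * B) ^ (2 * k) + 16, by positivity, 150 * (k + 1) ^ 2, ?_⟩
  intro r hr
  have hk4 : 4 ≤ (k + 1) ^ 2 := by
    calc (4:ℕ) = 2 ^ 2 := by norm_num
    _ ≤ (k+1)^2 := Nat.pow_le_pow_left (by omega) 2
  have hr600 : 600 ≤ r := by
    calc (600:ℕ) = 150 * 4 := by norm_num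
    _ ≤ 150 * ((k+1)^2) := Nat.mul_le_mul le_rfl hk4
    _ ≤ r := hr
  have hr0 : (0 : ℝ) < r := by exact_mod_cast Nat.cast_pos.mpr (by omega)
  have hr600R : (600 : ℝ) ≤ r := by exact_mod_cast Nat.cast_le.mpr hr600
  obtain ⟨L, hLdef⟩ : ∃ x : ℝ, x = Real.log r := ⟨_, rfl⟩
  have hL1 : 1 ≤ L := by
    rw [hLdef, Real.le_log_iff_exp_le hr0]
    have := Real.exp_one_lt_d9
    linarith
  have hL0 : 0 < L := by linarith
  have hsqr : Real.sqrt r * Real.sqrt r = r := Real.mul_self_sqrt hr0.le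
  have hsqr0 : 0 < Real.sqrt r := Real.sqrt_pos.mpr hr0
  have hLsq : L ≤ 2 * Real.sqrt r := by
    have h1 : Real.log (Real.sqrt r) = L / 2 := by rw [hLdef]; exact Real.log_sqrt hr0.le
    have h2 : Real.log (Real.sqrt r) ≤ Real.sqrt r - 1 := Real.log_le_sub_one_of_pos hsqr0
    linarith
  obtain ⟨sp, hspdef⟩ : ∃ x : ℝ, x = B * L / r := ⟨_, rfl⟩
  have hsp0 : 0 < sp := by rw [hspdef]; positivity
  have h4B : 4 * B ^ 2 ≤ (r : ℝ) := by
    have hn : (4 * Bn ^ 2 : ℕ) ≤ r := by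
      calc (4 * Bn ^ 2 : ℕ) = 144 * (k+1)^2 := by rw [hBn]; ring
      _ ≤ 150 * (k+1)^2 := Nat.mul_le_mul (by norm_num) le_rfl
      _ ≤ r := hr
    calc (4 : ℝ) * B ^ 2 = ((4 * Bn ^ 2 : ℕ) : ℝ) := by rw [hB]; push_cast; ring
    _ ≤ r := by exact_mod_cast Nat.cast_le.mpr hn
  have h2B : 2 * B ≤ Real.sqrt r := by
    have h := Real.sqrt_le_sqrt h4B
    rwa [show (4 : ℝ) * B ^ 2 = (2 * B) ^ 2 by ring, Real.sqrt_sq (by positivity)] at h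
  have hsp1 : sp ≤ 1 := by
    rw [hspdef, div_le_one hr0]
    nlinarith
  obtain ⟨m, hmdef⟩ : ∃ x : ℕ, x = r / 2 := ⟨_, rfl⟩
  have hm2 : 2 * m ≤ r := by omega
  have hm3 : (r : ℝ) ≤ 3 * m := by
    have h : r ≤ 3 * m := by omega
    exact_mod_cast Nat.cast_le.mpr h
  obtain ⟨a, hadef⟩ : ∃ x : ℝ, x = Real.sqrt (Real.cosh sp - 1) := ⟨_, rfl⟩
  have hc1 : 1 < Real.cosh sp := Real.one_lt_cosh.mpr hsp0.ne'
  have ha0 : 0 < a := by rw [hadef]; exact Real.sqrt_pos.mpr (by linarith)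
  have ha2 : a ^ 2 = Real.cosh sp - 1 := by rw [hadef]; exact Real.sq_sqrt (by linarith)
  have hsh : Real.cosh sp - 1 = 2 * Real.sinh (sp / 2) ^ 2 := by
    have hs2 := Real.cosh_two_mul (sp / 2)
    rw [show 2 * (sp / 2) = sp by ring] at hs2
    have := Real.cosh_sq (sp / 2)
    linarith
  have hsinh_lb : sp / 2 ≤ Real.sinh (sp / 2) := Real.self_le_sinh_iff.mpr (by linarith)
  have halow : sp / 2 ≤ a := by
    rw [hadef, show (sp / 2) = Real.sqrt ((sp/2)^2) from (Real.sqrt_sq (by linarith)).symm]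
    apply Real.sqrt_le_sqrt
    nlinarith
  have hahi : a ≤ Real.sqrt 2 * sp := by
    have hsinh_ub : Real.sinh (sp / 2) ≤ sp := by
      have := sinh_le_two_mul (sp / 2) (by linarith) (by linarith)
      linarith
    have h1 : a ^ 2 ≤ (Real.sqrt 2 * sp) ^ 2 := by
      rw [mul_pow, Real.sq_sqrt (by norm_num : (0:ℝ) ≤ 2), ha2]
      have h2 : Real.sinh (sp/2) ^ 2 ≤ sp ^ 2 := pow_le_pow_left₀ (by linarith) hsinh_ub 2
      linarith
    exact le_of_pow_le_pow_left₀ (by norm_num) (by positivity) h1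
  have hcosh2 : Real.cosh sp ≤ 2 := by
    have h1 : Real.cosh sp ≤ Real.cosh 1 := by
      rw [Real.cosh_le_cosh, abs_of_nonneg hsp0.le, abs_of_nonneg (by norm_num : (0:ℝ) ≤ 1)]
      exact hsp1
    have h2 : Real.cosh 1 = (Real.exp 1 + Real.exp (-1)) / 2 := Real.cosh_eq 1
    have h3 := Real.exp_one_lt_d9
    have h4 : Real.exp (-1) ≤ 1 := by
      rw [Real.exp_le_one_iff]; norm_num
    linarith
  have ha1 : a ≤ 1 := by
    have h1 : a ^ 2 ≤ 1 ^ 2 := by rw [ha2]; nlinarith [hcosh2]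
    exact le_of_pow_le_pow_left₀ (by norm_num) (by norm_num) h1
  -- the needle polynomial
  obtain ⟨P, hPdef⟩ : ∃ p : Polynomial ℝ,
      p = (Polynomial.Chebyshev.T ℝ (m : ℤ)).comp (Polynomial.C (1 + a ^ 2) - Polynomial.X ^ 2) :=
    ⟨_, rfl⟩
  have hPdeg : P.natDegree ≤ r := by
    rw [hPdef]
    refine (Polynomial.natDegree_comp_le).trans ?_
    have h1 : (Polynomial.Chebyshev.T ℝ (m : ℤ)).natDegree ≤ m := natDegree_T_le m
    have h2 : (Polynomial.C (1 + a ^ 2) - Polynomial.X ^ 2 : Polynomial ℝ).natDegree ≤ 2 := by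
      refine (Polynomial.natDegree_sub_le _ _).trans ?_
      rw [Polynomial.natDegree_C, Polynomial.natDegree_X_pow]
      omega
    calc (Polynomial.Chebyshev.T ℝ (m : ℤ)).natDegree *
        (Polynomial.C (1 + a ^ 2) - Polynomial.X ^ 2 : Polynomial ℝ).natDegree
        ≤ m * 2 := Nat.mul_le_mul h1 h2
    _ ≤ r := by omega
  have hPeval : ∀ x : ℝ,
      P.eval x = (Polynomial.Chebyshev.T ℝ (m : ℤ)).eval (1 + a ^ 2 - x ^ 2) := by
    intro x; rw [hPdef]; simp [Polynomial.eval_comp]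
  have hQb : ∀ x : ℝ, a ≤ |x| → |x| ≤ 1 → (P.eval x) ^ 2 ≤ 1 := by
    intro x hax hx1
    have hx2 : x ^ 2 ≤ 1 := by
      have h := pow_le_pow_left₀ (abs_nonneg x) hx1 2
      rw [sq_abs] at h; simpa using h
    have hax2 : a ^ 2 ≤ x ^ 2 := by
      have h := pow_le_pow_left₀ ha0.le hax 2
      rwa [sq_abs] at h
    have habs := abs_T_le_one (m : ℤ) (1 + a ^ 2 - x ^ 2)
      (by nlinarith [sq_nonneg a]) (by linarith)
    rw [hPeval x, ← sq_abs]
    have h := pow_le_pow_left₀ (abs_nonneg _) habs 2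
    simpa using h
  have hQlow : ∀ x : ℝ, |x| ≤ a / 2 → Real.exp ((m : ℝ) * sp / 2) / 2 ≤ P.eval x := by
    intro x hx
    have hx2 : x ^ 2 ≤ a ^ 2 / 4 := by
      have h := pow_le_pow_left₀ (abs_nonneg x) hx 2
      rw [sq_abs] at h
      nlinarith
    have hyc : Real.cosh (sp / 2) ≤ 1 + a ^ 2 - x ^ 2 := by
      have hs2 := Real.cosh_two_mul (sp / 2)
      rw [show 2 * (sp / 2) = sp by ring] at hs2
      have hc2 := Real.cosh_sq (sp / 2)
      have h1c := Real.one_le_cosh (sp / 2)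
      nlinarith
    have hyc2 : 1 + a ^ 2 - x ^ 2 ≤ Real.cosh sp := by
      nlinarith [sq_nonneg x]
    have h := T_eval_ge m (sp / 2) sp (1 + a ^ 2 - x ^ 2) (by linarith) (by linarith) hyc hyc2
    have hco : Real.exp ((m : ℝ) * (sp / 2)) / 2 ≤ Real.cosh ((m : ℝ) * (sp / 2)) := by
      rw [Real.cosh_eq]
      have := Real.exp_pos (-((m : ℝ) * (sp / 2)))
      linarith
    rw [hPeval x, show (m : ℝ) * sp / 2 = (m : ℝ) * (sp / 2) by ring]
    linarith
  -- integrals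
  have hPcont : Continuous fun x : ℝ => (P.eval x) ^ 2 := (Polynomial.continuous P).pow 2
  have hint1 : IntegrableOn (fun x : ℝ => (P.eval x) ^ 2) (Icc (-1 : ℝ) 1) :=
    hPcont.integrableOn_Icc
  obtain ⟨I, hIdef⟩ : ∃ v : ℝ, v = ∫ x in Icc (-1 : ℝ) 1, (P.eval x) ^ 2 := ⟨_, rfl⟩
  have hsub : Icc (-(a / 2)) (a / 2) ⊆ Icc (-1 : ℝ) 1 := Icc_subset_Icc (by linarith) (by linarith)
  have hIlb : Real.exp ((m : ℝ) * sp) / 4 * a ≤ I := by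
    have step1 : (∫ x in Icc (-(a / 2)) (a / 2), (P.eval x) ^ 2) ≤ I := by
      rw [hIdef]
      exact setIntegral_mono_set hint1 (Filter.Eventually.of_forall fun x => sq_nonneg _)
        (HasSubset.Subset.eventuallyLE hsub)
    have hμ : (volume (Icc (-(a / 2)) (a / 2))).toReal = a := by
      rw [Real.volume_Icc, ENNReal.toReal_ofReal (by linarith)]; ring
    have hptwise : ∀ x ∈ Icc (-(a / 2)) (a / 2),
        (Real.exp ((m : ℝ) * sp / 2) / 2) ^ 2 ≤ (P.eval x) ^ 2 := by
      intro x hx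
      have habs : |x| ≤ a / 2 := abs_le.mpr ⟨by linarith [hx.1], hx.2⟩
      exact pow_le_pow_left₀ (by positivity) (hQlow x habs) 2
    have step2 := MeasureTheory.setIntegral_ge_of_const_le measurableSet_Icc
      (by rw [Real.volume_Icc]; exact ENNReal.ofReal_ne_top) hptwise (hint1.mono_set hsub)
    rw [measureReal_def, hμ, smul_eq_mul] at step2
    have hsqe : (Real.exp ((m : ℝ) * sp / 2) / 2) ^ 2 = Real.exp ((m : ℝ) * sp) / 4 := by
      have he : Real.exp ((m : ℝ) * sp / 2) * Real.exp ((m : ℝ) * sp / 2)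
          = Real.exp ((m : ℝ) * sp) := by
        rw [← Real.exp_add]; ring_nf
      calc (Real.exp ((m : ℝ) * sp / 2) / 2) ^ 2
          = Real.exp ((m : ℝ) * sp / 2) * Real.exp ((m : ℝ) * sp / 2) / 4 := by ring
      _ = Real.exp ((m : ℝ) * sp) / 4 := by rw [he]
    rw [hsqe] at step2
    linarith
  have hIpos : 0 < I := lt_of_lt_of_le (by positivity) hIlb
  -- numerator integral
  have hvolfin : volume (Icc (-1 : ℝ) 1) < ⊤ := by
    rw [Real.volume_Icc]; exact ENNReal.ofReal_lt_top
  have hcont2 : Continuous fun x : ℝ => x ^ (2 * k) * (P.eval x) ^ 2 :=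
    (continuous_pow _).mul hPcont
  have hint2 : IntegrableOn (fun x : ℝ => x ^ (2 * k) * (P.eval x) ^ 2) (Icc (-1 : ℝ) 1) :=
    hcont2.integrableOn_Icc
  have hintg : IntegrableOn (fun x : ℝ => a ^ (2 * k) * (P.eval x) ^ 2 + 1) (Icc (-1 : ℝ) 1) :=
    (hint1.const_mul _).add (integrableOn_const hvolfin.ne)
  obtain ⟨N, hNdef⟩ : ∃ v : ℝ, v = ∫ x in Icc (-1 : ℝ) 1, x ^ (2 * k) * (P.eval x) ^ 2 := ⟨_, rfl⟩
  have hN_ub : N ≤ a ^ (2 * k) * I + 2 := by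
    have hpw : ∀ x ∈ Icc (-1 : ℝ) 1,
        x ^ (2 * k) * (P.eval x) ^ 2 ≤ a ^ (2 * k) * (P.eval x) ^ 2 + 1 := by
      intro x hx
      have hx1 : |x| ≤ 1 := abs_le.mpr ⟨hx.1, hx.2⟩
      rcases le_or_gt (|x|) a with hxa | hxa
      · have hxk : x ^ (2 * k) ≤ a ^ (2 * k) := by
          rw [pow_mul, pow_mul]
          refine pow_le_pow_left₀ (sq_nonneg x) ?_ k
          have h := pow_le_pow_left₀ (abs_nonneg x) hxa 2
          rwa [sq_abs] at h
        nlinarith [sq_nonneg (P.eval x)]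
      · have hq := hQb x hxa.le hx1
        have hxk : x ^ (2 * k) ≤ 1 := by
          rw [pow_mul]
          refine pow_le_one₀ (sq_nonneg x) ?_
          have h := pow_le_pow_left₀ (abs_nonneg x) hx1 2
          rw [sq_abs] at h; simpa using h
        have h0 : (0 : ℝ) ≤ x ^ (2 * k) := by rw [pow_mul]; positivity
        have h1 : x ^ (2 * k) * (P.eval x) ^ 2 ≤ 1 := by nlinarith [sq_nonneg (P.eval x)]
        have h2 : 0 ≤ a ^ (2 * k) * (P.eval x) ^ 2 := by positivity
        linarith
    have step := MeasureTheory.setIntegral_mono_on hint2 hintg measurableSet_Icc hpw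
    have hrhs : (∫ x in Icc (-1 : ℝ) 1, (a ^ (2 * k) * (P.eval x) ^ 2 + 1))
        = a ^ (2 * k) * I + 2 := by
      rw [MeasureTheory.integral_add (hint1.const_mul _)
        (integrableOn_const hvolfin.ne),
        MeasureTheory.integral_const_mul, MeasureTheory.setIntegral_const, ← hIdef,
        measureReal_def, Real.volume_Icc, ENNReal.toReal_ofReal (by norm_num : (0:ℝ) ≤ 1 - (-1))]
      norm_num
    rw [hNdef]
    rw [hrhs] at step
    exact step
  -- the SOS certificate
  obtain ⟨c, hcdef⟩ : ∃ x : ℝ, x = (Real.sqrt I)⁻¹ := ⟨_, rfl⟩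
  have hc2 : c ^ 2 = I⁻¹ := by
    rw [hcdef, inv_pow, Real.sq_sqrt hIpos.le]
  have hmem : N / I ∈ { v : ℝ | ∃ σ : Polynomial ℝ, IsSOSUpTo σ r ∧
      (∫ x in Icc (-1 : ℝ) 1, σ.eval x) = 1 ∧
      v = ∫ x in Icc (-1 : ℝ) 1, (X ^ (2 * k) : Polynomial ℝ).eval x * σ.eval x } := by
    refine ⟨(Polynomial.C c * P) ^ 2, ⟨1, ![Polynomial.C c * P], ?_, ?_⟩, ?_, ?_⟩
    · intro i
      fin_cases i
      simpa using (Polynomial.natDegree_C_mul_le c P).trans hPdeg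
    · simp [Fin.sum_univ_one]
    · have hev : ∀ x ∈ Icc (-1 : ℝ) 1,
          ((Polynomial.C c * P) ^ 2).eval x = c ^ 2 * (P.eval x) ^ 2 := by
        intro x _
        simp [mul_pow]
      rw [MeasureTheory.setIntegral_congr_fun measurableSet_Icc hev,
        MeasureTheory.integral_const_mul, ← hIdef, hc2]
      exact inv_mul_cancel₀ hIpos.ne'
    · have hev : ∀ x ∈ Icc (-1 : ℝ) 1,
          (X ^ (2 * k) : Polynomial ℝ).eval x * ((Polynomial.C c * P) ^ 2).eval x
          = c ^ 2 * (x ^ (2 * k) * (P.eval x) ^ 2) := by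
        intro x _
        simp [mul_pow]
        ring
      rw [MeasureTheory.setIntegral_congr_fun measurableSet_Icc hev,
        MeasureTheory.integral_const_mul, ← hNdef, hc2, inv_mul_eq_div]
  have hmain : lasserreBound1 (X ^ (2 * k)) r ≤ N / I := by
    unfold lasserreBound1
    refine csInf_le ⟨0, ?_⟩ hmem
    rintro v ⟨σ', ⟨mm, p, hdeg, rfl⟩, hnorm, rfl⟩
    apply MeasureTheory.setIntegral_nonneg measurableSet_Icc
    intro x hx
    apply mul_nonneg
    · have hxe : (X ^ (2 * k) : Polynomial ℝ).eval x = x ^ (2 * k) := by simp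
      rw [hxe, pow_mul]
      positivity
    · rw [Polynomial.eval_finset_sum]
      apply Finset.sum_nonneg
      intro i _
      rw [Polynomial.eval_pow]
      positivity
  -- key exponential estimate
  have hexp_lb : (r : ℝ) ^ (2 * k) ≤ a * Real.exp ((m : ℝ) * sp) := by
    have h12 : 12 ≤ B * L := by
      calc (12 : ℝ) = 12 * 1 := by ring
      _ ≤ B * L := mul_le_mul hB12 hL1 (by norm_num) (by linarith)
    have h6r : 6 / (r : ℝ) ≤ a := by
      have h1 : 6 / (r : ℝ) ≤ sp / 2 := by
        rw [hspdef, div_div, div_le_div_iff₀ hr0 (by positivity)]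
        have h2 := mul_le_mul_of_nonneg_right h12 hr0.le
        linarith
      linarith
    have hexp : (r : ℝ) ^ (2 * (k + 1)) ≤ Real.exp ((m : ℝ) * sp) := by
      have hBval : B = 6 * ((k : ℝ) + 1) := by rw [hB, hBn]; push_cast; ring
      have hms : (2 * ((k : ℝ) + 1)) * L ≤ (m : ℝ) * sp := by
        have h1 : B * L / r * (r / 3) ≤ B * L / r * m := by
          apply mul_le_mul_of_nonneg_left (by linarith) (by positivity)
        have h2 : B * L / r * (r / 3) = B * L / 3 := by field_simp
        have h3 : (m : ℝ) * sp = B * L / r * m := by rw [hspdef]; ring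
        have h4 : (2 * ((k : ℝ) + 1)) * L = B * L / 3 := by rw [hBval]; ring
        rw [h3, h4]
        linarith
      have hmono := Real.exp_le_exp.mpr hms
      have hh : Real.exp ((2 * ((k : ℝ) + 1)) * L) = (r : ℝ) ^ (2 * (k + 1)) := by
        rw [show (2 * ((k : ℝ) + 1)) = ((2 * (k + 1) : ℕ) : ℝ) by push_cast; ring,
          Real.exp_nat_mul, hLdef, Real.exp_log hr0]
      rw [hh] at hmono
      exact hmono
    have hcomb : (6 / (r : ℝ)) * (r : ℝ) ^ (2 * (k + 1)) ≤ a * Real.exp ((m : ℝ) * sp) :=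
      mul_le_mul h6r hexp (by positivity) (le_trans (by positivity) h6r)
    have heq : (6 / (r : ℝ)) * (r : ℝ) ^ (2 * (k + 1)) = 6 * ((r : ℝ) ^ (2 * k + 1)) := by
      rw [show 2 * (k + 1) = (2 * k + 1) + 1 by ring, pow_succ]
      field_simp
    rw [heq] at hcomb
    have hfin : (r : ℝ) ^ (2 * k) ≤ 6 * ((r : ℝ) ^ (2 * k + 1)) := by
      have h1 : (r : ℝ) ^ (2 * k) * 1 ≤ (r : ℝ) ^ (2 * k) * (6 * r) := by
        apply mul_le_mul_of_nonneg_left (by linarith) (by positivity)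
      calc (r : ℝ) ^ (2 * k) = (r : ℝ) ^ (2 * k) * 1 := by ring
      _ ≤ (r : ℝ) ^ (2 * k) * (6 * r) := h1
      _ = 6 * ((r : ℝ) ^ (2 * k + 1)) := by rw [pow_succ]; ring
    linarith
  -- bound N / I
  have hNI : N / I ≤ a ^ (2 * k) + 8 / (a * Real.exp ((m : ℝ) * sp)) := by
    have h1 : N / I ≤ (a ^ (2 * k) * I + 2) / I := by gcongr
    have h2 : (a ^ (2 * k) * I + 2) / I = a ^ (2 * k) + 2 / I := by field_simp
    have h3 : 2 / I ≤ 8 / (a * Real.exp ((m : ℝ) * sp)) := by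
      rw [div_le_div_iff₀ hIpos (by positivity)]
      linarith [hIlb]
    rw [h2] at h1
    linarith
  have hterm2 : 8 / (a * Real.exp ((m : ℝ) * sp)) ≤ 16 * L ^ (2 * k) / (r : ℝ) ^ (2 * k) := by
    have h1 : 8 / (a * Real.exp ((m : ℝ) * sp)) ≤ 8 / (r : ℝ) ^ (2 * k) := by
      rw [div_le_div_iff₀ (by positivity) (by positivity)]
      linarith [hexp_lb]
    have hLk : (1 : ℝ) ≤ L ^ (2 * k) := by
      calc (1 : ℝ) = 1 ^ (2 * k) := (one_pow _).symm
      _ ≤ L ^ (2 * k) := pow_le_pow_left₀ zero_le_one hL1 _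
    have h2 : 8 / (r : ℝ) ^ (2 * k) ≤ 16 * L ^ (2 * k) / (r : ℝ) ^ (2 * k) := by
      gcongr
      linarith
    linarith
  have hterm1 : a ^ (2 * k) ≤ (Real.sqrt 2 * B) ^ (2 * k) * L ^ (2 * k) / (r : ℝ) ^ (2 * k) := by
    have h1 : a ≤ Real.sqrt 2 * B * L / r := by
      rw [hspdef] at hahi
      calc a ≤ Real.sqrt 2 * (B * L / r) := hahi
      _ = Real.sqrt 2 * B * L / r := by ring
    have h2 : a ^ (2 * k) ≤ (Real.sqrt 2 * B * L / r) ^ (2 * k) :=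
      pow_le_pow_left₀ ha0.le h1 _
    calc a ^ (2 * k) ≤ (Real.sqrt 2 * B * L / r) ^ (2 * k) := h2
    _ = (Real.sqrt 2 * B) ^ (2 * k) * L ^ (2 * k) / (r : ℝ) ^ (2 * k) := by
      rw [show Real.sqrt 2 * B * L / r = (Real.sqrt 2 * B) * L / r by ring, div_pow, mul_pow]
  rw [← hLdef]
  calc lasserreBound1 (X ^ (2 * k)) r ≤ N / I := hmain
  _ ≤ a ^ (2 * k) + 8 / (a * Real.exp ((m : ℝ) * sp)) := hNI
  _ ≤ (Real.sqrt 2 * B) ^ (2 * k) * L ^ (2 * k) / (r : ℝ) ^ (2 * k)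
      + 16 * L ^ (2 * k) / (r : ℝ) ^ (2 * k) := add_le_add hterm1 hterm2
  _ = ((Real.sqrt 2 * B) ^ (2 * k) + 16) * L ^ (2 * k) / (r : ℝ) ^ (2 * k) := by ring
end
end

section
/- Let μ be a finite Borel measure on ℝ with compact support containing infinitely many points, and let r ∈ ℕ. Let p be any nonzero real polynomial of degree r + 1 that is orthogonal with respect to μ to all polynomials of degree at most r (i.e., ∫ p·q dμ = 0 for all q with deg q ≤ r). Then p has r + 1 real roots, and the infimum inf { ∫ t·s(t) dμ(t) : s ∈ Σ[t]_r, ∫ s dμ = 1 } equals the smallest real root of p. -/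
open MeasureTheory Polynomial Set

noncomputable section

section Aux

lemma aux_integrable_poly (μ : Measure ℝ) [IsFiniteMeasure μ]
    (hcompact : ∃ S : Set ℝ, IsCompact S ∧ μ Sᶜ = 0)
    (f : Polynomial ℝ) : Integrable (fun t => f.eval t) μ := by
  obtain ⟨S, hS, h0⟩ := hcompact
  have hres : μ.restrict S = μ := by
    apply Measure.restrict_eq_self_of_ae_mem
    exact (ae_iff).2 h0
  rw [← hres]
  exact (f.continuous_aeval.continuousOn).integrableOn_compact hS

lemma aux_not_ae_zero (μ : Measure ℝ)
    (hinfinite : ∀ S : Finset ℝ, μ ((S : Set ℝ)ᶜ) ≠ 0)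
    (f : Polynomial ℝ) (hf : f ≠ 0) : ¬ ((fun t => f.eval t) =ᵐ[μ] 0) := by
  intro h
  apply hinfinite f.roots.toFinset
  have hsub : (↑f.roots.toFinset : Set ℝ)ᶜ ⊆ {t : ℝ | ¬ (fun t => f.eval t) t = 0} := by
    intro t ht
    simp only [mem_compl_iff, Finset.coe_sort_coe, Finset.mem_coe, Multiset.mem_toFinset,
      mem_roots, hf, ne_eq, not_false_iff, true_and] at ht ⊢
    exact ht
  exact measure_mono_null hsub (ae_iff.1 h)

lemma aux_integral_pos (μ : Measure ℝ) [IsFiniteMeasure μ]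
    (hcompact : ∃ S : Set ℝ, IsCompact S ∧ μ Sᶜ = 0)
    (hinfinite : ∀ S : Finset ℝ, μ ((S : Set ℝ)ᶜ) ≠ 0)
    (f : Polynomial ℝ) (hf : f ≠ 0) (hnn : ∀ x : ℝ, 0 ≤ f.eval x) :
    0 < ∫ t, f.eval t ∂μ := by
  have hint := aux_integrable_poly μ hcompact f
  have hnonneg : 0 ≤ ∫ t, f.eval t ∂μ := integral_nonneg hnn
  rcases hnonneg.lt_or_eq with h | h
  · exact h
  · exfalso
    apply aux_not_ae_zero μ hinfinite f hf
    exact (integral_eq_zero_iff_of_nonneg hnn hint).1 h.symm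

theorem aux_sign_constant : ∀ (n : ℕ) (f : Polynomial ℝ), f.natDegree = n →
    (∀ x : ℝ, f.IsRoot x → Even (f.rootMultiplicity x)) →
    (∀ x : ℝ, 0 ≤ f.eval x) ∨ (∀ x : ℝ, f.eval x ≤ 0) := by
  intro n
  induction n using Nat.strong_induction_on with
  | _ n ih =>
    intro f hfn heven
    by_cases hf0 : f = 0
    · left; simp [hf0]
    by_cases hroot : ∃ a : ℝ, f.IsRoot a
    · obtain ⟨a, ha⟩ := hroot
      set m := f.rootMultiplicity a with hm
      have hmeven : Even m := heven a ha
      have hmpos : 0 < m := (f.rootMultiplicity_pos hf0).2 ha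
      obtain ⟨g, hg⟩ : (X - C a) ^ m ∣ f := f.pow_rootMultiplicity_dvd a
      have hg0 : g ≠ 0 := by rintro rfl; simp at hg; exact hf0 hg
      have hXm : ((X - C a : Polynomial ℝ) ^ m) ≠ 0 := pow_ne_zero _ (X_sub_C_ne_zero a)
      have hdeg : f.natDegree = m + g.natDegree := by
        rw [hg, natDegree_mul hXm hg0, natDegree_pow, natDegree_X_sub_C, mul_one]
      have hglt : g.natDegree < n := by omega
      have hgeven : ∀ x : ℝ, g.IsRoot x → Even (g.rootMultiplicity x) := by
        intro x hx
        have hfx : f.IsRoot x := by rw [hg]; simp [IsRoot] at hx ⊢; right; exact hx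
        have hrm : f.rootMultiplicity x = ((X - C a) ^ m).rootMultiplicity x
            + g.rootMultiplicity x := by
          rw [hg]; exact rootMultiplicity_mul (hg ▸ hf0)
        rcases eq_or_ne x a with rfl | hxa
        · have : ((X - C x) ^ m).rootMultiplicity x = m := by
            simp [rootMultiplicity_X_sub_C_pow]
          have hfe := heven x hfx
          rw [hrm, this] at hfe
          exact (Nat.even_add.mp hfe).mp hmeven
        · have : ((X - C a) ^ m).rootMultiplicity x = 0 := by
            rw [rootMultiplicity_eq_zero]
            simp [IsRoot, sub_eq_zero, hxa]
          have hfe := heven x hfx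
          rw [hrm, this, zero_add] at hfe
          exact hfe
      have hpow : ∀ x : ℝ, 0 ≤ (x - a) ^ m := fun x => hmeven.pow_nonneg _
      have hfx : ∀ x : ℝ, f.eval x = (x - a) ^ m * g.eval x := by
        intro x; rw [hg]; simp
      rcases ih _ hglt g rfl hgeven with hpos | hneg
      · left; intro x; rw [hfx]; exact mul_nonneg (hpow x) (hpos x)
      · right; intro x; rw [hfx]; exact mul_nonpos_of_nonneg_of_nonpos (hpow x) (hneg x)
    · push_neg at hroot
      by_contra hcon
      push_neg at hcon
      obtain ⟨⟨x, hx⟩, ⟨y, hy⟩⟩ := hcon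
      have hc : ContinuousOn (fun t => f.eval t) (uIcc x y) :=
        (f.continuous_aeval).continuousOn
      have : (0 : ℝ) ∈ uIcc (f.eval x) (f.eval y) :=
        mem_uIcc.2 (Or.inl ⟨le_of_lt (by linarith), le_of_lt (by linarith)⟩)
      obtain ⟨c, _, hc0⟩ := intermediate_value_uIcc hc this
      exact hroot c hc0

end Aux

/-- Classical fact: for a finite Borel measure `μ` with compact support
containing infinitely many points, the degree-`(r+1)` orthogonal polynomial has
`r+1` distinct real roots, and the Lasserre-type bound
`inf { ∫ t·s(t) dμ : s ∈ Σ[t]_r, ∫ s dμ = 1 }` equals its smallest root. -/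
theorem orthogonal_polynomial_roots_and_sos_bound
    (μ : Measure ℝ) [IsFiniteMeasure μ]
    (hcompact : ∃ S : Set ℝ, IsCompact S ∧ μ Sᶜ = 0)
    (hinfinite : ∀ S : Finset ℝ, μ ((S : Set ℝ)ᶜ) ≠ 0)
    (r : ℕ) (p : Polynomial ℝ) (hp : p ≠ 0) (hdeg : p.natDegree = r + 1)
    (horth : ∀ q : Polynomial ℝ, q.natDegree ≤ r → (∫ t, p.eval t * q.eval t ∂μ) = 0) :
    p.roots.toFinset.card = r + 1 ∧
    sInf { v : ℝ | ∃ s : Polynomial ℝ, IsSOSUpTo s r ∧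
        (∫ t, s.eval t ∂μ) = 1 ∧ v = ∫ t, t * s.eval t ∂μ } =
      sInf { t : ℝ | p.IsRoot t } := by
  have hint : ∀ f : Polynomial ℝ, Integrable (fun t => f.eval t) μ :=
    aux_integrable_poly μ hcompact
  -- Part 1: the roots
  set T : Finset ℝ := p.roots.toFinset.filter (fun t => Odd (p.rootMultiplicity t)) with hT
  have hTcard : r + 1 ≤ T.card := by
    by_contra hcon
    push_neg at hcon
    have hTr : T.card ≤ r := by omega
    set q : Polynomial ℝ := ∏ t ∈ T, (X - C t) with hqdef
    have hq0 : q ≠ 0 := by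
      apply Finset.prod_ne_zero_iff.2
      intro t _; exact X_sub_C_ne_zero t
    have hqdeg : q.natDegree = T.card := by
      rw [hqdef, natDegree_prod _ _ (fun t _ => X_sub_C_ne_zero t)]
      simp [natDegree_X_sub_C]
    have hqroots : q.roots = T.val := roots_prod_X_sub_C T
    have hpq0 : p * q ≠ 0 := mul_ne_zero hp hq0
    -- even multiplicities of p*q
    have heven : ∀ x : ℝ, (p * q).IsRoot x → Even ((p * q).rootMultiplicity x) := by
      intro x hx
      have hrm : (p * q).rootMultiplicity x = p.rootMultiplicity x + q.rootMultiplicity x :=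
        rootMultiplicity_mul hpq0
      have hqx : q.rootMultiplicity x = if x ∈ T then 1 else 0 := by
        rw [← count_roots, hqroots]
        split_ifs with hmem
        · exact Multiset.count_eq_one_of_mem T.nodup hmem
        · exact Multiset.count_eq_zero_of_notMem (by simpa using hmem)
      have hproot : p.IsRoot x := by
        have hx' : p.eval x = 0 ∨ q.eval x = 0 := by simpa [IsRoot, eval_mul] using hx
        rcases hx' with h | h
        · exact h
        · have hxq : x ∈ q.roots := (mem_roots hq0).2 h
          rw [hqroots] at hxq
          have hxT : x ∈ T := by simpa using hxq
          have := Finset.mem_filter.1 hxT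
          exact (mem_roots hp).1 (Multiset.mem_toFinset.1 this.1)
      by_cases hmem : x ∈ T
      · have hodd : Odd (p.rootMultiplicity x) := (Finset.mem_filter.1 hmem).2
        rw [hrm, hqx, if_pos hmem]
        obtain ⟨k, hk⟩ := hodd
        exact ⟨k + 1, by omega⟩
      · have hxroots : x ∈ p.roots.toFinset :=
          Multiset.mem_toFinset.2 ((mem_roots hp).2 hproot)
        have hnotodd : ¬ Odd (p.rootMultiplicity x) := by
          intro h
          exact hmem (Finset.mem_filter.2 ⟨hxroots, h⟩)
        rw [Nat.not_odd_iff_even] at hnotodd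
        rw [hrm, hqx, if_neg hmem, add_zero]
        exact hnotodd
    have hintzero : (∫ t, (p * q).eval t ∂μ) = 0 := by
      have := horth q (hqdeg ▸ hTr)
      simpa [eval_mul] using this
    rcases aux_sign_constant _ (p * q) rfl heven with hpos | hneg
    · have := (integral_eq_zero_iff_of_nonneg hpos (hint _)).1 hintzero
      exact aux_not_ae_zero μ hinfinite _ hpq0 this
    · have hpos' : ∀ x : ℝ, 0 ≤ (-(p * q)).eval x := by
        intro x
        have h8 := hneg x
        rw [eval_neg]
        linarith
      have hintzero' : (∫ t, (-(p * q)).eval t ∂μ) = 0 := by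
        simp only [eval_neg]
        rw [integral_neg, hintzero, neg_zero]
      have := (integral_eq_zero_iff_of_nonneg hpos' (hint _)).1 hintzero'
      exact aux_not_ae_zero μ hinfinite (-(p * q)) (neg_ne_zero.2 hpq0) this
  have hcard : p.roots.toFinset.card = r + 1 := by
    have h1 : T.card ≤ p.roots.toFinset.card := Finset.card_le_card (Finset.filter_subset _ _)
    have h2 : p.roots.toFinset.card ≤ Multiset.card p.roots := Multiset.toFinset_card_le _
    have h3 : Multiset.card p.roots ≤ p.natDegree := p.card_roots'
    omega
  refine ⟨hcard, ?_⟩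
  -- Part 2: quadrature
  set R : Finset ℝ := p.roots.toFinset with hR
  have hRcard : R.card = r + 1 := hcard
  have hRne : R.Nonempty := Finset.card_pos.1 (by omega)
  have hinj : Set.InjOn (id : ℝ → ℝ) ↑R := fun a _ b _ h => h
  have hroot_of_mem : ∀ t ∈ R, p.IsRoot t := by
    intro t ht
    exact (mem_roots hp).1 (Multiset.mem_toFinset.1 ht)
  set w : ℝ → ℝ := fun t => ∫ x, (Lagrange.basis R id t).eval x ∂μ with hw
  -- normalized p
  set c : ℝ := p.leadingCoeff with hc
  have hc0 : c ≠ 0 := leadingCoeff_ne_zero.2 hp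
  set p' : Polynomial ℝ := p * C c⁻¹ with hp'
  have hmonic : p'.Monic := monic_mul_leadingCoeff_inv hp
  have hp'0 : p' ≠ 0 := hmonic.ne_zero
  have hp'deg : p'.natDegree = r + 1 := by
    rw [hp', natDegree_mul hp (by simpa using inv_ne_zero hc0), natDegree_C, add_zero, hdeg]
  have hp'root : ∀ t ∈ R, p'.eval t = 0 := by
    intro t ht
    rw [hp', eval_mul]
    rw [(hroot_of_mem t ht : p.eval t = 0)]
    ring
  -- the quadrature formula
  have quad : ∀ f : Polynomial ℝ, f.natDegree ≤ 2 * r + 1 →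
      (∫ t, f.eval t ∂μ) = ∑ t ∈ R, w t * f.eval t := by
    intro f hf
    set h : Polynomial ℝ := f %ₘ p' with hh
    set g : Polynomial ℝ := f /ₘ p' with hgdef
    have hfgh : f = p' * g + h := by
      rw [hh, hgdef]
      conv_lhs => rw [← modByMonic_add_div f p']
      ring
    have hgdeg : g.natDegree ≤ r := by
      rw [hgdef, natDegree_divByMonic f hmonic, hp'deg]
      omega
    have hhdeg : h.degree < (R.card : WithBot ℕ) := by
      rw [hRcard]
      calc h.degree < p'.degree := degree_modByMonic_lt f hmonic
        _ ≤ ((r + 1 : ℕ) : WithBot ℕ) := by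
            rw [degree_eq_natDegree hp'0, hp'deg]
    -- ∫ p' * g = 0
    have hpg : (∫ t, (p' * g).eval t ∂μ) = 0 := by
      have h1 : (p' * g) = p * (C c⁻¹ * g) := by rw [hp']; ring
      have h2 : (C c⁻¹ * g).natDegree ≤ r := le_trans (natDegree_C_mul_le _ _) hgdeg
      have h3 := horth (C c⁻¹ * g) h2
      rw [h1]
      simpa [eval_mul] using h3
    -- interpolation of h
    have hinterp : h = ∑ t ∈ R, Polynomial.C (h.eval t) * Lagrange.basis R id t := by
      have h4 := Lagrange.eq_interpolate hinj hhdeg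
      rw [Lagrange.interpolate_apply] at h4
      simpa using h4
    have hinth : (∫ t, h.eval t ∂μ) = ∑ t ∈ R, w t * h.eval t := by
      have heval : ∀ x : ℝ, h.eval x = ∑ t ∈ R, h.eval t * (Lagrange.basis R id t).eval x := by
        intro x
        conv_lhs => rw [hinterp]
        rw [eval_finset_sum]
        exact Finset.sum_congr rfl (fun t _ => by rw [eval_mul, eval_C])
      rw [integral_congr_ae (Filter.EventuallyEq.of_eq (funext heval))]
      rw [integral_finset_sum _ (fun t _ => ((hint (Lagrange.basis R id t)).const_mul _))]
      refine Finset.sum_congr rfl (fun t _ => ?_)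
      rw [integral_const_mul, hw, mul_comm]
    have hfeval : ∀ t ∈ R, f.eval t = h.eval t := by
      intro t ht
      conv_lhs => rw [hfgh]
      rw [eval_add, eval_mul, hp'root t ht, zero_mul, zero_add]
    calc (∫ t, f.eval t ∂μ) = ∫ t, ((p' * g).eval t + h.eval t) ∂μ := by
          apply integral_congr_ae
          apply Filter.EventuallyEq.of_eq
          funext x
          conv_lhs => rw [hfgh]
          rw [eval_add]
      _ = (∫ t, (p' * g).eval t ∂μ) + ∫ t, h.eval t ∂μ := integral_add (hint _) (hint _)
      _ = ∑ t ∈ R, w t * h.eval t := by rw [hpg, zero_add, hinth]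
      _ = ∑ t ∈ R, w t * f.eval t :=
          Finset.sum_congr rfl (fun t ht => by rw [hfeval t ht])
  -- basis degrees
  have hbdeg : ∀ t ∈ R, (Lagrange.basis R id t).natDegree = r := by
    intro t ht
    rw [Lagrange.natDegree_basis hinj ht, hRcard]
    omega
  -- weights are positive
  have hwpos : ∀ t ∈ R, 0 < w t := by
    intro t ht
    have hq : (∫ x, ((Lagrange.basis R id t) ^ 2).eval x ∂μ)
        = ∑ u ∈ R, w u * ((Lagrange.basis R id t) ^ 2).eval u := by
      apply quad
      rw [natDegree_pow, hbdeg t ht]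
      omega
    have hsum : ∑ u ∈ R, w u * ((Lagrange.basis R id t) ^ 2).eval u = w t := by
      rw [Finset.sum_eq_single t]
      · rw [eval_pow]
        have h5 : (Lagrange.basis R id t).eval t = 1 := by
          simpa using Lagrange.eval_basis_self hinj ht
        rw [h5]; ring
      · intro u hu hut
        rw [eval_pow]
        have h6 : (Lagrange.basis R id t).eval u = 0 := by
          simpa using Lagrange.eval_basis_of_ne (v := id) (s := R) (Ne.symm hut) hu
        rw [h6]; ring
      · intro hnot; exact absurd ht hnot
    have hpos : 0 < ∫ x, ((Lagrange.basis R id t) ^ 2).eval x ∂μ := by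
      apply aux_integral_pos μ hcompact hinfinite
      · exact pow_ne_zero _ (Lagrange.basis_ne_zero hinj ht)
      · intro x; rw [eval_pow]; exact sq_nonneg _
    rw [hq, hsum] at hpos
    exact hpos
  -- the smallest root
  set t₀ : ℝ := R.min' hRne with ht₀
  have ht₀mem : t₀ ∈ R := R.min'_mem hRne
  have ht₀le : ∀ u ∈ R, t₀ ≤ u := fun u hu => R.min'_le u hu
  -- SOS polynomials are nonneg and have degree ≤ 2r
  have hsos : ∀ s : Polynomial ℝ, IsSOSUpTo s r →
      (∀ x : ℝ, 0 ≤ s.eval x) ∧ s.natDegree ≤ 2 * r := by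
    rintro s ⟨m, q, hqdeg, rfl⟩
    constructor
    · intro x
      rw [eval_finset_sum]
      apply Finset.sum_nonneg
      intro i _
      rw [eval_pow]
      exact sq_nonneg _
    · apply natDegree_sum_le_of_forall_le
      intro i _
      calc ((q i) ^ 2).natDegree ≤ 2 * (q i).natDegree := by
            rw [natDegree_pow]
        _ ≤ 2 * r := by have := hqdeg i; omega
  set V : Set ℝ := { v : ℝ | ∃ s : Polynomial ℝ, IsSOSUpTo s r ∧
      (∫ t, s.eval t ∂μ) = 1 ∧ v = ∫ t, t * s.eval t ∂μ } with hV
  -- lower bound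
  have hlb : ∀ v ∈ V, t₀ ≤ v := by
    rintro v ⟨s, hsSOS, hs1, rfl⟩
    obtain ⟨hsnn, hsdeg⟩ := hsos s hsSOS
    have hfdeg : ((X - C t₀) * s).natDegree ≤ 2 * r + 1 := by
      calc ((X - C t₀) * s).natDegree ≤ (X - C t₀).natDegree + s.natDegree :=
            natDegree_mul_le
        _ ≤ 2 * r + 1 := by rw [natDegree_X_sub_C]; omega
    have hquad := quad _ hfdeg
    have hge : 0 ≤ ∑ t ∈ R, w t * ((X - C t₀) * s).eval t := by
      apply Finset.sum_nonneg
      intro u hu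
      have h1 : ((X - C t₀) * s).eval u = (u - t₀) * s.eval u := by simp [eval_mul]
      rw [h1]
      exact mul_nonneg (le_of_lt (hwpos u hu))
        (mul_nonneg (by linarith [ht₀le u hu]) (hsnn u))
    have hsplit : (∫ t, ((X - C t₀) * s).eval t ∂μ)
        = (∫ t, t * s.eval t ∂μ) - t₀ * ∫ t, s.eval t ∂μ := by
      have heq : ∀ x : ℝ, ((X - C t₀) * s).eval x = (X * s).eval x - (C t₀ * s).eval x := by
        intro x; simp only [eval_mul, eval_sub, eval_X, eval_C]; ring
      rw [integral_congr_ae (Filter.EventuallyEq.of_eq (funext heq))]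
      rw [integral_sub (hint _) (hint _)]
      congr 1
      · apply integral_congr_ae
        apply Filter.EventuallyEq.of_eq
        funext x; simp [eval_mul]
      · rw [← integral_const_mul]
        apply integral_congr_ae
        apply Filter.EventuallyEq.of_eq
        funext x; simp [eval_mul]
    rw [hquad] at hsplit
    rw [hs1, mul_one] at hsplit
    linarith
  -- the optimal SOS certificate
  have htmem : t₀ ∈ V := by
    set b : Polynomial ℝ := Lagrange.basis R id t₀ with hb
    set a : ℝ := (Real.sqrt (w t₀))⁻¹ with ha
    have hwt : 0 < w t₀ := hwpos t₀ ht₀mem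
    have ha2 : a ^ 2 = (w t₀)⁻¹ := by
      rw [ha, ← Real.sqrt_inv, Real.sq_sqrt (by positivity)]
    set s₀ : Polynomial ℝ := (C a * b) ^ 2 with hs₀
    have hbt : ∀ u ∈ R, b.eval u = if u = t₀ then 1 else 0 := by
      intro u hu
      split_ifs with huu
      · subst huu; simpa using Lagrange.eval_basis_self hinj hu
      · simpa using Lagrange.eval_basis_of_ne (v := id) (s := R) (fun hh => huu hh.symm) hu
    have hseval : ∀ u ∈ R, s₀.eval u = if u = t₀ then a ^ 2 else 0 := by
      intro u hu
      rw [hs₀, eval_pow, eval_mul, eval_C, hbt u hu]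
      split_ifs <;> ring
    have hs₀deg2r : s₀.natDegree ≤ 2 * r := by
      rw [hs₀, natDegree_pow]
      have h7 : (C a * b).natDegree ≤ r := by
        refine le_trans (natDegree_C_mul_le _ _) ?_
        rw [hb, hbdeg t₀ ht₀mem]
      omega
    have hint1 : (∫ t, s₀.eval t ∂μ) = 1 := by
      rw [quad s₀ (by omega)]
      rw [Finset.sum_eq_single t₀]
      · rw [hseval t₀ ht₀mem, if_pos rfl, ha2]
        field_simp
      · intro u hu hut
        rw [hseval u hu, if_neg hut, mul_zero]
      · intro hnot; exact absurd ht₀mem hnot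
    have hintt : (∫ t, t * s₀.eval t ∂μ) = t₀ := by
      have heq : (fun t : ℝ => t * s₀.eval t) = fun t => (X * s₀).eval t := by
        funext x; simp [eval_mul]
      rw [heq]
      have hdegXs : (X * s₀).natDegree ≤ 2 * r + 1 := by
        calc (X * s₀).natDegree ≤ (X : Polynomial ℝ).natDegree + s₀.natDegree :=
              natDegree_mul_le
          _ ≤ 2 * r + 1 := by rw [natDegree_X]; omega
      rw [quad _ hdegXs]
      rw [Finset.sum_eq_single t₀]
      · rw [eval_mul, eval_X, hseval t₀ ht₀mem, if_pos rfl, ha2]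
        field_simp
      · intro u hu hut
        rw [eval_mul, eval_X, hseval u hu, if_neg hut]
        ring
      · intro hnot; exact absurd ht₀mem hnot
    refine ⟨s₀, ⟨1, fun _ => C a * b, fun _ => ?_, by simp [hs₀]⟩, hint1, hintt.symm⟩
    refine le_trans (natDegree_C_mul_le _ _) ?_
    rw [hb, hbdeg t₀ ht₀mem]
  -- conclude
  have hVinf : sInf V = t₀ := by
    apply le_antisymm
    · exact csInf_le ⟨t₀, hlb⟩ htmem
    · exact le_csInf ⟨t₀, htmem⟩ hlb
  have hroots_set : { t : ℝ | p.IsRoot t } = (↑R : Set ℝ) := by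
    ext t
    simp only [mem_setOf_eq, Finset.coe_sort_coe, Finset.mem_coe, hR,
      Multiset.mem_toFinset, mem_roots, hp, ne_eq, not_false_iff, true_and]
  rw [hroots_set, hRne.csInf_eq_min']
  exact hVinf
end
end
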